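/- arXiv:2308.06104 — 6 statements merged into one kernel-verified Lean document; each statement's English description precedes it below -/
import Mathlib

section
/- Let R be a DGA over A, F a DG right R-module, C_• and D_• free graded A-modules with finite bases B and B′ (all degrees ≥ 0), m^C and m^D twisting cocycles for (R, C_•) and (R, D_•), and (ν_{x,y}) a continuation cocycle from m^C to m^D. Then the degree-0 A-linear map Ψ^F : C_*(C_•, F) → C_*(D_•, F) defined on the twisted complexes by Ψ^F(α⊗x) = Σ_{y∈B′} (α·ν_{x,y}) ⊗ y is a chain map. -/
/-!
Expand `α ⊗ x` with `α` homogeneous of degree `i` in both directions. Going through `D_•` gives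
`∂(α·ν_{x,u}) + Σ_w (−1)^{i+|x|−|w|} α·ν_{x,w} m^D_{w,u}`, going through `C_•` gives
`(∂α)·ν_{x,u} + (−1)^i Σ_z α·m^C_{x,z} ν_{z,u}`. The Leibniz rule for the action turns the first
into the second exactly by the continuation cocycle equation for `∂ν_{x,u}`. Both sides are linear,
and such elements span the twisted complex.
-/

section TwistedComplex

variable {A R F : Type*} [CommRing A] [Ring R] [Algebra A R] [AddCommGroup F] [Module A F]
  (act : F →ₗ[A] R →ₗ[A] F)

theorem apply_eq_sum_act_of_apply_single {ι κ : Type*} [Fintype ι] [DecidableEq ι]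
    (ν : ι → κ → R) (Ψ : (ι → F) →ₗ[A] (κ → F))
    (hΨ : ∀ (f : F) (x : ι), Ψ (Pi.single x f) = fun y => act f (ν x y)) (g : ι → F) :
    Ψ g = fun y => ∑ x, act (g x) (ν x y) := by
  conv_lhs => rw [← Finset.univ_sum_single g]
  ext y
  simp only [map_sum, hΨ, Finset.sum_apply]

theorem LinearMap.pi_ext_homogeneous {ι γ M : Type*} [Finite ι] [DecidableEq ι] [DecidableEq γ]
    [AddCommGroup M] [Module A M] (ℱ : γ → Submodule A F) [DirectSum.Decomposition ℱ]
    {φ ψ : (ι → F) →ₗ[A] M}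
    (h : ∀ x i, ∀ f ∈ ℱ i, φ (Pi.single x f) = ψ (Pi.single x f)) : φ = ψ :=
  LinearMap.pi_ext' fun x => DirectSum.decompose_lhom_ext ℱ fun i =>
    LinearMap.ext fun f => h x i f f.2

theorem twistedDifferential_apply {ι : Type*} [Fintype ι] [DecidableEq ι]
    (ℱ : ℤ → Submodule A F) (dF : F →ₗ[A] F) (m : ι → ι → R) (D : (ι → F) →ₗ[A] (ι → F))
    (hD : ∀ i : ℤ, ∀ f ∈ ℱ i, ∀ w : ι,
      D (Pi.single w f) = Pi.single w (dF f) + (Int.negOnePow i : ℤ) • fun y => act f (m w y))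
    (g : ι → F) (k : ι → ℤ) (hg : ∀ w, g w ∈ ℱ (k w)) :
    D g = fun y => dF (g y) + ∑ w, (Int.negOnePow (k w) : ℤ) • act (g w) (m w y) := by
  conv_lhs => rw [← Finset.univ_sum_single g]
  ext y
  simp only [map_sum, fun w => hD (k w) (g w) (hg w) w, Finset.sum_apply, Pi.add_apply,
    Pi.smul_apply, Finset.sum_add_distrib, Finset.sum_pi_single, Finset.mem_univ, if_true]

end TwistedComplex

theorem statement3_general
    {A : Type*} [CommRing A] {R : Type*} [Ring R] [Algebra A R]
    (ℛ : ℤ → Submodule A R)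
    (d : R →ₗ[A] R)
    {F : Type*} [AddCommGroup F] [Module A F]
    (ℱ : ℤ → Submodule A F) [DirectSum.Decomposition ℱ]
    (dF : F →ₗ[A] F)
    (act : F →ₗ[A] R →ₗ[A] F)
    (hact_mul : ∀ (f : F) (a b : R), act (act f a) b = act f (a * b))
    (hact_mem : ∀ (i j : ℤ), ∀ f ∈ ℱ i, ∀ a ∈ ℛ j, act f a ∈ ℱ (i + j))
    (hact_leibniz : ∀ i : ℤ, ∀ f ∈ ℱ i, ∀ a : R,
      dF (act f a) = act (dF f) a + (Int.negOnePow i : ℤ) • act f (d a))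
    {B : Type*} [Fintype B] [DecidableEq B]
    (degB : B → ℤ)
    {B' : Type*} [Fintype B'] [DecidableEq B']
    (degB' : B' → ℤ)
    (mC : B → B → R)
    (mD : B' → B' → R)
    (ν : B → B' → R)
    (hν_mem : ∀ (x : B) (y : B'), ν x y ∈ ℛ (degB x - degB' y))
    (hν_eq : ∀ (x : B) (y : B'), d (ν x y) =
      (∑ z : B, mC x z * ν z y) -
        ∑ w : B', (Int.negOnePow (degB x - degB' w) : ℤ) • (ν x w * mD w y))
    (DC : (B → F) →ₗ[A] (B → F))
    (hDC : ∀ i : ℤ, ∀ f ∈ ℱ i, ∀ x : B,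
      DC (Pi.single x f) = Pi.single x (dF f) +
        (Int.negOnePow i : ℤ) • (fun z : B => act f (mC x z)))
    (DD : (B' → F) →ₗ[A] (B' → F))
    (hDD : ∀ i : ℤ, ∀ f ∈ ℱ i, ∀ w : B',
      DD (Pi.single w f) = Pi.single w (dF f) +
        (Int.negOnePow i : ℤ) • (fun y : B' => act f (mD w y)))
    (Ψ : (B → F) →ₗ[A] (B' → F))
    (hΨ : ∀ (f : F) (x : B), Ψ (Pi.single x f) = fun y : B' => act f (ν x y)) :
    DD ∘ₗ Ψ = Ψ ∘ₗ DC := by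
  refine LinearMap.pi_ext_homogeneous ℱ fun x i f hf => ?_
  have through_D : DD (Ψ (Pi.single x f)) = fun u => dF (act f (ν x u)) +
      ∑ w, (Int.negOnePow (i + (degB x - degB' w)) : ℤ) • act f (ν x w * mD w u) := by
    rw [hΨ, twistedDifferential_apply act ℱ dF mD DD hDD _ _
      fun w => hact_mem _ _ f hf _ (hν_mem x w)]
    simp only [hact_mul]
  have through_C : Ψ (DC (Pi.single x f)) = fun u => act (dF f) (ν x u) +
      (Int.negOnePow i : ℤ) • ∑ z, act f (mC x z * ν z u) := by
    rw [hDC i f hf x, map_add, map_zsmul, hΨ, apply_eq_sum_act_of_apply_single act ν Ψ hΨ]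
    ext u
    simp only [hact_mul, Pi.add_apply, Pi.smul_apply]
  rw [LinearMap.comp_apply, LinearMap.comp_apply, through_D, through_C]
  ext u
  rw [hact_leibniz i f hf, hν_eq, map_sub, map_sum, map_sum, smul_sub, Finset.smul_sum,
    Finset.smul_sum]
  simp only [map_zsmul, Int.negOnePow_add, Units.val_mul, mul_smul]
  abel

/-- Given twisting cocycles `mC`, `mD` for `(R, C)` and `(R, D)`, a continuation
cocycle `ν` from `mC` to `mD`, and a DG right `R`-module `F`, the degree `0` map
`Ψ (α ⊗ x) = ∑ y (α · ν x y) ⊗ y` between the twisted complexes is a chain map. -/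
theorem statement3
    {A : Type*} [CommRing A] {R : Type*} [Ring R] [Algebra A R]
    (ℛ : ℤ → Submodule A R) [GradedRing ℛ]
    (d : R →ₗ[A] R)
    (hd_mem : ∀ i : ℤ, ∀ a ∈ ℛ i, d a ∈ ℛ (i - 1))
    (hd_sq : ∀ a : R, d (d a) = 0)
    (hd_leibniz : ∀ i : ℤ, ∀ a ∈ ℛ i, ∀ b : R,
      d (a * b) = d a * b + (Int.negOnePow i : ℤ) • (a * d b))
    {F : Type*} [AddCommGroup F] [Module A F]
    (ℱ : ℤ → Submodule A F) [DirectSum.Decomposition ℱ]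
    (dF : F →ₗ[A] F)
    (hdF_mem : ∀ i : ℤ, ∀ f ∈ ℱ i, dF f ∈ ℱ (i - 1))
    (hdF_sq : ∀ f : F, dF (dF f) = 0)
    (act : F →ₗ[A] R →ₗ[A] F)
    (hact_one : ∀ f : F, act f 1 = f)
    (hact_mul : ∀ (f : F) (a b : R), act (act f a) b = act f (a * b))
    (hact_mem : ∀ (i j : ℤ), ∀ f ∈ ℱ i, ∀ a ∈ ℛ j, act f a ∈ ℱ (i + j))
    (hact_leibniz : ∀ i : ℤ, ∀ f ∈ ℱ i, ∀ a : R,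
      dF (act f a) = act (dF f) a + (Int.negOnePow i : ℤ) • act f (d a))
    {B : Type*} [Fintype B] [DecidableEq B]
    (degB : B → ℤ) (hdegB : ∀ x : B, 0 ≤ degB x)
    {B' : Type*} [Fintype B'] [DecidableEq B']
    (degB' : B' → ℤ) (hdegB' : ∀ y : B', 0 ≤ degB' y)
    (mC : B → B → R)
    (hmC_mem : ∀ x y : B, mC x y ∈ ℛ (degB x - degB y - 1))
    (hmC_zero : ∀ x y : B, ¬ degB y < degB x → mC x y = 0)
    (hmC_mc : ∀ x y : B, d (mC x y) =
      ∑ z : B, (Int.negOnePow (degB x - degB z) : ℤ) • (mC x z * mC z y))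
    (mD : B' → B' → R)
    (hmD_mem : ∀ w y : B', mD w y ∈ ℛ (degB' w - degB' y - 1))
    (hmD_zero : ∀ w y : B', ¬ degB' y < degB' w → mD w y = 0)
    (hmD_mc : ∀ w y : B', d (mD w y) =
      ∑ u : B', (Int.negOnePow (degB' w - degB' u) : ℤ) • (mD w u * mD u y))
    (ν : B → B' → R)
    (hν_mem : ∀ (x : B) (y : B'), ν x y ∈ ℛ (degB x - degB' y))
    (hν_eq : ∀ (x : B) (y : B'), d (ν x y) =
      (∑ z : B, mC x z * ν z y) -
        ∑ w : B', (Int.negOnePow (degB x - degB' w) : ℤ) • (ν x w * mD w y))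
    (DC : (B → F) →ₗ[A] (B → F))
    (hDC : ∀ i : ℤ, ∀ f ∈ ℱ i, ∀ x : B,
      DC (Pi.single x f) = Pi.single x (dF f) +
        (Int.negOnePow i : ℤ) • (fun z : B => act f (mC x z)))
    (DD : (B' → F) →ₗ[A] (B' → F))
    (hDD : ∀ i : ℤ, ∀ f ∈ ℱ i, ∀ w : B',
      DD (Pi.single w f) = Pi.single w (dF f) +
        (Int.negOnePow i : ℤ) • (fun y : B' => act f (mD w y)))
    (Ψ : (B → F) →ₗ[A] (B' → F))
    (hΨ : ∀ (f : F) (x : B), Ψ (Pi.single x f) = fun y : B' => act f (ν x y)) :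
    DD ∘ₗ Ψ = Ψ ∘ₗ DC :=
  statement3_general ℛ d ℱ dF act hact_mul hact_mem hact_leibniz degB degB' mC mD ν hν_mem hν_eq DC
    hDC DD hDD Ψ hΨ
end

section
/- Let R be a DGA over A, F a DG right R-module, C_• and D_• free graded A-modules with finite bases B and B′ (all degrees ≥ 0), m⁰ and m¹ twisting cocycles for (R, C_•) and (R, D_•), and ν⁰, ν¹ continuation cocycles from m⁰ to m¹, with induced chain maps Ψ_i^F : C_*(C_•,F) → C_*(D_•,F), Ψ_i^F(α⊗x) = Σ_{y∈B′} (α·ν^i_{x,y})⊗y, between the twisted complexes. Suppose a family (h_{x,y}) with h_{x,y} ∈ R_{|x|−|y|+1} satisfies ∂h_{x,y} = ν¹_{x,y} − ν⁰_{x,y} + Σ_{z∈B} (−1)^{|x|−|z|} m⁰_{x,z} h_{z,y} + Σ_{w∈B′} (−1)^{|x|−|w|} h_{x,w} m¹_{w,y} for all x, y. Then the degree +1 map h^F(α⊗x) := (−1)^{|α|} Σ_{y∈B′} (α·h_{x,y}) ⊗ y is a chain homotopy from Ψ₀^F to Ψ₁^F, i.e. Ψ₁^F − Ψ₀^F = ∂^D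 ∘ h^F + h^F ∘ ∂^C, where ∂^C and ∂^D denote the twisted differentials. -/
/-!
Both sides are `A`-linear, so it suffices to compare them on `α ⊗ x` with `α` homogeneous.
There, expanding `∂^D ∘ h^F + h^F ∘ ∂^C` produces `(-1)^{|α|} ∂(α · h_{x,y})`, which the Leibniz
rule for the action splits into `(-1)^{|α|} (∂α) · h_{x,y} + α · ∂h_{x,y}`; the first summand
cancels against the `∂α` term of `h^F ∘ ∂^C`, and the twisting terms of both composites cancel
the two sums in the defining equation of `∂h_{x,y}`, leaving `α · (ν¹_{x,y} - ν⁰_{x,y})`.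
-/

theorem Int.negOnePow_smul_negOnePow_add_smul {M : Type*} [AddCommGroup M] (i k : ℤ) (v : M) :
    (i.negOnePow : ℤ) • ((i + k).negOnePow : ℤ) • v = (k.negOnePow : ℤ) • v := by
  rw [smul_smul, ← Units.val_mul, ← Int.negOnePow_add, show i + (i + k) = 2 * i + k by ring,
    Int.negOnePow_add, Int.negOnePow_two_mul, one_mul]

theorem Int.negOnePow_sub_one (n : ℤ) : (n - 1).negOnePow = -n.negOnePow := by
  rw [Int.negOnePow_sub, Int.negOnePow_one, mul_neg_one]

theorem LinearMap.pi_ext_of_mem_homogeneous {A F M ι B : Type*} [CommRing A] [AddCommGroup F]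
    [Module A F] [AddCommMonoid M] [Module A M] [DecidableEq ι] (ℱ : ι → Submodule A F)
    [DirectSum.Decomposition ℱ] [Finite B] [DecidableEq B] {φ ψ : (B → F) →ₗ[A] M}
    (h : ∀ i, ∀ f ∈ ℱ i, ∀ x : B, φ (Pi.single x f) = ψ (Pi.single x f)) : φ = ψ := by
  refine LinearMap.pi_ext fun x f => ?_
  induction f using DirectSum.Decomposition.inductionOn ℱ with
  | zero => simp only [Pi.single_zero, map_zero]
  | homogeneous f => exact h _ f f.2 x
  | add f g hf hg => rw [Pi.single_add, map_add, map_add, hf, hg]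

section TwistedComplex

variable {A R F : Type*} [CommRing A] [Ring R] [Algebra A R] [AddCommGroup F] [Module A F]
  {ℛ : ℤ → Submodule A R} {ℱ : ℤ → Submodule A F} {dF : F →ₗ[A] F} {act : F →ₗ[A] R →ₗ[A] F}
  {B B' : Type*} [DecidableEq B]

theorem twistedDifferential_apply_of_mem [Fintype B] {m : B → B → R} {D : (B → F) →ₗ[A] (B → F)}
    (hD : ∀ i : ℤ, ∀ f ∈ ℱ i, ∀ x : B,
      D (Pi.single x f) = Pi.single x (dF f) + (i.negOnePow : ℤ) • fun y => act f (m x y))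
    {j : B → ℤ} {v : B → F} (hv : ∀ x, v x ∈ ℱ (j x)) (y : B) :
    D v y = dF (v y) + ∑ x, ((j x).negOnePow : ℤ) • act (v x) (m x y) := by
  conv_lhs => rw [← Finset.univ_sum_single v]
  simp only [map_sum, Finset.sum_apply, hD _ _ (hv _), Pi.add_apply, Pi.smul_apply,
    Finset.sum_add_distrib, Fintype.sum_pi_single]

theorem signedAction_apply_of_mem [Fintype B] {k : B → B' → R} {T : (B → F) →ₗ[A] (B' → F)}
    (hT : ∀ i : ℤ, ∀ f ∈ ℱ i, ∀ x : B,
      T (Pi.single x f) = (i.negOnePow : ℤ) • fun y => act f (k x y))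
    {j : B → ℤ} {v : B → F} (hv : ∀ x, v x ∈ ℱ (j x)) (y : B') :
    T v y = ∑ x, ((j x).negOnePow : ℤ) • act (v x) (k x y) := by
  conv_lhs => rw [← Finset.univ_sum_single v]
  simp only [map_sum, Finset.sum_apply, hT _ _ (hv _), Pi.smul_apply]

variable {degB : B → ℤ} {degB' : B' → ℤ} {k : B → B' → R} {T : (B → F) →ₗ[A] (B' → F)}

theorem twistedDifferential_signedAction_single_apply [Fintype B'] [DecidableEq B']
    {m : B' → B' → R} {D : (B' → F) →ₗ[A] (B' → F)}
    (hD : ∀ i : ℤ, ∀ f ∈ ℱ i, ∀ w : B',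
      D (Pi.single w f) = Pi.single w (dF f) + (i.negOnePow : ℤ) • fun y => act f (m w y))
    (hT : ∀ i : ℤ, ∀ f ∈ ℱ i, ∀ x : B,
      T (Pi.single x f) = (i.negOnePow : ℤ) • fun y => act f (k x y))
    (hact_mul : ∀ (f : F) (a b : R), act (act f a) b = act f (a * b))
    (hact_mem : ∀ (i j : ℤ), ∀ f ∈ ℱ i, ∀ a ∈ ℛ j, act f a ∈ ℱ (i + j))
    (hk_mem : ∀ x y, k x y ∈ ℛ (degB x - degB' y + 1))
    {i : ℤ} {f : F} (hf : f ∈ ℱ i) (x : B) (y : B') :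
    D (T (Pi.single x f)) y = (i.negOnePow : ℤ) • dF (act f (k x y)) -
      ∑ w, ((degB x - degB' w).negOnePow : ℤ) • act f (k x w * m w y) := by
  rw [hT i f hf x, map_zsmul, Pi.smul_apply,
    twistedDifferential_apply_of_mem hD (j := fun w => i + (degB x - degB' w + 1))
      fun w => hact_mem _ _ f hf _ (hk_mem x w)]
  simp only [smul_add, Finset.smul_sum, Int.negOnePow_smul_negOnePow_add_smul, hact_mul,
    Int.negOnePow_succ, Units.val_neg, neg_smul, Finset.sum_neg_distrib, sub_eq_add_neg]

theorem signedAction_twistedDifferential_single_apply [Fintype B] {m : B → B → R}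
    {D : (B → F) →ₗ[A] (B → F)}
    (hD : ∀ i : ℤ, ∀ f ∈ ℱ i, ∀ x : B,
      D (Pi.single x f) = Pi.single x (dF f) + (i.negOnePow : ℤ) • fun z => act f (m x z))
    (hT : ∀ i : ℤ, ∀ f ∈ ℱ i, ∀ x : B,
      T (Pi.single x f) = (i.negOnePow : ℤ) • fun y => act f (k x y))
    (hdF_mem : ∀ i : ℤ, ∀ f ∈ ℱ i, dF f ∈ ℱ (i - 1))
    (hact_mul : ∀ (f : F) (a b : R), act (act f a) b = act f (a * b))
    (hact_mem : ∀ (i j : ℤ), ∀ f ∈ ℱ i, ∀ a ∈ ℛ j, act f a ∈ ℱ (i + j))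
    (hm_mem : ∀ x z, m x z ∈ ℛ (degB x - degB z - 1))
    {i : ℤ} {f : F} (hf : f ∈ ℱ i) (x : B) (y : B') :
    T (D (Pi.single x f)) y = -((i.negOnePow : ℤ) • act (dF f) (k x y)) -
      ∑ z, ((degB x - degB z).negOnePow : ℤ) • act f (m x z * k z y) := by
  rw [hD i f hf x, map_add, map_zsmul, Pi.add_apply, Pi.smul_apply, hT (i - 1) _ (hdF_mem i f hf),
    signedAction_apply_of_mem hT (j := fun z => i + (degB x - degB z - 1))
      fun z => hact_mem _ _ f hf _ (hm_mem x z)]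
  simp only [Pi.smul_apply, Finset.smul_sum, Int.negOnePow_smul_negOnePow_add_smul, hact_mul,
    Int.negOnePow_sub_one, Units.val_neg, neg_smul, Finset.sum_neg_distrib]
  exact (sub_eq_add_neg _ _).symm

end TwistedComplex

theorem statement5_general
    {A : Type*} [CommRing A] {R : Type*} [Ring R] [Algebra A R]
    (ℛ : ℤ → Submodule A R)
    (d : R →ₗ[A] R)
    {F : Type*} [AddCommGroup F] [Module A F]
    (ℱ : ℤ → Submodule A F) [DirectSum.Decomposition ℱ]
    (dF : F →ₗ[A] F)
    (hdF_mem : ∀ i : ℤ, ∀ f ∈ ℱ i, dF f ∈ ℱ (i - 1))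
    (act : F →ₗ[A] R →ₗ[A] F)
    (hact_mul : ∀ (f : F) (a b : R), act (act f a) b = act f (a * b))
    (hact_mem : ∀ (i j : ℤ), ∀ f ∈ ℱ i, ∀ a ∈ ℛ j, act f a ∈ ℱ (i + j))
    (hact_leibniz : ∀ i : ℤ, ∀ f ∈ ℱ i, ∀ a : R,
      dF (act f a) = act (dF f) a + (Int.negOnePow i : ℤ) • act f (d a))
    {B : Type*} [Fintype B] [DecidableEq B]
    (degB : B → ℤ)
    {B' : Type*} [Fintype B'] [DecidableEq B']
    (degB' : B' → ℤ)
    (m₀ : B → B → R)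
    (hm₀_mem : ∀ x y : B, m₀ x y ∈ ℛ (degB x - degB y - 1))
    (m₁ : B' → B' → R)
    (ν₀ ν₁ : B → B' → R)
    (DC : (B → F) →ₗ[A] (B → F))
    (hDC : ∀ i : ℤ, ∀ f ∈ ℱ i, ∀ x : B,
      DC (Pi.single x f) = Pi.single x (dF f) +
        (Int.negOnePow i : ℤ) • (fun z : B => act f (m₀ x z)))
    (DD : (B' → F) →ₗ[A] (B' → F))
    (hDD : ∀ i : ℤ, ∀ f ∈ ℱ i, ∀ w : B',
      DD (Pi.single w f) = Pi.single w (dF f) +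
        (Int.negOnePow i : ℤ) • (fun y : B' => act f (m₁ w y)))
    (Ψ₀ : (B → F) →ₗ[A] (B' → F))
    (hΨ₀ : ∀ (f : F) (x : B), Ψ₀ (Pi.single x f) = fun y : B' => act f (ν₀ x y))
    (Ψ₁ : (B → F) →ₗ[A] (B' → F))
    (hΨ₁ : ∀ (f : F) (x : B), Ψ₁ (Pi.single x f) = fun y : B' => act f (ν₁ x y))
    (h : B → B' → R)
    (hh_mem : ∀ (x : B) (y : B'), h x y ∈ ℛ (degB x - degB' y + 1))
    (hh_eq : ∀ (x : B) (y : B'),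
      d (h x y) = ν₁ x y - ν₀ x y +
        (∑ z : B, (Int.negOnePow (degB x - degB z) : ℤ) • (m₀ x z * h z y)) +
        ∑ w : B', (Int.negOnePow (degB x - degB' w) : ℤ) • (h x w * m₁ w y))
    (hF : (B → F) →ₗ[A] (B' → F))
    (hhF : ∀ i : ℤ, ∀ f ∈ ℱ i, ∀ x : B,
      hF (Pi.single x f) = (Int.negOnePow i : ℤ) • (fun y : B' => act f (h x y))) :
    Ψ₁ - Ψ₀ = DD ∘ₗ hF + hF ∘ₗ DC := by
  refine LinearMap.pi_ext_of_mem_homogeneous ℱ fun i f hf x => funext fun y => ?_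
  have hleibniz : (i.negOnePow : ℤ) • dF (act f (h x y)) =
      (i.negOnePow : ℤ) • act (dF f) (h x y) + act f (d (h x y)) := by
    rw [hact_leibniz i f hf, smul_add, smul_smul, ← Units.val_mul, Int.units_mul_self,
      Units.val_one, one_smul]
  have hdh : act f (d (h x y)) = act f (ν₁ x y) - act f (ν₀ x y) +
      ∑ z, ((degB x - degB z).negOnePow : ℤ) • act f (m₀ x z * h z y) +
      ∑ w, ((degB x - degB' w).negOnePow : ℤ) • act f (h x w * m₁ w y) := by
    simp only [hh_eq, map_add, map_sub, map_sum, map_zsmul]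
  simp only [LinearMap.sub_apply, LinearMap.add_apply, LinearMap.comp_apply, Pi.sub_apply,
    Pi.add_apply, hΨ₀, hΨ₁,
    twistedDifferential_signedAction_single_apply hDD hhF hact_mul hact_mem hh_mem hf,
    signedAction_twistedDifferential_single_apply hDC hhF hdF_mem hact_mul hact_mem hm₀_mem hf,
    hleibniz, hdh]
  abel

/-- If a family `h x y ∈ R_{|x|-|y|+1}` satisfies the algebraic homotopy equation
relating two continuation cocycles `ν₀`, `ν₁`, then for every DG right `R`-module `F` the
degree `+1` map `hF (α ⊗ x) = (-1)^{|α|} ∑ y (α · h x y) ⊗ y` is a chain homotopy between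
the induced chain maps `Ψ₀`, `Ψ₁` on the twisted complexes: `Ψ₁ - Ψ₀ = DD ∘ hF + hF ∘ DC`. -/
theorem statement5
    {A : Type*} [CommRing A] {R : Type*} [Ring R] [Algebra A R]
    (ℛ : ℤ → Submodule A R) [GradedRing ℛ]
    (d : R →ₗ[A] R)
    (hd_mem : ∀ i : ℤ, ∀ a ∈ ℛ i, d a ∈ ℛ (i - 1))
    (hd_sq : ∀ a : R, d (d a) = 0)
    (hd_leibniz : ∀ i : ℤ, ∀ a ∈ ℛ i, ∀ b : R,
      d (a * b) = d a * b + (Int.negOnePow i : ℤ) • (a * d b))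
    {F : Type*} [AddCommGroup F] [Module A F]
    (ℱ : ℤ → Submodule A F) [DirectSum.Decomposition ℱ]
    (dF : F →ₗ[A] F)
    (hdF_mem : ∀ i : ℤ, ∀ f ∈ ℱ i, dF f ∈ ℱ (i - 1))
    (hdF_sq : ∀ f : F, dF (dF f) = 0)
    (act : F →ₗ[A] R →ₗ[A] F)
    (hact_one : ∀ f : F, act f 1 = f)
    (hact_mul : ∀ (f : F) (a b : R), act (act f a) b = act f (a * b))
    (hact_mem : ∀ (i j : ℤ), ∀ f ∈ ℱ i, ∀ a ∈ ℛ j, act f a ∈ ℱ (i + j))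
    (hact_leibniz : ∀ i : ℤ, ∀ f ∈ ℱ i, ∀ a : R,
      dF (act f a) = act (dF f) a + (Int.negOnePow i : ℤ) • act f (d a))
    {B : Type*} [Fintype B] [DecidableEq B]
    (degB : B → ℤ) (hdegB : ∀ x : B, 0 ≤ degB x)
    {B' : Type*} [Fintype B'] [DecidableEq B']
    (degB' : B' → ℤ) (hdegB' : ∀ y : B', 0 ≤ degB' y)
    (m₀ : B → B → R)
    (hm₀_mem : ∀ x y : B, m₀ x y ∈ ℛ (degB x - degB y - 1))
    (hm₀_zero : ∀ x y : B, ¬ degB y < degB x → m₀ x y = 0)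
    (hm₀_mc : ∀ x y : B, d (m₀ x y) =
      ∑ z : B, (Int.negOnePow (degB x - degB z) : ℤ) • (m₀ x z * m₀ z y))
    (m₁ : B' → B' → R)
    (hm₁_mem : ∀ w y : B', m₁ w y ∈ ℛ (degB' w - degB' y - 1))
    (hm₁_zero : ∀ w y : B', ¬ degB' y < degB' w → m₁ w y = 0)
    (hm₁_mc : ∀ w y : B', d (m₁ w y) =
      ∑ u : B', (Int.negOnePow (degB' w - degB' u) : ℤ) • (m₁ w u * m₁ u y))
    (ν₀ ν₁ : B → B' → R)
    (hν₀_mem : ∀ (x : B) (y : B'), ν₀ x y ∈ ℛ (degB x - degB' y))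
    (hν₀_eq : ∀ (x : B) (y : B'), d (ν₀ x y) =
      (∑ z : B, m₀ x z * ν₀ z y) -
        ∑ w : B', (Int.negOnePow (degB x - degB' w) : ℤ) • (ν₀ x w * m₁ w y))
    (hν₁_mem : ∀ (x : B) (y : B'), ν₁ x y ∈ ℛ (degB x - degB' y))
    (hν₁_eq : ∀ (x : B) (y : B'), d (ν₁ x y) =
      (∑ z : B, m₀ x z * ν₁ z y) -
        ∑ w : B', (Int.negOnePow (degB x - degB' w) : ℤ) • (ν₁ x w * m₁ w y))
    (DC : (B → F) →ₗ[A] (B → F))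
    (hDC : ∀ i : ℤ, ∀ f ∈ ℱ i, ∀ x : B,
      DC (Pi.single x f) = Pi.single x (dF f) +
        (Int.negOnePow i : ℤ) • (fun z : B => act f (m₀ x z)))
    (DD : (B' → F) →ₗ[A] (B' → F))
    (hDD : ∀ i : ℤ, ∀ f ∈ ℱ i, ∀ w : B',
      DD (Pi.single w f) = Pi.single w (dF f) +
        (Int.negOnePow i : ℤ) • (fun y : B' => act f (m₁ w y)))
    (Ψ₀ : (B → F) →ₗ[A] (B' → F))
    (hΨ₀ : ∀ (f : F) (x : B), Ψ₀ (Pi.single x f) = fun y : B' => act f (ν₀ x y))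
    (Ψ₁ : (B → F) →ₗ[A] (B' → F))
    (hΨ₁ : ∀ (f : F) (x : B), Ψ₁ (Pi.single x f) = fun y : B' => act f (ν₁ x y))
    (h : B → B' → R)
    (hh_mem : ∀ (x : B) (y : B'), h x y ∈ ℛ (degB x - degB' y + 1))
    (hh_eq : ∀ (x : B) (y : B'),
      d (h x y) = ν₁ x y - ν₀ x y +
        (∑ z : B, (Int.negOnePow (degB x - degB z) : ℤ) • (m₀ x z * h z y)) +
        ∑ w : B', (Int.negOnePow (degB x - degB' w) : ℤ) • (h x w * m₁ w y))
    (hF : (B → F) →ₗ[A] (B' → F))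
    (hhF : ∀ i : ℤ, ∀ f ∈ ℱ i, ∀ x : B,
      hF (Pi.single x f) = (Int.negOnePow i : ℤ) • (fun y : B' => act f (h x y))) :
    Ψ₁ - Ψ₀ = DD ∘ₗ hF + hF ∘ₗ DC :=
  statement5_general ℛ d ℱ dF hdF_mem act hact_mul hact_mem hact_leibniz degB degB' m₀ hm₀_mem m₁ ν₀
    ν₁ DC hDC DD hDD Ψ₀ hΨ₀ Ψ₁ hΨ₁ h hh_mem hh_eq hF hhF
end

section
/- Let R be a DGA over A, C_• a free graded A-module with finite basis B (degrees ≥ 0), (m_{x,y}) a twisting cocycle for (R, C_•), and F, F′ DG right R-modules. Let Γ : F → F′ be a morphism of DG right R-modules, i.e. a degree-0 A-linear map with Γ∘∂ = ∂∘Γ and Γ(α·a) = Γ(α)·a for all α ∈ F, a ∈ R. Then Γ̃(α⊗x) := Γ(α)⊗x defines a chain map Γ̃ : C_*(C_•, F) → C_*(C_•, F′) between the twisted complexes. If moreover R_i = 0, F_i = 0 and F′_i = 0 for all i < 0 and Γ is a quasi-isomorphism, then Γ̃ is a quasi-isomorphism. -/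
/-!
Filter both twisted complexes by the degree of the basis elements: the chains supported on basis
elements of degree `< p` form a subcomplex, since `m x y = 0` unless `|y| < |x|`, and on the layer
of degree exactly `p` the twisted differential is the differential of `F`. Being a
quasi-isomorphism is equivalent to acyclicity of the mapping cone, and a diagram chase carries
cone acyclicity up the filtration, one layer at a time, using that of `Γ` on each layer. As `B` is
finite, finitely many layers exhaust the complex.
-/

/-- A chain map `f` between two `ℤ`-graded complexes (graded pieces `Mdeg`, `Ndeg`,
differentials `dM`, `dN` of degree `-1`) is a quasi-isomorphism: it induces an isomorphism
on homology in every degree (stated concretely: surjectivity and injectivity of the induced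
map on homology). -/
def GradedQuasiIso {M N : Type*} [AddCommGroup M] [AddCommGroup N]
    (Mdeg : ℤ → Set M) (Ndeg : ℤ → Set N)
    (dM : M → M) (dN : N → N) (f : M → N) : Prop :=
  ∀ n : ℤ,
    (∀ y ∈ Ndeg n, dN y = 0 →
      ∃ x ∈ Mdeg n, dM x = 0 ∧ ∃ z ∈ Ndeg (n + 1), f x - y = dN z) ∧
    (∀ x ∈ Mdeg n, dM x = 0 → (∃ w ∈ Ndeg (n + 1), f x = dN w) →
      ∃ v ∈ Mdeg (n + 1), x = dM v)

section MappingCone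

variable {A M N : Type*} [Ring A] [AddCommGroup M] [Module A M] [AddCommGroup N] [Module A N]
  {Mdeg : ℤ → Submodule A M} {Ndeg : ℤ → Submodule A N} {dM : M →ₗ[A] M} {dN : N →ₗ[A] N}
  {f : M →ₗ[A] N}

/-- Acyclicity of the mapping cone of `f`, written out on elements: a pair `(a, b)` with
`dM a = 0` and `f a = dN b` is a cycle of the cone, and it is the boundary of `(v, w)` when
`a = dM v` and `f v - b = dN w`. -/
def ConeAcyclic (Mdeg : ℤ → Submodule A M) (Ndeg : ℤ → Submodule A N) (dM : M →ₗ[A] M)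
    (dN : N →ₗ[A] N) (f : M →ₗ[A] N) : Prop :=
  ∀ n, ∀ a ∈ Mdeg n, ∀ b ∈ Ndeg (n + 1), dM a = 0 → f a = dN b →
    ∃ v ∈ Mdeg (n + 1), ∃ w ∈ Ndeg (n + 2), a = dM v ∧ f v - b = dN w

theorem ConeAcyclic.of_gradedQuasiIso (hf_mem : ∀ n, ∀ x ∈ Mdeg n, f x ∈ Ndeg n)
    (hf_comm : ∀ x, f (dM x) = dN (f x))
    (hf : GradedQuasiIso (fun n => (Mdeg n : Set M)) (fun n => (Ndeg n : Set N)) dM dN f) :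
    ConeAcyclic Mdeg Ndeg dM dN f := by
  intro n a ha b hb hda hab
  obtain ⟨v, hv, rfl⟩ := (hf n).2 a ha hda ⟨b, hb, hab⟩
  obtain ⟨u, hu, hdu, w, hw, hfu⟩ := (hf (n + 1)).1 (f v - b) (sub_mem (hf_mem _ v hv) hb)
    (by rw [map_sub, ← hf_comm, hab, sub_self])
  refine ⟨v - u, sub_mem hv hu, -w, neg_mem (by rwa [add_assoc, one_add_one_eq_two] at hw),
    by rw [map_sub, hdu, sub_zero], ?_⟩
  rw [map_neg, ← hfu, map_sub]
  abel

theorem ConeAcyclic.gradedQuasiIso (hf : ConeAcyclic Mdeg Ndeg dM dN f) :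
    GradedQuasiIso (fun n => (Mdeg n : Set M)) (fun n => (Ndeg n : Set N)) dM dN f := by
  refine fun n => ⟨fun y hy hdy => ?_, fun x hx hdx ⟨w, hw, hxw⟩ => ?_⟩
  · obtain ⟨v, hv, w, hw, hdv, hvy⟩ := hf (n - 1) 0 (zero_mem _) (-y)
      (by rw [sub_add_cancel]; exact neg_mem hy) (map_zero dM)
      (by rw [map_neg, hdy, map_zero, neg_zero])
    rw [sub_add_cancel] at hv
    rw [show n - 1 + 2 = n + 1 by ring] at hw
    refine ⟨-v, neg_mem hv, by rw [map_neg, ← hdv, neg_zero], -w, neg_mem hw, ?_⟩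
    rw [map_neg, map_neg, ← hvy]
    abel
  · obtain ⟨v, hv, -, -, rfl, -⟩ := hf n x hx w hw hdx hxw
    exact ⟨v, hv, rfl⟩

theorem coneAcyclic_bot : ConeAcyclic (fun _ => ⊥) (fun _ => ⊥) dM dN f := by
  rintro n a (rfl : a = 0) b (rfl : b = 0) - -
  exact ⟨0, zero_mem _, 0, zero_mem _, (map_zero dM).symm, by simp⟩

end MappingCone

section TwistedComplex

variable {A R B F F' : Type*} [CommRing A] [Ring R] [Algebra A R] [AddCommGroup F] [Module A F]
  [AddCommGroup F'] [Module A F'] {ℛ : ℤ → Submodule A R} {d : R →ₗ[A] R} {deg : B → ℤ}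
  {m : B → B → R} {ℱ : ℤ → Submodule A F} {dF : F →ₗ[A] F} {act : F →ₗ[A] R →ₗ[A] F}
  {ℱ' : ℤ → Submodule A F'} {dF' : F' →ₗ[A] F'} {act' : F' →ₗ[A] R →ₗ[A] F'}
  {Γ : F →ₗ[A] F'} {n p : ℤ} {c : B → F}

/-- Degree `n` of `F ⊗_A C_•`, a chain being recorded by its coefficients on the basis `B`:
the coefficient of `x` has degree `n - |x|`. -/
def twistedChains (ℱ : ℤ → Submodule A F) (deg : B → ℤ) (n : ℤ) : Submodule A (B → F) where
  carrier := {c | ∀ x, c x ∈ ℱ (n - deg x)}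
  add_mem' ha hb x := add_mem (ha x) (hb x)
  zero_mem' _ := zero_mem _
  smul_mem' r _ hc x := Submodule.smul_mem _ r (hc x)

def supportedBelow (deg : B → ℤ) (p : ℤ) : Submodule A (B → F) where
  carrier := {c | ∀ x, p ≤ deg x → c x = 0}
  add_mem' ha hb x hx := by rw [Pi.add_apply, ha x hx, hb x hx, add_zero]
  zero_mem' _ _ := rfl
  smul_mem' r _ hc x hx := by rw [Pi.smul_apply, hc x hx, smul_zero]

def twistedFiltration (ℱ : ℤ → Submodule A F) (deg : B → ℤ) (p n : ℤ) : Submodule A (B → F) :=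
  twistedChains ℱ deg n ⊓ supportedBelow deg p

theorem mem_twistedFiltration :
    c ∈ twistedFiltration ℱ deg p n ↔
      c ∈ twistedChains ℱ deg n ∧ c ∈ (supportedBelow deg p : Submodule A (B → F)) :=
  Submodule.mem_inf

theorem twistedFiltration_eq_bot (h : ∀ x, p ≤ deg x) :
    twistedFiltration ℱ deg p = fun _ => ⊥ :=
  funext fun _ => eq_bot_iff.2 fun _ hc => funext fun x => (mem_twistedFiltration.1 hc).2 x (h x)

theorem twistedFiltration_eq_twistedChains (h : ∀ x, deg x < p) :
    twistedFiltration ℱ deg p = twistedChains ℱ deg :=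
  funext fun _ => inf_eq_left.2 fun _ _ x hx => absurd (h x) hx.not_gt

theorem twistedFiltration_mono {q : ℤ} (hpq : p ≤ q) :
    twistedFiltration ℱ deg p n ≤ twistedFiltration ℱ deg q n :=
  inf_le_inf_left _ fun _ hc x hx => hc x (hpq.trans hx)

theorem mem_twistedFiltration_of_succ (hc : c ∈ twistedFiltration ℱ deg (p + 1) n)
    (hp : ∀ x, deg x = p → c x = 0) : c ∈ twistedFiltration ℱ deg p n := by
  obtain ⟨hc, hc'⟩ := mem_twistedFiltration.1 hc
  exact mem_twistedFiltration.2
    ⟨hc, fun x hx => hx.eq_or_lt.elim (fun h => hp x h.symm) fun h => hc' x h⟩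

theorem compLeft_mem_twistedFiltration (hΓ : ∀ i, ∀ f ∈ ℱ i, Γ f ∈ ℱ' i)
    (hc : c ∈ twistedFiltration ℱ deg p n) : Γ.compLeft B c ∈ twistedFiltration ℱ' deg p n := by
  obtain ⟨hc, hc'⟩ := mem_twistedFiltration.1 hc
  exact mem_twistedFiltration.2 ⟨fun x => hΓ _ _ (hc x), fun x hx => by
    rw [LinearMap.compLeft_apply, Function.comp_apply, hc' x hx, map_zero]⟩

structure IsNonUnitalDGModule (ℛ : ℤ → Submodule A R) (d : R →ₗ[A] R) (ℱ : ℤ → Submodule A F)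
    (dF : F →ₗ[A] F) (act : F →ₗ[A] R →ₗ[A] F) : Prop where
  d_mem : ∀ i, ∀ f ∈ ℱ i, dF f ∈ ℱ (i - 1)
  d_d : ∀ f, dF (dF f) = 0
  act_mul : ∀ f a b, act (act f a) b = act f (a * b)
  act_mem : ∀ i j, ∀ f ∈ ℱ i, ∀ a ∈ ℛ j, act f a ∈ ℱ (i + j)
  d_act : ∀ i, ∀ f ∈ ℱ i, ∀ a, dF (act f a) = act (dF f) a + (i.negOnePow : ℤ) • act f (d a)

variable [DecidableEq B]

theorem LinearMap.compLeft_single (Γ : F →ₗ[A] F') (x : B) (f : F) :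
    Γ.compLeft B (Pi.single x f) = Pi.single x (Γ f) :=
  funext fun y => Pi.apply_single (fun _ => Γ) (fun _ => map_zero Γ) x f y

def IsTwistedDifferential (ℱ : ℤ → Submodule A F) (dF : F →ₗ[A] F) (act : F →ₗ[A] R →ₗ[A] F)
    (m : B → B → R) (D : (B → F) →ₗ[A] (B → F)) : Prop :=
  ∀ i, ∀ f ∈ ℱ i, ∀ x, D (Pi.single x f) =
    Pi.single x (dF f) + (i.negOnePow : ℤ) • fun y => act f (m x y)

variable [Fintype B] {D : (B → F) →ₗ[A] (B → F)} {D' : (B → F') →ₗ[A] (B → F')}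

structure IsTwistingCocycle (ℛ : ℤ → Submodule A R) (d : R →ₗ[A] R) (deg : B → ℤ)
    (m : B → B → R) : Prop where
  mem : ∀ x y, m x y ∈ ℛ (deg x - deg y - 1)
  eq_zero : ∀ x y, ¬ deg y < deg x → m x y = 0
  d_eq : ∀ x y, d (m x y) = ∑ z, ((deg x - deg z).negOnePow : ℤ) • (m x z * m z y)

theorem linearMap_ext_of_single_mem (ℱ : ℤ → Submodule A F) [DirectSum.Decomposition ℱ]
    {M : Type*} [AddCommGroup M] [Module A M] {φ ψ : (B → F) →ₗ[A] M}
    (h : ∀ i, ∀ f ∈ ℱ i, ∀ x, φ (Pi.single x f) = ψ (Pi.single x f)) : φ = ψ :=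
  LinearMap.pi_ext' fun x => DirectSum.decompose_lhom_ext ℱ fun i =>
    LinearMap.ext fun f => h i f f.2 x

namespace IsTwistedDifferential

theorem apply (hD : IsTwistedDifferential ℱ dF act m D) (hc : c ∈ twistedChains ℱ deg n)
    (y : B) : D c y = dF (c y) + ∑ x, ((n - deg x).negOnePow : ℤ) • act (c x) (m x y) := by
  conv_lhs => rw [← Finset.univ_sum_single c, map_sum, Finset.sum_apply]
  simp only [hD _ (c _) (hc _), Pi.add_apply, Pi.smul_apply, Finset.sum_add_distrib,
    Finset.sum_pi_single, Finset.mem_univ, if_true]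

theorem apply_eq_of_mem_twistedFiltration (hD : IsTwistedDifferential ℱ dF act m D)
    (hm : IsTwistingCocycle ℛ d deg m) (hc : c ∈ twistedFiltration ℱ deg p n) {y : B}
    (hy : p ≤ deg y + 1) : D c y = dF (c y) := by
  obtain ⟨hc, hc'⟩ := mem_twistedFiltration.1 hc
  rw [hD.apply hc, add_eq_left]
  refine Finset.sum_eq_zero fun x _ => ?_
  by_cases hxy : deg y < deg x
  · rw [hc' x (by omega), map_zero, LinearMap.zero_apply, smul_zero]
  · rw [hm.eq_zero x y hxy, map_zero, smul_zero]

theorem map_mem_twistedChains (hD : IsTwistedDifferential ℱ dF act m D)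
    (hm : IsTwistingCocycle ℛ d deg m) (hF : IsNonUnitalDGModule ℛ d ℱ dF act)
    (hc : c ∈ twistedChains ℱ deg (n + 1)) : D c ∈ twistedChains ℱ deg n := by
  intro y
  rw [hD.apply hc]
  refine add_mem ?_ (sum_mem fun x _ => Submodule.smul_of_tower_mem _ _ ?_)
  · convert hF.d_mem _ _ (hc y) using 2
    ring
  · convert hF.act_mem _ _ _ (hc x) _ (hm.mem x y) using 2
    ring

theorem map_mem_twistedFiltration (hD : IsTwistedDifferential ℱ dF act m D)
    (hm : IsTwistingCocycle ℛ d deg m) (hF : IsNonUnitalDGModule ℛ d ℱ dF act)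
    (hc : c ∈ twistedFiltration ℱ deg p (n + 1)) : D c ∈ twistedFiltration ℱ deg p n := by
  refine mem_twistedFiltration.2 ⟨hD.map_mem_twistedChains hm hF (mem_twistedFiltration.1 hc).1,
    fun y hy => ?_⟩
  rw [hD.apply_eq_of_mem_twistedFiltration hm hc (by omega),
    (mem_twistedFiltration.1 hc).2 y hy, map_zero]

theorem comp_self_eq_zero [DirectSum.Decomposition ℱ] (hD : IsTwistedDifferential ℱ dF act m D)
    (hm : IsTwistingCocycle ℛ d deg m) (hF : IsNonUnitalDGModule ℛ d ℱ dF act) :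
    D ∘ₗ D = 0 := by
  refine linearMap_ext_of_single_mem ℱ fun i f hf x => ?_
  have hg : (fun y => act f (m x y)) ∈ twistedChains ℱ deg (i + deg x - 1) := fun y => by
    convert hF.act_mem _ _ _ hf _ (hm.mem x y) using 2
    ring
  have hsign (k : ℤ) : ((k - 1).negOnePow : ℤ) = -k.negOnePow := by
    rw [Int.negOnePow_sub, Int.negOnePow_one, mul_neg, mul_one, Units.val_neg]
  funext y
  simp only [LinearMap.comp_apply, LinearMap.zero_apply, hD i f hf x, map_add, map_zsmul,
    hD (i - 1) (dF f) (hF.d_mem i f hf) x, hF.d_d, Pi.single_zero, zero_add, Pi.add_apply,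
    Pi.smul_apply, hD.apply hg, hF.d_act i f hf, hm.d_eq, map_sum, hF.act_mul, smul_add,
    Finset.smul_sum, smul_smul, Pi.zero_apply]
  rw [hsign, neg_smul, add_assoc, neg_add_cancel_left, ← Finset.sum_add_distrib]
  refine Finset.sum_eq_zero fun z _ => ?_
  rw [← add_smul, show i + deg x - 1 - deg z = i + (deg x - deg z) - 1 by ring, hsign,
    Int.negOnePow_add, Units.val_mul, mul_neg, add_neg_cancel, zero_smul]

theorem comp_compLeft [DirectSum.Decomposition ℱ] (hD : IsTwistedDifferential ℱ dF act m D)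
    (hD' : IsTwistedDifferential ℱ' dF' act' m D') (hΓ_deg : ∀ i, ∀ f ∈ ℱ i, Γ f ∈ ℱ' i)
    (hΓ_d : ∀ f, Γ (dF f) = dF' (Γ f)) (hΓ_act : ∀ f a, Γ (act f a) = act' (Γ f) a) :
    D' ∘ₗ Γ.compLeft B = Γ.compLeft B ∘ₗ D := by
  refine linearMap_ext_of_single_mem ℱ fun i f hf x => ?_
  simp only [LinearMap.comp_apply, LinearMap.compLeft_single, hD' i (Γ f) (hΓ_deg i f hf) x,
    hD i f hf x, map_add, map_zsmul, hΓ_d]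
  congr 2
  funext y
  simp only [LinearMap.compLeft_apply, Function.comp_apply, hΓ_act]

end IsTwistedDifferential

theorem exists_layer_correction (hm : IsTwistingCocycle ℛ d deg m)
    (hD : IsTwistedDifferential ℱ dF act m D) (hD' : IsTwistedDifferential ℱ' dF' act' m D')
    (hΓ : ConeAcyclic ℱ ℱ' dF dF' Γ) {a : B → F} {b : B → F'}
    (ha : a ∈ twistedFiltration ℱ deg (p + 1) n) (hb : b ∈ twistedFiltration ℱ' deg (p + 1) (n + 1))
    (hDa : D a = 0) (hab : Γ.compLeft B a = D' b) :
    ∃ v ∈ twistedFiltration ℱ deg (p + 1) (n + 1), ∃ w ∈ twistedFiltration ℱ' deg (p + 1) (n + 2),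
      ∀ y, deg y = p → D v y = a y ∧ D' w y = Γ (v y) - b y := by
  -- on the layer `deg = p` the twisted differentials are `dF` and `dF'`
  have hlayer (y : B) : ∃ v w, v ∈ ℱ (n + 1 - deg y) ∧ w ∈ ℱ' (n + 2 - deg y) ∧
      (deg y ≠ p → v = 0 ∧ w = 0) ∧ (deg y = p → dF v = a y ∧ dF' w = Γ v - b y) := by
    by_cases hy : deg y = p
    · have hcycle : dF (a y) = 0 := by
        rw [← hD.apply_eq_of_mem_twistedFiltration hm ha (by omega), hDa, Pi.zero_apply]
      have hbdry : Γ (a y) = dF' (b y) := by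
        rw [← hD'.apply_eq_of_mem_twistedFiltration hm hb (by omega), ← hab]
        rfl
      obtain ⟨v, hv, w, hw, hav, hvw⟩ := hΓ (n - deg y) (a y) ((mem_twistedFiltration.1 ha).1 y)
        (b y) (by rw [sub_add_eq_add_sub]; exact (mem_twistedFiltration.1 hb).1 y) hcycle hbdry
      rw [sub_add_eq_add_sub] at hv hw
      exact ⟨v, w, hv, hw, (absurd hy ·), fun _ => ⟨hav.symm, hvw.symm⟩⟩
    · exact ⟨0, 0, zero_mem _, zero_mem _, fun _ => ⟨rfl, rfl⟩, (absurd · hy)⟩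
  choose v w hv hw hoff hon using hlayer
  have hv' : v ∈ twistedFiltration ℱ deg (p + 1) (n + 1) :=
    mem_twistedFiltration.2 ⟨hv, fun y hy => (hoff y (by omega)).1⟩
  have hw' : w ∈ twistedFiltration ℱ' deg (p + 1) (n + 2) :=
    mem_twistedFiltration.2 ⟨hw, fun y hy => (hoff y (by omega)).2⟩
  refine ⟨v, hv', w, hw', fun y hy => ?_⟩
  rw [hD.apply_eq_of_mem_twistedFiltration hm hv' (by omega),
    hD'.apply_eq_of_mem_twistedFiltration hm hw' (by omega)]
  exact hon y hy

theorem coneAcyclic_twistedFiltration_succ [DirectSum.Decomposition ℱ]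
    [DirectSum.Decomposition ℱ'] (hm : IsTwistingCocycle ℛ d deg m)
    (hF : IsNonUnitalDGModule ℛ d ℱ dF act) (hF' : IsNonUnitalDGModule ℛ d ℱ' dF' act')
    (hD : IsTwistedDifferential ℱ dF act m D) (hD' : IsTwistedDifferential ℱ' dF' act' m D')
    (hΓ_deg : ∀ i, ∀ f ∈ ℱ i, Γ f ∈ ℱ' i) (hΓD : D' ∘ₗ Γ.compLeft B = Γ.compLeft B ∘ₗ D)
    (hΓ : ConeAcyclic ℱ ℱ' dF dF' Γ)
    (ih : ConeAcyclic (twistedFiltration ℱ deg p) (twistedFiltration ℱ' deg p) D D'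
      (Γ.compLeft B)) :
    ConeAcyclic (twistedFiltration ℱ deg (p + 1)) (twistedFiltration ℱ' deg (p + 1)) D D'
      (Γ.compLeft B) := by
  intro n a ha b hb hDa hab
  obtain ⟨v, hv, w, hw, hlayer⟩ := exists_layer_correction hm hD hD' hΓ ha hb hDa hab
  have hDD (c : B → F) : D (D c) = 0 := LinearMap.congr_fun (hD.comp_self_eq_zero hm hF) c
  have hDD' (c : B → F') : D' (D' c) = 0 := LinearMap.congr_fun (hD'.comp_self_eq_zero hm hF') c
  have hΓD' (c : B → F) : D' (Γ.compLeft B c) = Γ.compLeft B (D c) := LinearMap.congr_fun hΓD c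
  -- subtracting the boundary of `(v, w)` kills the layer `deg = p` of `(a, b)`
  have ha₁ : a - D v ∈ twistedFiltration ℱ deg p n :=
    mem_twistedFiltration_of_succ (sub_mem ha (hD.map_mem_twistedFiltration hm hF hv))
      fun y hy => by rw [Pi.sub_apply, (hlayer y hy).1, sub_self]
  have hb₁ : b - Γ.compLeft B v + D' w ∈ twistedFiltration ℱ' deg p (n + 1) := by
    refine mem_twistedFiltration_of_succ (add_mem (sub_mem hb (compLeft_mem_twistedFiltration
      hΓ_deg hv)) (hD'.map_mem_twistedFiltration hm hF' (by rwa [add_assoc, one_add_one_eq_two])))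
      fun y hy => ?_
    rw [Pi.add_apply, Pi.sub_apply, (hlayer y hy).2, LinearMap.compLeft_apply,
      Function.comp_apply]
    abel
  obtain ⟨v₁, hv₁, w₁, hw₁, hav₁, hvw₁⟩ := ih n _ ha₁ _ hb₁
    (by rw [map_sub, hDa, hDD, sub_zero])
    (by rw [map_sub, map_add, map_sub, hab, hDD', ← hΓD', add_zero])
  refine ⟨v₁ + v, add_mem (twistedFiltration_mono (Int.le_add_one le_rfl) hv₁) hv,
    w₁ + w, add_mem (twistedFiltration_mono (Int.le_add_one le_rfl) hw₁) hw, ?_, ?_⟩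
  · rw [map_add, ← hav₁, sub_add_cancel]
  · rw [map_add, map_add, ← hvw₁]
    abel

theorem gradedQuasiIso_compLeft [DirectSum.Decomposition ℱ] [DirectSum.Decomposition ℱ']
    (hm : IsTwistingCocycle ℛ d deg m) (hF : IsNonUnitalDGModule ℛ d ℱ dF act)
    (hF' : IsNonUnitalDGModule ℛ d ℱ' dF' act') (hD : IsTwistedDifferential ℱ dF act m D)
    (hD' : IsTwistedDifferential ℱ' dF' act' m D') (hΓ_deg : ∀ i, ∀ f ∈ ℱ i, Γ f ∈ ℱ' i)
    (hΓ_d : ∀ f, Γ (dF f) = dF' (Γ f)) (hΓ_act : ∀ f a, Γ (act f a) = act' (Γ f) a)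
    (hΓ : GradedQuasiIso (fun n => (ℱ n : Set F)) (fun n => (ℱ' n : Set F')) dF dF' Γ) :
    GradedQuasiIso (fun n => (twistedChains ℱ deg n : Set (B → F)))
      (fun n => (twistedChains ℱ' deg n : Set (B → F'))) D D' (Γ.compLeft B) := by
  have hΓ_cone := ConeAcyclic.of_gradedQuasiIso hΓ_deg hΓ_d hΓ
  have hΓD := hD.comp_compLeft hD' hΓ_deg hΓ_d hΓ_act
  obtain ⟨p, hp⟩ := (Set.finite_range deg).bddBelow
  obtain ⟨q, hq⟩ := (Set.finite_range deg).bddAbove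
  have hcone (r : ℤ) (hr : p ≤ r) : ConeAcyclic (twistedFiltration ℱ deg r)
      (twistedFiltration ℱ' deg r) D D' (Γ.compLeft B) := by
    induction r, hr using Int.leInduction with
    | base =>
      rw [twistedFiltration_eq_bot fun x => hp ⟨x, rfl⟩,
        twistedFiltration_eq_bot fun x => hp ⟨x, rfl⟩]
      exact coneAcyclic_bot
    | succ r _ ih =>
      exact coneAcyclic_twistedFiltration_succ hm hF hF' hD hD' hΓ_deg hΓD hΓ_cone ih
  have hdeg_lt (x : B) : deg x < max p (q + 1) :=
    lt_max_of_lt_right (Int.lt_add_one_of_le (hq ⟨x, rfl⟩))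
  have htop := hcone (max p (q + 1)) (le_max_left _ _)
  rw [twistedFiltration_eq_twistedChains hdeg_lt, twistedFiltration_eq_twistedChains hdeg_lt]
    at htop
  exact htop.gradedQuasiIso

end TwistedComplex

theorem statement7_general
    {A : Type*} [CommRing A] {R : Type*} [Ring R] [Algebra A R]
    (ℛ : ℤ → Submodule A R)
    (d : R →ₗ[A] R)
    {B : Type*} [Fintype B] [DecidableEq B]
    (deg : B → ℤ)
    (m : B → B → R)
    (hm_mem : ∀ x y : B, m x y ∈ ℛ (deg x - deg y - 1))
    (hm_zero : ∀ x y : B, ¬ deg y < deg x → m x y = 0)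
    (hm_mc : ∀ x y : B, d (m x y) =
      ∑ z : B, (Int.negOnePow (deg x - deg z) : ℤ) • (m x z * m z y))
    {F : Type*} [AddCommGroup F] [Module A F]
    (ℱ : ℤ → Submodule A F) [DirectSum.Decomposition ℱ]
    (dF : F →ₗ[A] F)
    (hdF_mem : ∀ i : ℤ, ∀ f ∈ ℱ i, dF f ∈ ℱ (i - 1))
    (hdF_sq : ∀ f : F, dF (dF f) = 0)
    (act : F →ₗ[A] R →ₗ[A] F)
    (hact_mul : ∀ (f : F) (a b : R), act (act f a) b = act f (a * b))
    (hact_mem : ∀ (i j : ℤ), ∀ f ∈ ℱ i, ∀ a ∈ ℛ j, act f a ∈ ℱ (i + j))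
    (hact_leibniz : ∀ i : ℤ, ∀ f ∈ ℱ i, ∀ a : R,
      dF (act f a) = act (dF f) a + (Int.negOnePow i : ℤ) • act f (d a))
    {F' : Type*} [AddCommGroup F'] [Module A F']
    (ℱ' : ℤ → Submodule A F') [DirectSum.Decomposition ℱ']
    (dF' : F' →ₗ[A] F')
    (hdF'_mem : ∀ i : ℤ, ∀ f ∈ ℱ' i, dF' f ∈ ℱ' (i - 1))
    (hdF'_sq : ∀ f : F', dF' (dF' f) = 0)
    (act' : F' →ₗ[A] R →ₗ[A] F')
    (hact'_mul : ∀ (f : F') (a b : R), act' (act' f a) b = act' f (a * b))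
    (hact'_mem : ∀ (i j : ℤ), ∀ f ∈ ℱ' i, ∀ a ∈ ℛ j, act' f a ∈ ℱ' (i + j))
    (hact'_leibniz : ∀ i : ℤ, ∀ f ∈ ℱ' i, ∀ a : R,
      dF' (act' f a) = act' (dF' f) a + (Int.negOnePow i : ℤ) • act' f (d a))
    (Γ : F →ₗ[A] F')
    (hΓ_deg : ∀ i : ℤ, ∀ f ∈ ℱ i, Γ f ∈ ℱ' i)
    (hΓ_d : ∀ f : F, Γ (dF f) = dF' (Γ f))
    (hΓ_act : ∀ (f : F) (a : R), Γ (act f a) = act' (Γ f) a)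
    (D : (B → F) →ₗ[A] (B → F))
    (hD : ∀ i : ℤ, ∀ f ∈ ℱ i, ∀ x : B,
      D (Pi.single x f) = Pi.single x (dF f) +
        (Int.negOnePow i : ℤ) • (fun y : B => act f (m x y)))
    (D' : (B → F') →ₗ[A] (B → F'))
    (hD' : ∀ i : ℤ, ∀ f ∈ ℱ' i, ∀ x : B,
      D' (Pi.single x f) = Pi.single x (dF' f) +
        (Int.negOnePow i : ℤ) • (fun y : B => act' f (m x y)))
    (Γt : (B → F) →ₗ[A] (B → F'))
    (hΓt : ∀ (c : B → F) (x : B), Γt c x = Γ (c x)) :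
    (D' ∘ₗ Γt = Γt ∘ₗ D) ∧
      ((∀ i : ℤ, i < 0 → ℛ i = ⊥) → (∀ i : ℤ, i < 0 → ℱ i = ⊥) →
        (∀ i : ℤ, i < 0 → ℱ' i = ⊥) →
        GradedQuasiIso (fun n => (ℱ n : Set F)) (fun n => (ℱ' n : Set F'))
          (⇑dF) (⇑dF') (⇑Γ) →
        GradedQuasiIso (fun n => {c : B → F | ∀ x : B, c x ∈ ℱ (n - deg x)})
          (fun n => {c : B → F' | ∀ x : B, c x ∈ ℱ' (n - deg x)})
          (⇑D) (⇑D') (⇑Γt)) := by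
  obtain rfl : Γt = Γ.compLeft B := LinearMap.ext fun c => funext (hΓt c)
  have hm : IsTwistingCocycle ℛ d deg m := ⟨hm_mem, hm_zero, hm_mc⟩
  have hF : IsNonUnitalDGModule ℛ d ℱ dF act :=
    ⟨hdF_mem, hdF_sq, hact_mul, hact_mem, hact_leibniz⟩
  have hF' : IsNonUnitalDGModule ℛ d ℱ' dF' act' :=
    ⟨hdF'_mem, hdF'_sq, hact'_mul, hact'_mem, hact'_leibniz⟩
  exact ⟨IsTwistedDifferential.comp_compLeft hD hD' hΓ_deg hΓ_d hΓ_act,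
    fun _ _ _ hΓ => gradedQuasiIso_compLeft hm hF hF' hD hD' hΓ_deg hΓ_d hΓ_act hΓ⟩

/-- A morphism `Γ : F → F'` of DG right `R`-modules induces a chain map
`Γ̃ (α ⊗ x) = Γ(α) ⊗ x` between the twisted complexes; if `R`, `F`, `F'` vanish in negative
degrees and `Γ` is a quasi-isomorphism, then `Γ̃` is a quasi-isomorphism. -/
theorem statement7
    {A : Type*} [CommRing A] {R : Type*} [Ring R] [Algebra A R]
    (ℛ : ℤ → Submodule A R) [GradedRing ℛ]
    (d : R →ₗ[A] R)
    (hd_mem : ∀ i : ℤ, ∀ a ∈ ℛ i, d a ∈ ℛ (i - 1))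
    (hd_sq : ∀ a : R, d (d a) = 0)
    (hd_leibniz : ∀ i : ℤ, ∀ a ∈ ℛ i, ∀ b : R,
      d (a * b) = d a * b + (Int.negOnePow i : ℤ) • (a * d b))
    {B : Type*} [Fintype B] [DecidableEq B]
    (deg : B → ℤ) (hdeg : ∀ x : B, 0 ≤ deg x)
    (m : B → B → R)
    (hm_mem : ∀ x y : B, m x y ∈ ℛ (deg x - deg y - 1))
    (hm_zero : ∀ x y : B, ¬ deg y < deg x → m x y = 0)
    (hm_mc : ∀ x y : B, d (m x y) =
      ∑ z : B, (Int.negOnePow (deg x - deg z) : ℤ) • (m x z * m z y))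
    {F : Type*} [AddCommGroup F] [Module A F]
    (ℱ : ℤ → Submodule A F) [DirectSum.Decomposition ℱ]
    (dF : F →ₗ[A] F)
    (hdF_mem : ∀ i : ℤ, ∀ f ∈ ℱ i, dF f ∈ ℱ (i - 1))
    (hdF_sq : ∀ f : F, dF (dF f) = 0)
    (act : F →ₗ[A] R →ₗ[A] F)
    (hact_one : ∀ f : F, act f 1 = f)
    (hact_mul : ∀ (f : F) (a b : R), act (act f a) b = act f (a * b))
    (hact_mem : ∀ (i j : ℤ), ∀ f ∈ ℱ i, ∀ a ∈ ℛ j, act f a ∈ ℱ (i + j))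
    (hact_leibniz : ∀ i : ℤ, ∀ f ∈ ℱ i, ∀ a : R,
      dF (act f a) = act (dF f) a + (Int.negOnePow i : ℤ) • act f (d a))
    {F' : Type*} [AddCommGroup F'] [Module A F']
    (ℱ' : ℤ → Submodule A F') [DirectSum.Decomposition ℱ']
    (dF' : F' →ₗ[A] F')
    (hdF'_mem : ∀ i : ℤ, ∀ f ∈ ℱ' i, dF' f ∈ ℱ' (i - 1))
    (hdF'_sq : ∀ f : F', dF' (dF' f) = 0)
    (act' : F' →ₗ[A] R →ₗ[A] F')
    (hact'_one : ∀ f : F', act' f 1 = f)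
    (hact'_mul : ∀ (f : F') (a b : R), act' (act' f a) b = act' f (a * b))
    (hact'_mem : ∀ (i j : ℤ), ∀ f ∈ ℱ' i, ∀ a ∈ ℛ j, act' f a ∈ ℱ' (i + j))
    (hact'_leibniz : ∀ i : ℤ, ∀ f ∈ ℱ' i, ∀ a : R,
      dF' (act' f a) = act' (dF' f) a + (Int.negOnePow i : ℤ) • act' f (d a))
    (Γ : F →ₗ[A] F')
    (hΓ_deg : ∀ i : ℤ, ∀ f ∈ ℱ i, Γ f ∈ ℱ' i)
    (hΓ_d : ∀ f : F, Γ (dF f) = dF' (Γ f))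
    (hΓ_act : ∀ (f : F) (a : R), Γ (act f a) = act' (Γ f) a)
    (D : (B → F) →ₗ[A] (B → F))
    (hD : ∀ i : ℤ, ∀ f ∈ ℱ i, ∀ x : B,
      D (Pi.single x f) = Pi.single x (dF f) +
        (Int.negOnePow i : ℤ) • (fun y : B => act f (m x y)))
    (D' : (B → F') →ₗ[A] (B → F'))
    (hD' : ∀ i : ℤ, ∀ f ∈ ℱ' i, ∀ x : B,
      D' (Pi.single x f) = Pi.single x (dF' f) +
        (Int.negOnePow i : ℤ) • (fun y : B => act' f (m x y)))
    (Γt : (B → F) →ₗ[A] (B → F'))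
    (hΓt : ∀ (c : B → F) (x : B), Γt c x = Γ (c x)) :
    (D' ∘ₗ Γt = Γt ∘ₗ D) ∧
      ((∀ i : ℤ, i < 0 → ℛ i = ⊥) → (∀ i : ℤ, i < 0 → ℱ i = ⊥) →
        (∀ i : ℤ, i < 0 → ℱ' i = ⊥) →
        GradedQuasiIso (fun n => (ℱ n : Set F)) (fun n => (ℱ' n : Set F'))
          (⇑dF) (⇑dF') (⇑Γ) →
        GradedQuasiIso (fun n => {c : B → F | ∀ x : B, c x ∈ ℱ (n - deg x)})
          (fun n => {c : B → F' | ∀ x : B, c x ∈ ℱ' (n - deg x)})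
          (⇑D) (⇑D') (⇑Γt)) :=
  statement7_general ℛ d deg m hm_mem hm_zero hm_mc ℱ dF hdF_mem hdF_sq act hact_mul hact_mem
    hact_leibniz ℱ' dF' hdF'_mem hdF'_sq act' hact'_mul hact'_mem hact'_leibniz Γ hΓ_deg hΓ_d hΓ_act
    D hD D' hD' Γt hΓt
end

section
/- Let R and R′ be DGAs over A and Φ : R → R′ a morphism of DGAs (a degree-0 A-linear map with Φ(1) = 1, Φ(ab) = Φ(a)Φ(b), and Φ∘∂ = ∂∘Φ). Let F be a DG right R-module, F′ a DG right R′-module, and Γ : F → F′ a degree-0 A-linear map with Γ∘∂ = ∂∘Γ and Γ(α·a) = Γ(α)·Φ(a) for all α ∈ F, a ∈ R. Let C_• be a free graded A-module with finite basis B (degrees ≥ 0) and (m_{x,y}) a twisting cocycle for (R, C_•). Then (Φ(m_{x,y})) is a twisting cocycle for (R′, C_•), and Γ̃(α⊗x) := Γ(α)⊗x defines a chain map from the twisted complex C_*(C_•, F) built from (m_{x,y}) to the twisted complex C_*(C_•, F′) built from (Φ(m_{x,y})). If moreover R, R′, F, F′ all vanish in negative degrees and Γ is a quasi-isomorphism,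 then Γ̃ is a quasi-isomorphism. -/
set_option linter.unusedSectionVars false
namespace Statement8Aux

variable {A : Type*} [CommRing A] {R : Type*} [Ring R] [Algebra A R]
  {F : Type*} [AddCommGroup F] [Module A F]
  {B : Type*} [Fintype B] [DecidableEq B]

/-- membership/support condition for the filtered twisted complex. -/
def MkSet (ℱ : ℤ → Submodule A F) (deg : B → ℤ) (k n : ℤ) (c : B → F) : Prop :=
  (∀ x, c x ∈ ℱ (n - deg x)) ∧ ∀ x, k < deg x → c x = 0

theorem MkSet.mono {ℱ : ℤ → Submodule A F} {deg : B → ℤ} {k k' n : ℤ} {c : B → F}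
    (h : MkSet ℱ deg k n c) (hk : k ≤ k') : MkSet ℱ deg k' n c :=
  ⟨h.1, fun x hx => h.2 x (lt_of_le_of_lt hk hx)⟩

theorem MkSet.sub {ℱ : ℤ → Submodule A F} {deg : B → ℤ} {k n : ℤ} {c c' : B → F}
    (h : MkSet ℱ deg k n c) (h' : MkSet ℱ deg k n c') : MkSet ℱ deg k n (c - c') := by
  refine ⟨fun x => ?_, fun x hx => ?_⟩
  · exact Submodule.sub_mem _ (h.1 x) (h'.1 x)
  · simp [Pi.sub_apply, h.2 x hx, h'.2 x hx]

theorem MkSet.add {ℱ : ℤ → Submodule A F} {deg : B → ℤ} {k n : ℤ} {c c' : B → F}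
    (h : MkSet ℱ deg k n c) (h' : MkSet ℱ deg k n c') : MkSet ℱ deg k n (c + c') := by
  refine ⟨fun x => ?_, fun x hx => ?_⟩
  · exact Submodule.add_mem _ (h.1 x) (h'.1 x)
  · simp [Pi.add_apply, h.2 x hx, h'.2 x hx]

variable {ℛ : ℤ → Submodule A R} {d : R →ₗ[A] R} {ℱ : ℤ → Submodule A F} {dF : F →ₗ[A] F}
  {act : F →ₗ[A] R →ₗ[A] F} {deg : B → ℤ} {m : B → B → R}
  {D : (B → F) →ₗ[A] (B → F)}


theorem negOnePow_sub_one' (a : ℤ) : ((a - 1).negOnePow : ℤ) = -(a.negOnePow : ℤ) := by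
  have h := Int.negOnePow_succ (a - 1)
  rw [sub_add_cancel] at h
  rw [h]; push_cast; ring

theorem negOnePow_sq' (a : ℤ) : ((a).negOnePow : ℤ) * ((a).negOnePow : ℤ) = 1 := by
  rw [← Units.val_mul, Int.units_mul_self, Units.val_one]

theorem negOnePow_cross' (n a b : ℤ) :
    ((n - a).negOnePow : ℤ) * ((n - b).negOnePow : ℤ) = ((b - a).negOnePow : ℤ) := by
  rw [← Units.val_mul, ← Int.negOnePow_add]
  congr 1
  have : (n - a) + (n - b) = (b - a) + 2 * (n - b) := by ring
  rw [this, Int.negOnePow_add, Int.negOnePow_two_mul, mul_one]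

section Def
variable (hD : ∀ i : ℤ, ∀ f ∈ ℱ i, ∀ x : B,
      D (Pi.single x f) = Pi.single x (dF f) +
        (Int.negOnePow i : ℤ) • (fun y : B => act f (m x y)))
include hD

theorem twDef (n : ℤ) (c : B → F) (hc : ∀ x, c x ∈ ℱ (n - deg x)) (x : B) :
    D c x = dF (c x) + ∑ y, ((n - deg y).negOnePow : ℤ) • act (c y) (m y x) := by
  have hc' : c = ∑ y, Pi.single y (c y) := (Finset.univ_sum_single c).symm
  have h1 : D c = ∑ y, (Pi.single y (dF (c y)) +
      ((n - deg y).negOnePow : ℤ) • (fun z : B => act (c y) (m y z))) := by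
    conv_lhs => rw [hc', map_sum]
    exact Finset.sum_congr rfl fun y _ => hD (n - deg y) (c y) (hc y) y
  rw [h1]
  simp only [Finset.sum_apply, Pi.add_apply, Pi.smul_apply, Pi.single_apply,
    smul_eq_mul]
  rw [Finset.sum_add_distrib]
  congr 1
  rw [Finset.sum_ite_eq Finset.univ x (fun y => dF (c y))]
  simp

/-- components of `D c` at `x` of maximal degree in the support: only `dF` contributes. -/
theorem twHigh (hm_zero : ∀ x y : B, ¬ deg y < deg x → m x y = 0)
    (n : ℤ) (c : B → F) (hc : ∀ x, c x ∈ ℱ (n - deg x)) (x : B)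
    (hx : ∀ y, deg x < deg y → c y = 0) :
    D c x = dF (c x) := by
  rw [twDef hD n c hc x]
  have : ∀ y : B, ((n - deg y).negOnePow : ℤ) • act (c y) (m y x) = 0 := by
    intro y
    by_cases h : deg x < deg y
    · rw [hx y h]; simp
    · rw [hm_zero y x h]; simp
  rw [Finset.sum_congr rfl fun y _ => this y]
  simp

theorem twMem
    (hdF_mem : ∀ i : ℤ, ∀ f ∈ ℱ i, dF f ∈ ℱ (i - 1))
    (hact_mem : ∀ (i j : ℤ), ∀ f ∈ ℱ i, ∀ a ∈ ℛ j, act f a ∈ ℱ (i + j))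
    (hm_mem : ∀ x y : B, m x y ∈ ℛ (deg x - deg y - 1))
    (hm_zero : ∀ x y : B, ¬ deg y < deg x → m x y = 0)
    (k n : ℤ) (c : B → F) (hc : MkSet ℱ deg k n c) :
    MkSet ℱ deg k (n - 1) (D c) := by
  constructor
  · intro x
    rw [twDef hD n c hc.1 x]
    refine Submodule.add_mem _ ?_ (Submodule.sum_mem _ fun y _ => ?_)
    · have := hdF_mem (n - deg x) (c x) (hc.1 x)
      convert this using 2
      ring
    · refine zsmul_mem ?_ _
      by_cases h : deg x < deg y
      · have := hact_mem (n - deg y) (deg y - deg x - 1) (c y) (hc.1 y) (m y x) (hm_mem y x)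
        convert this using 2
        ring
      · rw [hm_zero y x h]; simp
  · intro x hx
    rw [twDef hD n c hc.1 x, hc.2 x hx]
    have : ∀ y : B, ((n - deg y).negOnePow : ℤ) • act (c y) (m y x) = 0 := by
      intro y
      by_cases h : k < deg y
      · rw [hc.2 y h]; simp
      · rw [hm_zero y x (by omega)]; simp
    rw [Finset.sum_congr rfl fun y _ => this y]
    simp


theorem twSq {d : R →ₗ[A] R}
    (hdF_mem : ∀ i : ℤ, ∀ f ∈ ℱ i, dF f ∈ ℱ (i - 1))
    (hdF_sq : ∀ f : F, dF (dF f) = 0)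
    (hact_mul : ∀ (f : F) (a b : R), act (act f a) b = act f (a * b))
    (hact_mem : ∀ (i j : ℤ), ∀ f ∈ ℱ i, ∀ a ∈ ℛ j, act f a ∈ ℱ (i + j))
    (hact_leibniz : ∀ i : ℤ, ∀ f ∈ ℱ i, ∀ a : R,
      dF (act f a) = act (dF f) a + (Int.negOnePow i : ℤ) • act f (d a))
    (hm_mem : ∀ x y : B, m x y ∈ ℛ (deg x - deg y - 1))
    (hm_zero : ∀ x y : B, ¬ deg y < deg x → m x y = 0)
    (hm_mc : ∀ x y : B, d (m x y) =
      ∑ z : B, (Int.negOnePow (deg x - deg z) : ℤ) • (m x z * m z y))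
    (n : ℤ) (c : B → F) (hc : ∀ x, c x ∈ ℱ (n - deg x)) :
    D (D c) = 0 := by
  have hmem' : ∀ x, D c x ∈ ℱ (n - 1 - deg x) := by
    intro x
    rw [twDef hD n c hc x]
    refine Submodule.add_mem _ ?_ (Submodule.sum_mem _ fun y _ => ?_)
    · have h := hdF_mem (n - deg x) (c x) (hc x)
      convert h using 2
      ring
    · refine zsmul_mem ?_ _
      by_cases h : deg x < deg y
      · have h2 := hact_mem (n - deg y) (deg y - deg x - 1) (c y) (hc y) (m y x) (hm_mem y x)
        convert h2 using 2
        ring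
      · rw [hm_zero y x h]
        simp
  funext x
  rw [twDef hD (n - 1) (D c) hmem' x]
  have e1 : dF (D c x) = ∑ y, ((n - deg y).negOnePow : ℤ) • act (dF (c y)) (m y x)
      + ∑ y, act (c y) (d (m y x)) := by
    rw [twDef hD n c hc x]
    rw [map_add, map_sum, hdF_sq, zero_add, ← Finset.sum_add_distrib]
    refine Finset.sum_congr rfl fun y _ => ?_
    have h0 : dF (((n - deg y).negOnePow : ℤ) • act (c y) (m y x))
        = ((n - deg y).negOnePow : ℤ) • dF (act (c y) (m y x)) := map_zsmul dF _ _
    rw [h0, hact_leibniz (n - deg y) (c y) (hc y) (m y x), smul_add, smul_smul,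
      negOnePow_sq', one_smul]
  have e2 : ∑ y, ((n - 1 - deg y).negOnePow : ℤ) • act (D c y) (m y x)
      = -∑ y, ((n - deg y).negOnePow : ℤ) • act (dF (c y)) (m y x)
        + ∑ y, ∑ z, (-(((n - deg z).negOnePow : ℤ) * ((n - deg y).negOnePow : ℤ))) •
            act (act (c z) (m z y)) (m y x) := by
    rw [← Finset.sum_neg_distrib, ← Finset.sum_add_distrib]
    refine Finset.sum_congr rfl fun y _ => ?_
    have hsgn : ((n - 1 - deg y).negOnePow : ℤ) = -((n - deg y).negOnePow : ℤ) := by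
      have h3 : n - 1 - deg y = (n - deg y) - 1 := by ring
      rw [h3, negOnePow_sub_one']
    rw [hsgn, twDef hD n c hc y]
    rw [map_add, LinearMap.add_apply, smul_add, neg_smul]
    congr 1
    have h4 : act (∑ z, ((n - deg z).negOnePow : ℤ) • act (c z) (m z y)) (m y x)
        = ∑ z, ((n - deg z).negOnePow : ℤ) • act (act (c z) (m z y)) (m y x) := by
      rw [map_sum, LinearMap.sum_apply]
      refine Finset.sum_congr rfl fun z _ => ?_
      have h5 : act (((n - deg z).negOnePow : ℤ) • act (c z) (m z y))
          = ((n - deg z).negOnePow : ℤ) • act (act (c z) (m z y)) := map_zsmul act _ _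
      rw [h5, LinearMap.smul_apply]
    rw [h4, Finset.smul_sum]
    refine Finset.sum_congr rfl fun z _ => ?_
    rw [smul_smul]
    congr 1
    ring
  have e3 : ∑ y, act (c y) (d (m y x))
      = ∑ y, ∑ z, ((deg y - deg z).negOnePow : ℤ) • act (c y) (m y z * m z x) := by
    refine Finset.sum_congr rfl fun y _ => ?_
    rw [hm_mc y x, map_sum]
    exact Finset.sum_congr rfl fun z _ => map_zsmul (act (c y)) _ _
  have e4 : ∑ y, ∑ z, (-(((n - deg z).negOnePow : ℤ) * ((n - deg y).negOnePow : ℤ))) •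
        act (act (c z) (m z y)) (m y x)
      = -∑ y, ∑ z, ((deg y - deg z).negOnePow : ℤ) • act (c y) (m y z * m z x) := by
    rw [Finset.sum_comm, ← Finset.sum_neg_distrib]
    refine Finset.sum_congr rfl fun y _ => ?_
    rw [← Finset.sum_neg_distrib]
    refine Finset.sum_congr rfl fun z _ => ?_
    rw [hact_mul, ← neg_smul]
    congr 1
    rw [← negOnePow_cross' n (deg z) (deg y)]
    ring
  rw [e1, e3, e2, e4]
  simp only [Pi.zero_apply]
  abel

end Def

end Statement8Aux
open Statement8Aux


/-- For a morphism of DGAs `Φ : R → R'`, a DG right `R`-module `F`, a DG right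
`R'`-module `F'` and `Γ : F → F'` compatible with `Φ`, the pushed forward family `Φ(m)` of a
twisting cocycle `m` for `(R, C)` is a twisting cocycle for `(R', C)`, and
`Γ̃ (α ⊗ x) = Γ(α) ⊗ x` is a chain map between the corresponding twisted complexes; if
moreover everything vanishes in negative degrees and `Γ` is a quasi-isomorphism then so
is `Γ̃`. -/
theorem statement8
    {A : Type*} [CommRing A] {R : Type*} [Ring R] [Algebra A R]
    (ℛ : ℤ → Submodule A R) [GradedRing ℛ]
    (d : R →ₗ[A] R)
    (hd_mem : ∀ i : ℤ, ∀ a ∈ ℛ i, d a ∈ ℛ (i - 1))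
    (hd_sq : ∀ a : R, d (d a) = 0)
    (hd_leibniz : ∀ i : ℤ, ∀ a ∈ ℛ i, ∀ b : R,
      d (a * b) = d a * b + (Int.negOnePow i : ℤ) • (a * d b))
    {R' : Type*} [Ring R'] [Algebra A R']
    (ℛ' : ℤ → Submodule A R') [GradedRing ℛ']
    (d' : R' →ₗ[A] R')
    (hd'_mem : ∀ i : ℤ, ∀ a ∈ ℛ' i, d' a ∈ ℛ' (i - 1))
    (hd'_sq : ∀ a : R', d' (d' a) = 0)
    (hd'_leibniz : ∀ i : ℤ, ∀ a ∈ ℛ' i, ∀ b : R',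
      d' (a * b) = d' a * b + (Int.negOnePow i : ℤ) • (a * d' b))
    (Φ : R →ₐ[A] R')
    (hΦ_deg : ∀ i : ℤ, ∀ a ∈ ℛ i, Φ a ∈ ℛ' i)
    (hΦ_d : ∀ a : R, Φ (d a) = d' (Φ a))
    {F : Type*} [AddCommGroup F] [Module A F]
    (ℱ : ℤ → Submodule A F) [DirectSum.Decomposition ℱ]
    (dF : F →ₗ[A] F)
    (hdF_mem : ∀ i : ℤ, ∀ f ∈ ℱ i, dF f ∈ ℱ (i - 1))
    (hdF_sq : ∀ f : F, dF (dF f) = 0)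
    (act : F →ₗ[A] R →ₗ[A] F)
    (hact_one : ∀ f : F, act f 1 = f)
    (hact_mul : ∀ (f : F) (a b : R), act (act f a) b = act f (a * b))
    (hact_mem : ∀ (i j : ℤ), ∀ f ∈ ℱ i, ∀ a ∈ ℛ j, act f a ∈ ℱ (i + j))
    (hact_leibniz : ∀ i : ℤ, ∀ f ∈ ℱ i, ∀ a : R,
      dF (act f a) = act (dF f) a + (Int.negOnePow i : ℤ) • act f (d a))
    {F' : Type*} [AddCommGroup F'] [Module A F']
    (ℱ' : ℤ → Submodule A F') [DirectSum.Decomposition ℱ']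
    (dF' : F' →ₗ[A] F')
    (hdF'_mem : ∀ i : ℤ, ∀ f ∈ ℱ' i, dF' f ∈ ℱ' (i - 1))
    (hdF'_sq : ∀ f : F', dF' (dF' f) = 0)
    (act' : F' →ₗ[A] R' →ₗ[A] F')
    (hact'_one : ∀ f : F', act' f 1 = f)
    (hact'_mul : ∀ (f : F') (a b : R'), act' (act' f a) b = act' f (a * b))
    (hact'_mem : ∀ (i j : ℤ), ∀ f ∈ ℱ' i, ∀ a ∈ ℛ' j, act' f a ∈ ℱ' (i + j))
    (hact'_leibniz : ∀ i : ℤ, ∀ f ∈ ℱ' i, ∀ a : R',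
      dF' (act' f a) = act' (dF' f) a + (Int.negOnePow i : ℤ) • act' f (d' a))
    (Γ : F →ₗ[A] F')
    (hΓ_deg : ∀ i : ℤ, ∀ f ∈ ℱ i, Γ f ∈ ℱ' i)
    (hΓ_d : ∀ f : F, Γ (dF f) = dF' (Γ f))
    (hΓ_act : ∀ (f : F) (a : R), Γ (act f a) = act' (Γ f) (Φ a))
    {B : Type*} [Fintype B] [DecidableEq B]
    (deg : B → ℤ) (hdeg : ∀ x : B, 0 ≤ deg x)
    (m : B → B → R)
    (hm_mem : ∀ x y : B, m x y ∈ ℛ (deg x - deg y - 1))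
    (hm_zero : ∀ x y : B, ¬ deg y < deg x → m x y = 0)
    (hm_mc : ∀ x y : B, d (m x y) =
      ∑ z : B, (Int.negOnePow (deg x - deg z) : ℤ) • (m x z * m z y))
    (D : (B → F) →ₗ[A] (B → F))
    (hD : ∀ i : ℤ, ∀ f ∈ ℱ i, ∀ x : B,
      D (Pi.single x f) = Pi.single x (dF f) +
        (Int.negOnePow i : ℤ) • (fun y : B => act f (m x y)))
    (D' : (B → F') →ₗ[A] (B → F'))
    (hD' : ∀ i : ℤ, ∀ f ∈ ℱ' i, ∀ x : B,
      D' (Pi.single x f) = Pi.single x (dF' f) +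
        (Int.negOnePow i : ℤ) • (fun y : B => act' f (Φ (m x y))))
    (Γt : (B → F) →ₗ[A] (B → F'))
    (hΓt : ∀ (c : B → F) (x : B), Γt c x = Γ (c x)) :
    ((∀ x y : B, Φ (m x y) ∈ ℛ' (deg x - deg y - 1)) ∧
      (∀ x y : B, ¬ deg y < deg x → Φ (m x y) = 0) ∧
      (∀ x y : B, d' (Φ (m x y)) =
        ∑ z : B, (Int.negOnePow (deg x - deg z) : ℤ) • (Φ (m x z) * Φ (m z y)))) ∧
    (D' ∘ₗ Γt = Γt ∘ₗ D) ∧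
    ((∀ i : ℤ, i < 0 → ℛ i = ⊥) → (∀ i : ℤ, i < 0 → ℛ' i = ⊥) →
      (∀ i : ℤ, i < 0 → ℱ i = ⊥) → (∀ i : ℤ, i < 0 → ℱ' i = ⊥) →
      GradedQuasiIso (fun n => (ℱ n : Set F)) (fun n => (ℱ' n : Set F'))
        (⇑dF) (⇑dF') (⇑Γ) →
      GradedQuasiIso (fun n => {c : B → F | ∀ x : B, c x ∈ ℱ (n - deg x)})
        (fun n => {c : B → F' | ∀ x : B, c x ∈ ℱ' (n - deg x)})
        (⇑D) (⇑D') (⇑Γt)) := by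
  classical
  -- Part 1: pushed-forward twisting cocycle
  have part1 : (∀ x y : B, Φ (m x y) ∈ ℛ' (deg x - deg y - 1)) ∧
      (∀ x y : B, ¬ deg y < deg x → Φ (m x y) = 0) ∧
      (∀ x y : B, d' (Φ (m x y)) =
        ∑ z : B, (Int.negOnePow (deg x - deg z) : ℤ) • (Φ (m x z) * Φ (m z y))) := by
    refine ⟨fun x y => hΦ_deg _ _ (hm_mem x y), fun x y h => by rw [hm_zero x y h]; exact map_zero Φ,
      fun x y => ?_⟩
    rw [← hΦ_d, hm_mc x y, map_sum]
    refine Finset.sum_congr rfl fun z _ => ?_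
    rw [map_zsmul, map_mul]
  -- Part 2: chain map
  have hGt_single : ∀ (x : B) (f : F), Γt (Pi.single x f) = Pi.single x (Γ f) := by
    intro x f
    funext y
    rw [hΓt, Pi.single_apply, Pi.single_apply, apply_ite Γ, map_zero]
  have hsingle : ∀ (i : ℤ), ∀ f ∈ ℱ i, ∀ x : B,
      D' (Γt (Pi.single x f)) = Γt (D (Pi.single x f)) := by
    intro i f hf x
    rw [hGt_single, hD' i (Γ f) (hΓ_deg i f hf) x, hD i f hf x, map_add, map_zsmul,
      hGt_single]
    congr 1
    · rw [hΓ_d]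
    congr 1
    funext y
    rw [hΓt]
    exact (hΓ_act f (m x y)).symm
  have hsingle' : ∀ (x : B) (f : F), D' (Γt (Pi.single x f)) = Γt (D (Pi.single x f)) := by
    intro x f
    have hdec : (Pi.single x f : B → F) = ∑ i ∈ (DirectSum.decompose ℱ f).support,
        (Pi.single x ((DirectSum.decompose ℱ f i : F)) : B → F) := by
      conv_lhs => rw [← DirectSum.sum_support_decompose ℱ f]
      exact map_sum (AddMonoidHom.single (fun _ : B => F) x) _ _
    rw [hdec, map_sum, map_sum, map_sum, map_sum]
    exact Finset.sum_congr rfl fun i _ => hsingle i _ (DirectSum.decompose ℱ f i).2 x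
  have hchain : D' ∘ₗ Γt = Γt ∘ₗ D := by
    apply LinearMap.ext
    intro c
    have hc : c = ∑ x, Pi.single x (c x) := (Finset.univ_sum_single c).symm
    rw [LinearMap.comp_apply, LinearMap.comp_apply, hc, map_sum, map_sum, map_sum, map_sum]
    exact Finset.sum_congr rfl fun x _ => hsingle' x (c x)
  refine ⟨part1, hchain, ?_⟩
  -- Part 3: quasi-isomorphism
  intro _ _ _ _ hΓqi
  have hchainpt : ∀ c : B → F, D' (Γt c) = Γt (D c) := fun c => LinearMap.congr_fun hchain c
  have hm'_mem := part1.1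
  have hm'_zero := part1.2.1
  have hm'_mc := part1.2.2
  have hΓtmem : ∀ (k n : ℤ) (c : B → F), MkSet ℱ deg k n c → MkSet ℱ' deg k n (Γt c) := by
    intro k n c hc
    refine ⟨fun x => ?_, fun x hx => ?_⟩
    · rw [hΓt]; exact hΓ_deg _ _ (hc.1 x)
    · rw [hΓt, hc.2 x hx, map_zero]
  have hDmem : ∀ (k n : ℤ) (c : B → F), MkSet ℱ deg k n c → MkSet ℱ deg k (n - 1) (D c) :=
    fun k n c hc => twMem hD hdF_mem hact_mem hm_mem hm_zero k n c hc
  have hD'mem : ∀ (k n : ℤ) (c : B → F'), MkSet ℱ' deg k n c → MkSet ℱ' deg k (n - 1) (D' c) :=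
    fun k n c hc => twMem hD' hdF'_mem hact'_mem hm'_mem hm'_zero k n c hc
  have hDsq : ∀ (n : ℤ) (c : B → F), (∀ x, c x ∈ ℱ (n - deg x)) → D (D c) = 0 :=
    fun n c hc => twSq hD hdF_mem hdF_sq hact_mul hact_mem hact_leibniz hm_mem hm_zero hm_mc n c hc
  have hD'sq : ∀ (n : ℤ) (c : B → F'), (∀ x, c x ∈ ℱ' (n - deg x)) → D' (D' c) = 0 :=
    fun n c hc => twSq hD' hdF'_mem hdF'_sq hact'_mul hact'_mem hact'_leibniz hm'_mem hm'_zero hm'_mc n c hc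
  have hHigh : ∀ (n : ℤ) (c : B → F), (∀ x, c x ∈ ℱ (n - deg x)) → ∀ x : B,
      (∀ y, deg x < deg y → c y = 0) → D c x = dF (c x) :=
    fun n c hc => twHigh hD hm_zero n c hc
  have hHigh' : ∀ (n : ℤ) (c : B → F'), (∀ x, c x ∈ ℱ' (n - deg x)) → ∀ x : B,
      (∀ y, deg x < deg y → c y = 0) → D' c x = dF' (c x) :=
    fun n c hc => twHigh hD' hm'_zero n c hc
  have key : ∀ K : ℕ, ∀ n : ℤ,
      (∀ c' : B → F', MkSet ℱ' deg ((K : ℤ) - 1) n c' → D' c' = 0 →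
        ∃ c : B → F, MkSet ℱ deg ((K : ℤ) - 1) n c ∧ D c = 0 ∧
          ∃ e' : B → F', MkSet ℱ' deg ((K : ℤ) - 1) (n + 1) e' ∧ Γt c - c' = D' e') ∧
      (∀ c : B → F, MkSet ℱ deg ((K : ℤ) - 1) n c → D c = 0 →
        (∃ w' : B → F', MkSet ℱ' deg ((K : ℤ) - 1) (n + 1) w' ∧ Γt c = D' w') →
        ∃ v : B → F, MkSet ℱ deg ((K : ℤ) - 1) (n + 1) v ∧ c = D v) := by
    intro K
    induction K with
    | zero =>
      intro n
      constructor
      · intro c' hc' _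
        have h0 : c' = 0 := funext fun x => hc'.2 x (by have := hdeg x; push_cast; omega)
        exact ⟨0, ⟨fun x => Submodule.zero_mem _, fun x _ => rfl⟩, map_zero D, 0,
          ⟨fun x => Submodule.zero_mem _, fun x _ => rfl⟩,
          by rw [h0, map_zero Γt, map_zero D', sub_zero]⟩
      · intro c hc _ _
        have h0 : c = 0 := funext fun x => hc.2 x (by have := hdeg x; push_cast; omega)
        exact ⟨0, ⟨fun x => Submodule.zero_mem _, fun x _ => rfl⟩, by rw [h0, map_zero D]⟩
    | succ K IH =>
      intro n
      have hcast : ((K + 1 : ℕ) : ℤ) - 1 = (K : ℤ) := by push_cast; ring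
      simp only [hcast]
      have hkl : (K : ℤ) - 1 ≤ (K : ℤ) := by omega
      constructor
      · -- surjectivity on homology
        intro c' hc' hc'0
        have hhigh0 : ∀ x : B, deg x = (K : ℤ) → dF' (c' x) = 0 := by
          intro x hx
          have h1 := hHigh' n c' hc'.1 x (fun y hy => hc'.2 y (by omega))
          rw [hc'0] at h1
          simpa using h1.symm
        have hex : ∀ x : B, deg x = (K : ℤ) → ∃ f ∈ ℱ (n - deg x), dF f = 0 ∧
            ∃ e ∈ ℱ' (n - deg x + 1), Γ f - c' x = dF' e :=
          fun x hx => (hΓqi (n - deg x)).1 (c' x) (hc'.1 x) (hhigh0 x hx)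
        choose f hf1 hf2 e he1 he2 using hex
        set u : B → F := fun x => if h : deg x = (K : ℤ) then f x h else 0 with hu_def
        have hu_mem : MkSet ℱ deg (K : ℤ) n u := by
          constructor
          · intro x
            by_cases h : deg x = (K : ℤ)
            · simp only [hu_def]; rw [dif_pos h]; exact hf1 x h
            · simp only [hu_def]; rw [dif_neg h]; exact Submodule.zero_mem _
          · intro x hx; simp only [hu_def]; rw [dif_neg (by omega)]
        have hu0 : ∀ y : B, ¬ deg y = (K : ℤ) → u y = 0 := by
          intro y hy; simp only [hu_def]; rw [dif_neg hy]
        have hDu_mem : MkSet ℱ deg ((K : ℤ) - 1) (n - 1) (D u) := by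
          have h0 := hDmem (K : ℤ) n u hu_mem
          refine ⟨h0.1, fun x hx => ?_⟩
          by_cases h : deg x = (K : ℤ)
          · rw [hHigh n u hu_mem.1 x (fun y hy => hu0 y (by omega))]
            simp only [hu_def]
            rw [dif_pos h]
            exact hf2 x h
          · exact h0.2 x (by omega)
        set e'h : B → F' := fun x => if h : deg x = (K : ℤ) then e x h else 0 with he'h_def
        have he'h_mem : MkSet ℱ' deg (K : ℤ) (n + 1) e'h := by
          constructor
          · intro x
            by_cases h : deg x = (K : ℤ)
            · simp only [he'h_def]; rw [dif_pos h, show n + 1 - deg x = n - deg x + 1 by ring]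
              exact he1 x h
            · simp only [he'h_def]; rw [dif_neg h]; exact Submodule.zero_mem _
          · intro x hx; simp only [he'h_def]; rw [dif_neg (by omega)]
        have hD'e'h : MkSet ℱ' deg (K : ℤ) n (D' e'h) := by
          have h0 := hD'mem (K : ℤ) (n + 1) e'h he'h_mem
          rwa [show n + 1 - 1 = n by ring] at h0
        set w' : B → F' := Γt u - c' - D' e'h with hw'_def
        have hw'_memk : MkSet ℱ' deg (K : ℤ) n w' :=
          ((hΓtmem (K : ℤ) n u hu_mem).sub hc').sub hD'e'h
        have hw'_high : ∀ x : B, deg x = (K : ℤ) → w' x = 0 := by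
          intro x hx
          have hDe : D' e'h x = dF' (e'h x) :=
            hHigh' (n + 1) e'h he'h_mem.1 x
              (fun y hy => by simp only [he'h_def]; rw [dif_neg (by omega)])
          have h2 : w' x = Γ (u x) - c' x - D' e'h x := by
            simp only [hw'_def, Pi.sub_apply]
            rw [hΓt]
          rw [h2, hDe]
          simp only [hu_def, he'h_def]
          rw [dif_pos hx, dif_pos hx, sub_sub, ← he2 x hx]
          abel
        have hw'_mem : MkSet ℱ' deg ((K : ℤ) - 1) n w' := by
          refine ⟨hw'_memk.1, fun x hx => ?_⟩
          by_cases h : deg x = (K : ℤ)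
          · exact hw'_high x h
          · exact hw'_memk.2 x (by omega)
        have hD'w' : D' w' = Γt (D u) := by
          simp only [hw'_def]
          rw [map_sub, map_sub, hc'0, hD'sq (n + 1) e'h he'h_mem.1, hchainpt u, sub_zero, sub_zero]
        obtain ⟨v, hv_mem, hv⟩ := (IH (n - 1)).2 (D u) hDu_mem (hDsq n u hu_mem.1)
          ⟨w', by rwa [show n - 1 + 1 = n by ring], hD'w'.symm⟩
        rw [show n - 1 + 1 = n by ring] at hv_mem
        have hy'_mem : MkSet ℱ' deg ((K : ℤ) - 1) n (Γt v - w') :=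
          (hΓtmem _ n v hv_mem).sub hw'_mem
        have hy'0 : D' (Γt v - w') = 0 := by
          rw [map_sub, hchainpt v, ← hv, hD'w', sub_self]
        obtain ⟨x₀, hx₀_mem, hx₀0, e'₀, he'₀_mem, he'₀⟩ := (IH n).1 (Γt v - w') hy'_mem hy'0
        refine ⟨u - v + x₀, (hu_mem.sub (hv_mem.mono hkl)).add (hx₀_mem.mono hkl), ?_,
          e'h + e'₀, he'h_mem.add (he'₀_mem.mono hkl), ?_⟩
        · rw [map_add, map_sub, ← hv, hx₀0, sub_self, zero_add]
        · rw [map_add, map_sub, map_add, ← he'₀, hw'_def]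
          abel
      · -- injectivity on homology
        rintro c hc hc0 ⟨w', hw'_mem, hw'⟩
        have hcyc : ∀ x : B, deg x = (K : ℤ) → dF (c x) = 0 := by
          intro x hx
          have h1 := hHigh n c hc.1 x (fun y hy => hc.2 y (by omega))
          rw [hc0] at h1
          simpa using h1.symm
        have hbd : ∀ x : B, deg x = (K : ℤ) → Γ (c x) = dF' (w' x) := by
          intro x hx
          have h1 : D' w' x = dF' (w' x) :=
            hHigh' (n + 1) w' hw'_mem.1 x (fun y hy => hw'_mem.2 y (by omega))
          rw [← h1, ← hw', hΓt]
        have hex1 : ∀ x : B, deg x = (K : ℤ) → ∃ g ∈ ℱ (n - deg x + 1), c x = dF g := by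
          intro x hx
          refine (hΓqi (n - deg x)).2 (c x) (hc.1 x) (hcyc x hx) ⟨w' x, ?_, hbd x hx⟩
          have h3 := hw'_mem.1 x
          rwa [show n + 1 - deg x = n - deg x + 1 by ring] at h3
        choose g hg1 hg2 using hex1
        set vh : B → F := fun x => if h : deg x = (K : ℤ) then g x h else 0 with hvh_def
        have hvh_mem : MkSet ℱ deg (K : ℤ) (n + 1) vh := by
          constructor
          · intro x
            by_cases h : deg x = (K : ℤ)
            · simp only [hvh_def]; rw [dif_pos h, show n + 1 - deg x = n - deg x + 1 by ring]
              exact hg1 x h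
            · simp only [hvh_def]; rw [dif_neg h]; exact Submodule.zero_mem _
          · intro x hx; simp only [hvh_def]; rw [dif_neg (by omega)]
        have hDvh_mem : MkSet ℱ deg (K : ℤ) n (D vh) := by
          have h0 := hDmem (K : ℤ) (n + 1) vh hvh_mem
          rwa [show n + 1 - 1 = n by ring] at h0
        have hDvh_high : ∀ x : B, deg x = (K : ℤ) → D vh x = c x := by
          intro x hx
          rw [hHigh (n + 1) vh hvh_mem.1 x
            (fun y hy => by simp only [hvh_def]; rw [dif_neg (by omega)])]
          simp only [hvh_def]
          rw [dif_pos hx]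
          exact (hg2 x hx).symm
        have hc₁_memk : MkSet ℱ deg (K : ℤ) n (c - D vh) := hc.sub hDvh_mem
        have hc₁_mem : MkSet ℱ deg ((K : ℤ) - 1) n (c - D vh) := by
          refine ⟨hc₁_memk.1, fun x hx => ?_⟩
          by_cases h : deg x = (K : ℤ)
          · simp only [Pi.sub_apply, hDvh_high x h, sub_self]
          · exact hc₁_memk.2 x (by omega)
        have hc₁0 : D (c - D vh) = 0 := by
          rw [map_sub, hc0, hDsq (n + 1) vh hvh_mem.1, sub_zero]
        have hw1'_memk : MkSet ℱ' deg (K : ℤ) (n + 1) (w' - Γt vh) :=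
          hw'_mem.sub (hΓtmem _ _ vh hvh_mem)
        have hD'w1' : D' (w' - Γt vh) = Γt (c - D vh) := by
          rw [map_sub, map_sub, hchainpt vh, ← hw']
        have hw1'_cyc : ∀ x : B, deg x = (K : ℤ) → dF' ((w' - Γt vh) x) = 0 := by
          intro x hx
          simp only [Pi.sub_apply]
          rw [hΓt, map_sub]
          simp only [hvh_def]
          rw [dif_pos hx, ← hΓ_d, ← hg2 x hx, hbd x hx, sub_self]
        have hex2 : ∀ x : B, deg x = (K : ℤ) → ∃ p ∈ ℱ (n + 1 - deg x), dF p = 0 ∧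
            ∃ q ∈ ℱ' (n + 1 - deg x + 1), Γ p - (w' - Γt vh) x = dF' q :=
          fun x hx => (hΓqi (n + 1 - deg x)).1 ((w' - Γt vh) x) (hw1'_memk.1 x) (hw1'_cyc x hx)
        choose p hp1 hp2 q hq1 hq2 using hex2
        set pe : B → F := fun x => if h : deg x = (K : ℤ) then p x h else 0 with hpe_def
        set qe : B → F' := fun x => if h : deg x = (K : ℤ) then q x h else 0 with hqe_def
        have hpe_mem : MkSet ℱ deg (K : ℤ) (n + 1) pe := by
          constructor
          · intro x
            by_cases h : deg x = (K : ℤ)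
            · simp only [hpe_def]; rw [dif_pos h]; exact hp1 x h
            · simp only [hpe_def]; rw [dif_neg h]; exact Submodule.zero_mem _
          · intro x hx; simp only [hpe_def]; rw [dif_neg (by omega)]
        have hqe_mem : MkSet ℱ' deg (K : ℤ) (n + 2) qe := by
          constructor
          · intro x
            by_cases h : deg x = (K : ℤ)
            · simp only [hqe_def]; rw [dif_pos h, show n + 2 - deg x = n + 1 - deg x + 1 by ring]
              exact hq1 x h
            · simp only [hqe_def]; rw [dif_neg h]; exact Submodule.zero_mem _
          · intro x hx; simp only [hqe_def]; rw [dif_neg (by omega)]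
        have hDpe_mem : MkSet ℱ deg (K : ℤ) n (D pe) := by
          have h0 := hDmem (K : ℤ) (n + 1) pe hpe_mem
          rwa [show n + 1 - 1 = n by ring] at h0
        have hDpe_high : ∀ x : B, deg x = (K : ℤ) → D pe x = 0 := by
          intro x hx
          rw [hHigh (n + 1) pe hpe_mem.1 x
            (fun y hy => by simp only [hpe_def]; rw [dif_neg (by omega)])]
          simp only [hpe_def]
          rw [dif_pos hx]
          exact hp2 x hx
        have hc₂_mem : MkSet ℱ deg ((K : ℤ) - 1) n (c - D vh - D pe) := by
          refine ⟨(hc₁_memk.sub hDpe_mem).1, fun x hx => ?_⟩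
          by_cases h : deg x = (K : ℤ)
          · simp only [Pi.sub_apply, hDvh_high x h, hDpe_high x h, sub_self, sub_zero]
          · exact (hc₁_memk.sub hDpe_mem).2 x (by omega)
        have hc₂0 : D (c - D vh - D pe) = 0 := by
          rw [map_sub, hc₁0, hDsq (n + 1) pe hpe_mem.1, sub_zero]
        have hD'qe_mem : MkSet ℱ' deg (K : ℤ) (n + 1) (D' qe) := by
          have h0 := hD'mem (K : ℤ) (n + 2) qe hqe_mem
          rwa [show n + 2 - 1 = n + 1 by ring] at h0
        have hw2'_memk : MkSet ℱ' deg (K : ℤ) (n + 1) (w' - Γt vh - Γt pe + D' qe) :=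
          (hw1'_memk.sub (hΓtmem _ _ pe hpe_mem)).add hD'qe_mem
        have hD'qe_high : ∀ x : B, deg x = (K : ℤ) → D' qe x = dF' (qe x) :=
          fun x hx => hHigh' (n + 2) qe hqe_mem.1 x
            (fun y hy => by simp only [hqe_def]; rw [dif_neg (by omega)])
        have hw2'_mem : MkSet ℱ' deg ((K : ℤ) - 1) (n + 1) (w' - Γt vh - Γt pe + D' qe) := by
          refine ⟨hw2'_memk.1, fun x hx => ?_⟩
          by_cases h : deg x = (K : ℤ)
          · have hq := hq2 x h
            simp only [Pi.sub_apply] at hq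
            simp only [Pi.add_apply, Pi.sub_apply, hD'qe_high x h]
            rw [hΓt pe x]
            simp only [hpe_def, hqe_def]
            rw [dif_pos h, dif_pos h, ← hq]
            abel
          · exact hw2'_memk.2 x (by omega)
        have hD'w2' : D' (w' - Γt vh - Γt pe + D' qe) = Γt (c - D vh - D pe) := by
          rw [map_add, map_sub, hD'w1', hchainpt pe, hD'sq (n + 2) qe hqe_mem.1, add_zero, ← map_sub]
        obtain ⟨v₂, hv₂_mem, hv₂⟩ := (IH n).2 (c - D vh - D pe) hc₂_mem hc₂0
          ⟨w' - Γt vh - Γt pe + D' qe, hw2'_mem, hD'w2'.symm⟩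
        refine ⟨vh + pe + v₂, (hvh_mem.add hpe_mem).add (hv₂_mem.mono hkl), ?_⟩
        rw [map_add, map_add, ← hv₂]
        abel
  intro n
  set Kb : ℕ := (Finset.univ.sup fun x : B => (deg x).toNat) + 1 with hKb_def
  have hKb : ∀ x : B, deg x ≤ (Kb : ℤ) - 1 := by
    intro x
    have h1 : (deg x).toNat ≤ Finset.univ.sup fun x : B => (deg x).toNat :=
      Finset.le_sup (f := fun x : B => (deg x).toNat) (Finset.mem_univ x)
    have h2 : deg x ≤ ((deg x).toNat : ℤ) := Int.self_le_toNat _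
    simp only [hKb_def]
    push_cast
    omega
  constructor
  · intro c' hc' h0
    obtain ⟨c, hc_mem, hc0, e', he'_mem, he'⟩ :=
      (key Kb n).1 c' ⟨hc', fun x hx => absurd (hKb x) (by omega)⟩ h0
    exact ⟨c, hc_mem.1, hc0, e', he'_mem.1, he'⟩
  · rintro c hc hc0 ⟨w', hw'1, hw'2⟩
    obtain ⟨v, hv_mem, hv⟩ := (key Kb n).2 c ⟨hc, fun x hx => absurd (hKb x) (by omega)⟩ hc0
      ⟨w', ⟨hw'1, fun x hx => absurd (hKb x) (by omega)⟩, hw'2⟩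
    exact ⟨v, hv_mem.1, hv⟩
end

section
/- Let R be a DGA over A with R_i = 0 for i < 0, F a DG right R-module with F_i = 0 for i < 0, C_• a free graded A-module with finite basis B (degrees ≥ 0), and (m_{x,y}) a twisting cocycle for (R, C_•). Set H_0(R) := R_0/∂(R_1) (a ring) and H_0(F) := F_0/∂(F_1); the right R_0-action on F_0 descends to a right H_0(R)-module structure on H_0(F). Let C̃_• be the lifted complex and H_0(C̃_•) := C̃_0/δ(C̃_1), a left H_0(R)-module. Then the assignment α ⊗ x ↦ [α] ⊗ [x] (for α ∈ F_0 and x ∈ B with |x| = 0) induces an isomorphism of abelian groups H_0(C_*(C_•, F)) ≅ H_0(F) ⊗_{H_0(R)} H_0(C̃_•). -/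
/-!
Everything lives in nonnegative degrees, so every degree `0` chain of the twisted complex is a
cycle, and on degree `1` chains `D e = (y ↦ dF (e y) + ∑ₓ e x · m x y)`. Hence `H₀` of the
twisted complex is `F₀ ⊗ C₀` modulo the chains `(dF u) ⊗ y` and `f · mₓ` with `|x| = 1`.

The map `τ ([f], [a]) = [f ⊗ a]`, for `a` a degree `0` family of coefficients in `R₀`, is well
defined: changing `f` by `dF u`, or `a` by a boundary `∂u` of `C_*(C_•, R)` (which is what the
vanishing of the class of `a` in `H₀(C̃)` amounts to), changes `f ⊗ a` by a boundary.
Conversely, for balanced `β`, the map `α ⊗ y ↦ β [α] [y]` kills both kinds of boundaries, since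
`[dF u] = 0` in `H₀(F)` and `[δx] = 0` in `H₀(C̃)`, and so factors through `τ`.
-/

universe u v w t

/-- `(T, τ)` is a tensor product over the (possibly noncommutative) ring `H` of the right
`H`-module `M` and the left `H`-module `N`: `τ` is biadditive and balanced, its image
generates `T`, and every biadditive balanced map out of `M × N` factors uniquely through
`τ` by an additive map on `T`. -/
structure IsBalancedTensorProduct (H : Type u) [Ring H]
    (M : Type v) [AddCommGroup M] [Module Hᵐᵒᵖ M]
    (N : Type w) [AddCommGroup N] [Module H N]
    (T : Type t) [AddCommGroup T] (τ : M → N → T) : Prop where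
  add_left : ∀ (m₁ m₂ : M) (n : N), τ (m₁ + m₂) n = τ m₁ n + τ m₂ n
  add_right : ∀ (m : M) (n₁ n₂ : N), τ m (n₁ + n₂) = τ m n₁ + τ m n₂
  balanced : ∀ (m : M) (a : H) (n : N), τ (MulOpposite.op a • m) n = τ m (a • n)
  span : AddSubgroup.closure {x : T | ∃ m n, τ m n = x} = ⊤
  lift : ∀ (P : Type (max u v w t)) [AddCommGroup P] (β : M → N → P),
    (∀ (m₁ m₂ : M) (n : N), β (m₁ + m₂) n = β m₁ n + β m₂ n) →
    (∀ (m : M) (n₁ n₂ : N), β m (n₁ + n₂) = β m n₁ + β m n₂) →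
    (∀ (m : M) (a : H) (n : N), β (MulOpposite.op a • m) n = β m (a • n)) →
    ∃! φ : T →+ P, ∀ m n, φ (τ m n) = β m n

theorem AddMonoidHom.exists_comp_eq_of_surjective {X Q P : Type*} [AddCommGroup X]
    [AddCommGroup Q] [AddCommGroup P] (q : X →+ Q) (hq : Function.Surjective q) (g : X →+ P)
    (hg : ∀ x, q x = 0 → g x = 0) : ∃ φ : Q →+ P, ∀ x, φ (q x) = g x :=
  ⟨q.liftOfSurjective hq ⟨g, fun x hx => hg x hx⟩, fun x =>
    q.liftOfRightInverse_comp_apply _ (Function.rightInverse_surjInv hq) _ x⟩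

theorem AddMonoidHom.exists_comp₂_eq_of_surjective {X Y M N T : Type*} [AddCommGroup X]
    [AddCommGroup Y] [AddCommGroup M] [AddCommGroup N] [AddCommGroup T]
    (p : X →+ M) (hp : Function.Surjective p) (q : Y →+ N) (hq : Function.Surjective q)
    (μ : X →+ Y →+ T) (hpμ : ∀ x, p x = 0 → μ x = 0) (hqμ : ∀ y, q y = 0 → ∀ x, μ x y = 0) :
    ∃ τ : M →+ N →+ T, ∀ x y, τ (p x) (q y) = μ x y := by
  obtain ⟨ν, hν⟩ := q.exists_comp_eq_of_surjective hq μ.flip fun y hy => by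
    ext x; exact hqμ y hy x
  obtain ⟨τ, hτ⟩ := p.exists_comp_eq_of_surjective hp ν.flip fun x hx => by
    ext t
    obtain ⟨y, rfl⟩ := hq t
    simp [hν, hpμ x hx]
  exact ⟨τ, fun x y => by simp [hτ, hν]⟩

theorem IsBalancedTensorProduct.of_exists_lift {H : Type u} [Ring H]
    {M : Type v} [AddCommGroup M] [Module Hᵐᵒᵖ M] {N : Type w} [AddCommGroup N] [Module H N]
    {T : Type t} [AddCommGroup T] (τ : M →+ N →+ T)
    (balanced : ∀ (m : M) (a : H) (n : N), τ (MulOpposite.op a • m) n = τ m (a • n))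
    (span : AddSubgroup.closure {x : T | ∃ m n, τ m n = x} = ⊤)
    (lift : ∀ (P : Type (max u v w t)) [AddCommGroup P] (β : M →+ N →+ P),
      (∀ (m : M) (a : H) (n : N), β (MulOpposite.op a • m) n = β m (a • n)) →
      ∃ φ : T →+ P, ∀ m n, φ (τ m n) = β m n) :
    IsBalancedTensorProduct H M N T (fun m n => τ m n) where
  add_left m₁ m₂ n := by simp
  add_right m n₁ n₂ := map_add _ _ _
  balanced := balanced
  span := span
  lift P _ β hβl hβr hβb := by
    let β' : M →+ N →+ P :=
      AddMonoidHom.mk' (fun m => AddMonoidHom.mk' (β m) (hβr m)) fun m₁ m₂ => by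
        ext n; exact hβl m₁ m₂ n
    obtain ⟨φ, hφ⟩ := lift P β' hβb
    refine ⟨φ, hφ, fun φ' hφ' => AddMonoidHom.eq_of_eqOn_dense span ?_⟩
    rintro _ ⟨m, n, rfl⟩
    exact (hφ' m n).trans (hφ m n).symm

/-- `q` identifies `Q` with `S ⧸ K`; this is how each of the groups `H₀` is given. -/
structure IsQuotientOn {X Q σ : Type*} [AddCommGroup X] [AddCommGroup Q] [SetLike σ X]
    (S : σ) (K : Set X) (q : X → Q) : Prop where
  map_add : ∀ a ∈ S, ∀ b ∈ S, q (a + b) = q a + q b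
  exists_eq : ∀ s : Q, ∃ a ∈ S, q a = s
  eq_zero_iff : ∀ a ∈ S, q a = 0 ↔ a ∈ K

namespace IsQuotientOn

variable {X Q σ : Type*} [AddCommGroup X] [AddCommGroup Q] [SetLike σ X] [AddSubgroupClass σ X]
  {S : σ} {K : Set X} {q : X → Q}

def toAddMonoidHom (h : IsQuotientOn S K q) : S →+ Q :=
  AddMonoidHom.mk' (fun a => q a) fun a b => h.map_add a a.2 b b.2

theorem toAddMonoidHom_apply (h : IsQuotientOn S K q) (a : S) : h.toAddMonoidHom a = q a := rfl

theorem toAddMonoidHom_surjective (h : IsQuotientOn S K q) :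
    Function.Surjective h.toAddMonoidHom := fun s => by
  obtain ⟨a, ha, rfl⟩ := h.exists_eq s
  exact ⟨⟨a, ha⟩, rfl⟩

theorem map_zero (h : IsQuotientOn S K q) : q 0 = 0 :=
  h.toAddMonoidHom.map_zero

theorem map_sum (h : IsQuotientOn S K q) {ι : Type*} (s : Finset ι) {a : ι → X}
    (ha : ∀ i, a i ∈ S) : q (∑ i ∈ s, a i) = ∑ i ∈ s, q (a i) := by
  have := _root_.map_sum h.toAddMonoidHom (fun i => (⟨a i, ha i⟩ : S)) s
  simpa only [toAddMonoidHom_apply, AddSubmonoidClass.coe_finsetSum] using this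

end IsQuotientOn

/-- `C̃ₖ`, as coefficient families on `B`. -/
def supportedInDegree {B : Type*} (deg : B → ℤ) (M : Type*) [AddCommGroup M] (k : ℤ) :
    AddSubgroup (B → M) where
  carrier := {g | ∀ x, deg x ≠ k → g x = 0}
  add_mem' hg hg' x hx := by simp [hg x hx, hg' x hx]
  zero_mem' _ _ := rfl
  neg_mem' hg x hx := by simp [hg x hx]

section Grading

variable {A M B : Type*} [CommRing A] [AddCommGroup M] [Module A M]

/-- Degree `k` part of `M ⊗_A C_•`, as coefficient families on the basis `B`. -/
def gradedChains (𝒢 : ℤ → Submodule A M) (deg : B → ℤ) (k : ℤ) : Submodule A (B → M) where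
  carrier := {c | ∀ x, c x ∈ 𝒢 (k - deg x)}
  add_mem' hc hc' x := add_mem (hc x) (hc' x)
  zero_mem' _ := zero_mem _
  smul_mem' a _ hc x := Submodule.smul_mem _ a (hc x)

variable {𝒢 : ℤ → Submodule A M}

theorem eq_zero_of_mem_of_neg (h𝒢 : ∀ i : ℤ, i < 0 → 𝒢 i = ⊥) {i : ℤ} (hi : i < 0) {x : M}
    (hx : x ∈ 𝒢 i) : x = 0 := by
  rwa [h𝒢 i hi, Submodule.mem_bot] at hx

theorem mem_zero_of_mem_of_nonpos (h𝒢 : ∀ i : ℤ, i < 0 → 𝒢 i = ⊥) {i : ℤ} (hi : i ≤ 0) {x : M}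
    (hx : x ∈ 𝒢 i) : x ∈ 𝒢 0 := by
  rcases hi.lt_or_eq with hi | rfl
  · rw [eq_zero_of_mem_of_neg h𝒢 hi hx]; exact zero_mem _
  · exact hx

theorem mem_zero_of_mem_gradedChains (h𝒢 : ∀ i : ℤ, i < 0 → 𝒢 i = ⊥) {deg : B → ℤ}
    (hdeg : ∀ x, 0 ≤ deg x) {c : B → M} (hc : c ∈ gradedChains 𝒢 deg 0) (x : B) : c x ∈ 𝒢 0 :=
  mem_zero_of_mem_of_nonpos h𝒢 (by linarith [hdeg x]) (hc x)

theorem eq_zero_of_mem_gradedChains (h𝒢 : ∀ i : ℤ, i < 0 → 𝒢 i = ⊥) {deg : B → ℤ}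
    {k : ℤ} {c : B → M} (hc : c ∈ gradedChains 𝒢 deg k) {x : B} (hx : k < deg x) : c x = 0 :=
  eq_zero_of_mem_of_neg h𝒢 (by linarith) (hc x)

end Grading

section TwistedComplex

variable {A R F B : Type*} [CommRing A] [Ring R] [Algebra A R] [AddCommGroup F] [Module A F]

/-- The differential `∂` of `C_*(C_•, R)` on degree `1` chains, where all its signs are `+1`. -/
def twistedD₁ [Fintype B] (d : R →ₗ[A] R) (m : B → B → R) (u : B → R) : B → R :=
  fun y => d (u y) + ∑ x, u x * m x y

variable {ℛ : ℤ → Submodule A R} {ℱ : ℤ → Submodule A F} {d : R →ₗ[A] R} {dF : F →ₗ[A] F}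
  {act : F →ₗ[A] R →ₗ[A] F} {deg : B → ℤ} {m : B → B → R}

theorem act_mem_gradedChains
    (hact_mem : ∀ (i j : ℤ), ∀ f ∈ ℱ i, ∀ a ∈ ℛ j, act f a ∈ ℱ (i + j))
    {i k : ℤ} {f : F} (hf : f ∈ ℱ i) {a : B → R} (ha : a ∈ gradedChains ℛ deg k) :
    (fun y => act f (a y)) ∈ gradedChains ℱ deg (i + k) := fun y => by
  simpa only [add_sub_assoc] using hact_mem _ _ f hf _ (ha y)

variable [Fintype B] [DecidableEq B] {D : (B → F) →ₗ[A] (B → F)}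

theorem D_eq_of_mem_gradedChains (hFneg : ∀ i : ℤ, i < 0 → ℱ i = ⊥)
    (hdeg : ∀ x : B, 0 ≤ deg x) (hm_zero : ∀ x y : B, ¬ deg y < deg x → m x y = 0)
    (hD : ∀ i : ℤ, ∀ f ∈ ℱ i, ∀ x : B,
      D (Pi.single x f) = Pi.single x (dF f) +
        (Int.negOnePow i : ℤ) • (fun y : B => act f (m x y)))
    {k : ℤ} (hk : k ≤ 1) {c : B → F} (hc : c ∈ gradedChains ℱ deg k) :
    D c = fun y => dF (c y) + ∑ x, act (c x) (m x y) := by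
  have hsingle : ∀ x, D (Pi.single x (c x)) =
      Pi.single x (dF (c x)) + fun y => act (c x) (m x y) := by
    intro x
    rw [hD _ (c x) (hc x)]
    congr 1
    -- a term `act (c x) (m x y)` can only be nonzero if `deg x = k`, where the sign is `+1`
    rcases lt_trichotomy (deg x) k with h | h | h
    · have hm : ∀ y, m x y = 0 := fun y => hm_zero x y (by linarith [hdeg x, hdeg y])
      simp [hm, ← Pi.zero_def]
    · simp [h]
    · simp [eq_zero_of_mem_gradedChains hFneg hc h, ← Pi.zero_def]
  calc D c = ∑ x, D (Pi.single x (c x)) := by rw [← map_sum, Finset.univ_sum_single]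
    _ = _ := by
      simp only [hsingle, Finset.sum_add_distrib, Finset.univ_sum_single]
      ext y
      simp [Finset.sum_apply]

theorem D_eq_zero_of_mem_gradedChains (hFneg : ∀ i : ℤ, i < 0 → ℱ i = ⊥)
    (hdF_mem : ∀ i : ℤ, ∀ f ∈ ℱ i, dF f ∈ ℱ (i - 1)) (hdeg : ∀ x : B, 0 ≤ deg x)
    (hm_zero : ∀ x y : B, ¬ deg y < deg x → m x y = 0)
    (hD : ∀ i : ℤ, ∀ f ∈ ℱ i, ∀ x : B,
      D (Pi.single x f) = Pi.single x (dF f) +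
        (Int.negOnePow i : ℤ) • (fun y : B => act f (m x y)))
    {c : B → F} (hc : c ∈ gradedChains ℱ deg 0) : D c = 0 := by
  rw [D_eq_of_mem_gradedChains hFneg hdeg hm_zero hD zero_le_one hc]
  ext y
  have hdc : dF (c y) = 0 :=
    eq_zero_of_mem_of_neg hFneg (by linarith [hdeg y]) (hdF_mem _ _ (hc y))
  have hterm : ∀ x, act (c x) (m x y) = 0 := by
    intro x
    rcases (hdeg x).eq_or_lt with hx | hx
    · rw [hm_zero x y (by linarith [hdeg y]), map_zero]
    · rw [eq_zero_of_mem_gradedChains hFneg hc hx, map_zero, LinearMap.zero_apply]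
  simp [hdc, hterm]

theorem D_act_eq_act_dF (hRneg : ∀ i : ℤ, i < 0 → ℛ i = ⊥)
    (hd_mem : ∀ i : ℤ, ∀ a ∈ ℛ i, d a ∈ ℛ (i - 1)) (hFneg : ∀ i : ℤ, i < 0 → ℱ i = ⊥)
    (hact_mem : ∀ (i j : ℤ), ∀ f ∈ ℱ i, ∀ a ∈ ℛ j, act f a ∈ ℱ (i + j))
    (hact_leibniz : ∀ i : ℤ, ∀ f ∈ ℱ i, ∀ a : R,
      dF (act f a) = act (dF f) a + (Int.negOnePow i : ℤ) • act f (d a))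
    (hdeg : ∀ x : B, 0 ≤ deg x) (hm_zero : ∀ x y : B, ¬ deg y < deg x → m x y = 0)
    (hD : ∀ i : ℤ, ∀ f ∈ ℱ i, ∀ x : B,
      D (Pi.single x f) = Pi.single x (dF f) +
        (Int.negOnePow i : ℤ) • (fun y : B => act f (m x y)))
    {u : F} (hu : u ∈ ℱ 1) {a : B → R} (ha : a ∈ gradedChains ℛ deg 0) :
    D (fun y => act u (a y)) = fun y => act (dF u) (a y) := by
  rw [D_eq_of_mem_gradedChains hFneg hdeg hm_zero hD le_rfl
    (by simpa using act_mem_gradedChains hact_mem hu ha)]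
  ext y
  have hda : d (a y) = 0 :=
    eq_zero_of_mem_of_neg hRneg (by linarith [hdeg y]) (hd_mem _ _ (ha y))
  have hterm : ∀ x, act (act u (a x)) (m x y) = 0 := by
    intro x
    rcases (hdeg x).eq_or_lt with hx | hx
    · rw [hm_zero x y (by linarith [hdeg y]), map_zero]
    · rw [eq_zero_of_mem_gradedChains hRneg ha hx, map_zero, map_zero, LinearMap.zero_apply]
  simp [hact_leibniz 1 u hu, hda, hterm]

theorem D_act_eq_act_twistedD₁ (hFneg : ∀ i : ℤ, i < 0 → ℱ i = ⊥)
    (hdF_mem : ∀ i : ℤ, ∀ f ∈ ℱ i, dF f ∈ ℱ (i - 1))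
    (hact_mul : ∀ (f : F) (a b : R), act (act f a) b = act f (a * b))
    (hact_mem : ∀ (i j : ℤ), ∀ f ∈ ℱ i, ∀ a ∈ ℛ j, act f a ∈ ℱ (i + j))
    (hact_leibniz : ∀ i : ℤ, ∀ f ∈ ℱ i, ∀ a : R,
      dF (act f a) = act (dF f) a + (Int.negOnePow i : ℤ) • act f (d a))
    (hdeg : ∀ x : B, 0 ≤ deg x) (hm_zero : ∀ x y : B, ¬ deg y < deg x → m x y = 0)
    (hD : ∀ i : ℤ, ∀ f ∈ ℱ i, ∀ x : B,
      D (Pi.single x f) = Pi.single x (dF f) +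
        (Int.negOnePow i : ℤ) • (fun y : B => act f (m x y)))
    {f : F} (hf : f ∈ ℱ 0) {u : B → R} (hu : u ∈ gradedChains ℛ deg 1) :
    D (fun y => act f (u y)) = fun y => act f (twistedD₁ d m u y) := by
  rw [D_eq_of_mem_gradedChains hFneg hdeg hm_zero hD le_rfl
    (by simpa using act_mem_gradedChains hact_mem hf hu)]
  have hdf : dF f = 0 := eq_zero_of_mem_of_neg hFneg (by norm_num) (hdF_mem 0 f hf)
  ext y
  simp [twistedD₁, hact_leibniz 0 f hf, hdf, hact_mul]

end TwistedComplex

section LiftedComplex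

variable {A R B H : Type*} [CommRing A] [Ring R] [Algebra A R] [Ring H]

/-- The differential `δ` of the lifted complex `C̃` on coefficient families:
`δ (∑ₓ g x • x) = ∑ₓ ∑ᵧ g x m̂ₓᵧ • y`. -/
def liftedD [Fintype B] (cls : R →+ H) (deg : B → ℤ) (m : B → B → R) (g : B → H) : B → H :=
  fun y => ∑ x, g x * if deg x = deg y + 1 then cls (m x y) else 0

variable {ℛ : ℤ → Submodule A R} {d : R →ₗ[A] R} {deg : B → ℤ} {m : B → B → R} {cls : R →+ H}
  {HC : Type*} [AddCommGroup HC] {clsC : (B → H) → HC}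

theorem cls_comp_mem_supportedInDegree (hRneg : ∀ i : ℤ, i < 0 → ℛ i = ⊥)
    (hdeg : ∀ x : B, 0 ≤ deg x) {a : B → R} (ha : a ∈ gradedChains ℛ deg 0) :
    (fun y => cls (a y)) ∈ supportedInDegree deg H 0 := fun y hy => by
  show cls (a y) = 0
  rw [eq_zero_of_mem_gradedChains hRneg ha (lt_of_le_of_ne (hdeg y) (Ne.symm hy)), map_zero]

theorem exists_mem_gradedChains_clsC_eq {KR : Set R} {KC : Set (B → H)}
    (hR : IsQuotientOn (ℛ 0) KR cls) (hC : IsQuotientOn (supportedInDegree deg H 0) KC clsC)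
    (t : HC) : ∃ a ∈ gradedChains ℛ deg 0, clsC (fun y => cls (a y)) = t := by
  obtain ⟨g, hg, rfl⟩ := hC.exists_eq t
  choose r hr0 hr using hR.exists_eq
  refine ⟨fun y => if deg y = 0 then r (g y) else 0, fun y => ?_,
    congrArg clsC (funext fun y => ?_)⟩
  all_goals by_cases hy : deg y = 0
  · simpa [hy] using hr0 (g y)
  · simp [hy]
  · simp [hy, hr]
  · simp [hy, hg y hy]

variable [Fintype B]

theorem exists_twistedD₁_eq_of_cls_eq_zero (hRneg : ∀ i : ℤ, i < 0 → ℛ i = ⊥)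
    (hdeg : ∀ x : B, 0 ≤ deg x) (hm_zero : ∀ x y : B, ¬ deg y < deg x → m x y = 0)
    (hR : IsQuotientOn (ℛ 0) {a | ∃ u ∈ ℛ 1, a = d u} cls)
    {b : B → R} (hb : b ∈ gradedChains ℛ deg 0) (hcls : ∀ y, cls (b y) = 0) :
    ∃ w ∈ gradedChains ℛ deg 1, b = twistedD₁ d m w := by
  choose w hw1 hbw using fun y =>
    (hR.eq_zero_iff _ (mem_zero_of_mem_gradedChains hRneg hdeg hb y)).1 (hcls y)
  refine ⟨fun y => if deg y = 0 then w y else 0, fun y => ?_, funext fun y => ?_⟩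
  · by_cases hy : deg y = 0
    · simpa [hy] using hw1 y
    · simp [hy]
  · have hwm : ∀ x, (if deg x = 0 then w x else 0) * m x y = 0 := fun x => by
      by_cases hx : deg x = 0
      · rw [hm_zero x y (by linarith [hdeg y]), mul_zero]
      · simp [hx]
    by_cases hy : deg y = 0
    · simp [twistedD₁, hy, hbw, hwm]
    · simp [twistedD₁, hy, hwm,
        eq_zero_of_mem_gradedChains hRneg hb (lt_of_le_of_ne (hdeg y) (Ne.symm hy))]

theorem exists_cls_twistedD₁_eq_liftedD [SetLike.GradedMonoid ℛ]
    (hRneg : ∀ i : ℤ, i < 0 → ℛ i = ⊥) (hd_mem : ∀ i : ℤ, ∀ a ∈ ℛ i, d a ∈ ℛ (i - 1))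
    (hm_mem : ∀ x y : B, m x y ∈ ℛ (deg x - deg y - 1))
    (hcls_mul : ∀ a ∈ ℛ 0, ∀ b ∈ ℛ 0, cls (a * b) = cls a * cls b)
    {KR : Set R} (hR : IsQuotientOn (ℛ 0) KR cls)
    {g : B → H} (hg : g ∈ supportedInDegree deg H 1) :
    ∃ v ∈ gradedChains ℛ deg 1, twistedD₁ d m v ∈ gradedChains ℛ deg 0 ∧
      ∀ y, deg y = 0 → cls (twistedD₁ d m v y) = liftedD cls deg m g y := by
  choose r hr0 hr using hR.exists_eq
  set v : B → R := fun x => if deg x = 1 then r (g x) else 0 with hv_def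
  have hv0 : ∀ x, v x ∈ ℛ 0 := fun x => by
    by_cases hx : deg x = 1
    · simpa [hv_def, hx] using hr0 (g x)
    · simp [hv_def, hx]
  have hv : v ∈ gradedChains ℛ deg 1 := fun x => by
    by_cases hx : deg x = 1
    · simpa [hx] using hv0 x
    · simp [hv_def, hx]
  have hdv : ∀ y, d (v y) = 0 := fun y =>
    eq_zero_of_mem_of_neg hRneg (by norm_num) (hd_mem _ _ (hv0 y))
  refine ⟨v, hv, fun y => ?_, fun y hy => ?_⟩
  · rw [twistedD₁, hdv, zero_add]
    refine Submodule.sum_mem _ fun x _ => ?_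
    convert SetLike.mul_mem_graded (hv x) (hm_mem x y) using 2
    ring
  · rw [twistedD₁, hdv, zero_add, map_sum, liftedD]
    refine Finset.sum_congr rfl fun x _ => ?_
    by_cases hx : deg x = 1
    · have hmxy : m x y ∈ ℛ 0 := by simpa [hx, hy] using hm_mem x y
      simp only [hv_def, if_pos hx, if_pos (show deg x = deg y + 1 by omega)]
      rw [hcls_mul _ (hr0 _) _ hmxy, hr]
    · simp [hv_def, hx, hg x hx]

theorem exists_twistedD₁_eq_of_clsC_eq_zero [SetLike.GradedMonoid ℛ]
    (hRneg : ∀ i : ℤ, i < 0 → ℛ i = ⊥) (hd_mem : ∀ i : ℤ, ∀ a ∈ ℛ i, d a ∈ ℛ (i - 1))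
    (hdeg : ∀ x : B, 0 ≤ deg x) (hm_mem : ∀ x y : B, m x y ∈ ℛ (deg x - deg y - 1))
    (hm_zero : ∀ x y : B, ¬ deg y < deg x → m x y = 0)
    (hcls_mul : ∀ a ∈ ℛ 0, ∀ b ∈ ℛ 0, cls (a * b) = cls a * cls b)
    (hR : IsQuotientOn (ℛ 0) {a | ∃ u ∈ ℛ 1, a = d u} cls)
    (hC : IsQuotientOn (supportedInDegree deg H 0)
      {f | ∃ g ∈ supportedInDegree deg H 1, f = liftedD cls deg m g} clsC)
    {a : B → R} (ha : a ∈ gradedChains ℛ deg 0) (h0 : clsC (fun y => cls (a y)) = 0) :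
    ∃ u ∈ gradedChains ℛ deg 1, a = twistedD₁ d m u := by
  obtain ⟨g, hg, hga⟩ :=
    (hC.eq_zero_iff _ (cls_comp_mem_supportedInDegree hRneg hdeg ha)).1 h0
  obtain ⟨v, hv, hv0, hcls_v⟩ :=
    exists_cls_twistedD₁_eq_liftedD hRneg hd_mem hm_mem hcls_mul hR hg
  -- `∂v` lifts the relation `g`, so `a - ∂v` has class `0` in `H₀(R)` and is itself some `∂w`
  have hb : a - twistedD₁ d m v ∈ gradedChains ℛ deg 0 := sub_mem ha hv0
  obtain ⟨w, hw, hbw⟩ := exists_twistedD₁_eq_of_cls_eq_zero hRneg hdeg hm_zero hR hb fun y => by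
    rcases (hdeg y).eq_or_lt with hy | hy
    · rw [Pi.sub_apply, map_sub, hcls_v y hy.symm, ← congrFun hga y, sub_self]
    · rw [eq_zero_of_mem_gradedChains hRneg hb hy, map_zero]
  refine ⟨v + w, add_mem hv hw, ?_⟩
  rw [← sub_add_cancel a (twistedD₁ d m v), hbw]
  ext y
  simp only [twistedD₁, Pi.add_apply, map_add, add_mul, Finset.sum_add_distrib]
  abel

variable [DecidableEq B]

theorem clsC_eq_sum_smul [Module H HC] {K : Set (B → H)}
    (hC : IsQuotientOn (supportedInDegree deg H 0) K clsC)
    (hclsC_smul : ∀ (a : H) (f : B → H), (∀ x : B, deg x ≠ 0 → f x = 0) →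
      clsC (fun x => a * f x) = a • clsC f)
    {g : B → H} (hg : g ∈ supportedInDegree deg H 0) :
    clsC g = ∑ y, g y • clsC (Pi.single y 1) := by
  have hsingle : ∀ y, Pi.single y (g y) ∈ supportedInDegree deg H 0 := fun y x hx => by
    by_cases h : x = y
    · subst h; simp [hg x hx]
    · simp [h]
  conv_lhs => rw [← Finset.univ_sum_single g]
  rw [hC.map_sum _ hsingle]
  refine Finset.sum_congr rfl fun y _ => ?_
  by_cases hy : deg y = 0
  · have h1 : Pi.single y (1 : H) ∈ supportedInDegree deg H 0 := fun x hx => by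
      rw [Pi.single_apply, if_neg (by rintro rfl; exact hx hy)]
    rw [← hclsC_smul _ _ h1]
    congr 1
    ext x
    by_cases h : x = y
    · subst h; simp
    · simp [h]
  · rw [hg y hy, Pi.single_zero, hC.map_zero, zero_smul]

/-- `[δ x] = 0` in `H₀(C̃)`. -/
theorem clsC_cls_m_eq_zero (hdeg : ∀ x : B, 0 ≤ deg x)
    (hm_zero : ∀ x y : B, ¬ deg y < deg x → m x y = 0)
    (hC : IsQuotientOn (supportedInDegree deg H 0)
      {f | ∃ g ∈ supportedInDegree deg H 1, f = liftedD cls deg m g} clsC)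
    {x : B} (hx : deg x = 1) : clsC (fun y => cls (m x y)) = 0 := by
  have hm : ∀ y, deg y ≠ 0 → m x y = 0 := fun y hy =>
    hm_zero x y (by have := hdeg y; omega)
  refine (hC.eq_zero_iff _ fun y hy => by rw [hm y hy, map_zero]).2
    ⟨Pi.single x 1, fun z hz => by rw [Pi.single_apply, if_neg (by rintro rfl; exact hz hx)], ?_⟩
  ext y
  simp only [liftedD, Pi.single_apply, ite_mul, one_mul, zero_mul, Finset.sum_ite_eq',
    Finset.mem_univ, if_true]
  by_cases hy : deg y = 0
  · rw [if_pos (by omega)]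
  · rw [if_neg (by omega), hm y hy, map_zero]

end LiftedComplex

section Homology

variable {A R F B H : Type*} [CommRing A] [Ring R] [Algebra A R] [AddCommGroup F] [Module A F]
  [Ring H] {HF HC T : Type*} [AddCommGroup HF] [AddCommGroup HC] [AddCommGroup T]

/-- `α ⊗ y ↦ β [α] [y]` on chains of the twisted complex. -/
def chainPairing [Fintype B] [DecidableEq B] {P : Type*} [AddCommGroup P] (β : HF →+ HC →+ P)
    (clsF : F → HF) (clsC : (B → H) → HC) (c : B → F) : P :=
  ∑ y, β (clsF (c y)) (clsC (Pi.single y 1))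

variable {ℛ : ℤ → Submodule A R} {ℱ : ℤ → Submodule A F} {d : R →ₗ[A] R} {dF : F →ₗ[A] F}
  {act : F →ₗ[A] R →ₗ[A] F} {deg : B → ℤ} {m : B → B → R} {cls : R →+ H}
  {clsF : F → HF} {clsC : (B → H) → HC} {clsT : (B → F) → T} {τ : HF →+ HC →+ T}

theorem tau_balanced [Module Hᵐᵒᵖ HF] [Module H HC] [SetLike.GradedMonoid ℛ]
    (hRneg : ∀ i : ℤ, i < 0 → ℛ i = ⊥)
    (hact_mul : ∀ (f : F) (a b : R), act (act f a) b = act f (a * b))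
    (hact_mem : ∀ (i j : ℤ), ∀ f ∈ ℱ i, ∀ a ∈ ℛ j, act f a ∈ ℱ (i + j))
    (hdeg : ∀ x : B, 0 ≤ deg x)
    (hcls_mul : ∀ a ∈ ℛ 0, ∀ b ∈ ℛ 0, cls (a * b) = cls a * cls b)
    {KR : Set R} (hR : IsQuotientOn (ℛ 0) KR cls)
    {KF : Set F} (hF : IsQuotientOn (ℱ 0) KF clsF)
    (hclsF_act : ∀ f ∈ ℱ 0, ∀ a ∈ ℛ 0, clsF (act f a) = MulOpposite.op (cls a) • clsF f)
    {KC : Set (B → H)} (hC : IsQuotientOn (supportedInDegree deg H 0) KC clsC)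
    (hclsC_smul : ∀ (a : H) (f : B → H), (∀ x : B, deg x ≠ 0 → f x = 0) →
      clsC (fun x => a * f x) = a • clsC f)
    (hτ : ∀ f ∈ ℱ 0, ∀ a ∈ gradedChains ℛ deg 0,
      τ (clsF f) (clsC fun y => cls (a y)) = clsT fun y => act f (a y))
    (s : HF) (h : H) (t : HC) : τ (MulOpposite.op h • s) t = τ s (h • t) := by
  obtain ⟨f, hf, rfl⟩ := hF.exists_eq s
  obtain ⟨r, hr, rfl⟩ := hR.exists_eq h
  obtain ⟨a, ha, rfl⟩ := exists_mem_gradedChains_clsC_eq hR hC t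
  have hra : (fun y => r * a y) ∈ gradedChains ℛ deg 0 := fun y => by
    simpa using SetLike.mul_mem_graded hr (ha y)
  have hcls_ra : (fun y => cls (r * a y)) = fun y => cls r * cls (a y) := funext fun y =>
    hcls_mul _ hr _ (mem_zero_of_mem_gradedChains hRneg hdeg ha y)
  have hfr : act f r ∈ ℱ 0 := by simpa using hact_mem _ _ _ hf _ hr
  rw [← hclsF_act f hf r hr, ← hclsC_smul _ _ (cls_comp_mem_supportedInDegree hRneg hdeg ha),
    ← hcls_ra, hτ _ hfr _ ha, hτ _ hf _ hra]
  simp only [hact_mul]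

variable [DecidableEq B]

theorem tau_apply_single [SetLike.GradedOne ℛ] (hact_one : ∀ f : F, act f 1 = f)
    (hcls_one : cls 1 = 1)
    (hτ : ∀ f ∈ ℱ 0, ∀ a ∈ gradedChains ℛ deg 0,
      τ (clsF f) (clsC fun y => cls (a y)) = clsT fun y => act f (a y))
    {f : F} (hf : f ∈ ℱ 0) {x : B} (hx : deg x = 0) :
    τ (clsF f) (clsC (Pi.single x 1)) = clsT (Pi.single x f) := by
  have h1 : Pi.single x (1 : R) ∈ gradedChains ℛ deg 0 := fun y => by
    by_cases h : y = x
    · subst h; simpa [hx] using SetLike.one_mem_graded ℛ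
    · simp [h]
  have hcls1 : (fun y => cls ((Pi.single x 1 : B → R) y)) = Pi.single x 1 := by
    ext y
    by_cases h : y = x
    · subst h; simp [hcls_one]
    · simp [h]
  have hact1 : (fun y => act f ((Pi.single x 1 : B → R) y)) = Pi.single x f := by
    ext y
    by_cases h : y = x
    · subst h; simp [hact_one]
    · simp [h]
  rw [← hcls1, hτ f hf _ h1, hact1]

variable [Fintype B]

theorem closure_range_tau_eq_top [SetLike.GradedOne ℛ] (hFneg : ∀ i : ℤ, i < 0 → ℱ i = ⊥)
    (hact_one : ∀ f : F, act f 1 = f) (hcls_one : cls 1 = 1) (hdeg : ∀ x : B, 0 ≤ deg x)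
    {KT : Set (B → F)} (hT : IsQuotientOn (gradedChains ℱ deg 0) KT clsT)
    (hτ : ∀ f ∈ ℱ 0, ∀ a ∈ gradedChains ℛ deg 0,
      τ (clsF f) (clsC fun y => cls (a y)) = clsT fun y => act f (a y)) :
    AddSubgroup.closure {z : T | ∃ s t, τ s t = z} = ⊤ := by
  refine eq_top_iff.2 fun z _ => ?_
  obtain ⟨c, hc, rfl⟩ := hT.exists_eq z
  have hsingle : ∀ x, Pi.single x (c x) ∈ gradedChains ℱ deg 0 := fun x y => by
    by_cases h : y = x
    · subst h; simpa using hc y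
    · simp [h]
  rw [← Finset.univ_sum_single c, hT.map_sum _ hsingle]
  refine AddSubgroup.sum_mem _ fun x _ => ?_
  rcases (hdeg x).eq_or_lt with hx | hx
  · exact AddSubgroup.subset_closure ⟨_, _, tau_apply_single hact_one hcls_one hτ
      (mem_zero_of_mem_gradedChains hFneg hdeg hc x) hx.symm⟩
  · rw [eq_zero_of_mem_gradedChains hFneg hc hx, Pi.single_zero, hT.map_zero]
    exact zero_mem _

variable {D : (B → F) →ₗ[A] (B → F)}

theorem clsT_act_eq_zero_of_clsF_eq_zero (hRneg : ∀ i : ℤ, i < 0 → ℛ i = ⊥)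
    (hd_mem : ∀ i : ℤ, ∀ a ∈ ℛ i, d a ∈ ℛ (i - 1)) (hFneg : ∀ i : ℤ, i < 0 → ℱ i = ⊥)
    (hact_mem : ∀ (i j : ℤ), ∀ f ∈ ℱ i, ∀ a ∈ ℛ j, act f a ∈ ℱ (i + j))
    (hact_leibniz : ∀ i : ℤ, ∀ f ∈ ℱ i, ∀ a : R,
      dF (act f a) = act (dF f) a + (Int.negOnePow i : ℤ) • act f (d a))
    (hdeg : ∀ x : B, 0 ≤ deg x) (hm_zero : ∀ x y : B, ¬ deg y < deg x → m x y = 0)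
    (hD : ∀ i : ℤ, ∀ f ∈ ℱ i, ∀ x : B,
      D (Pi.single x f) = Pi.single x (dF f) +
        (Int.negOnePow i : ℤ) • (fun y : B => act f (m x y)))
    (hF : IsQuotientOn (ℱ 0) {f | ∃ u ∈ ℱ 1, f = dF u} clsF)
    (hT : IsQuotientOn (gradedChains ℱ deg 0) {c | ∃ e ∈ gradedChains ℱ deg 1, c = D e} clsT)
    {f : F} (hf : f ∈ ℱ 0) (hf0 : clsF f = 0) {a : B → R} (ha : a ∈ gradedChains ℛ deg 0) :
    clsT (fun y => act f (a y)) = 0 := by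
  obtain ⟨u, hu, rfl⟩ := (hF.eq_zero_iff f hf).1 hf0
  refine (hT.eq_zero_iff _ (by simpa using act_mem_gradedChains hact_mem hf ha)).2
    ⟨_, by simpa using act_mem_gradedChains hact_mem hu ha, ?_⟩
  exact (D_act_eq_act_dF hRneg hd_mem hFneg hact_mem hact_leibniz hdeg hm_zero hD hu ha).symm

theorem clsT_act_eq_zero_of_clsC_eq_zero [SetLike.GradedMonoid ℛ]
    (hRneg : ∀ i : ℤ, i < 0 → ℛ i = ⊥) (hd_mem : ∀ i : ℤ, ∀ a ∈ ℛ i, d a ∈ ℛ (i - 1))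
    (hFneg : ∀ i : ℤ, i < 0 → ℱ i = ⊥) (hdF_mem : ∀ i : ℤ, ∀ f ∈ ℱ i, dF f ∈ ℱ (i - 1))
    (hact_mul : ∀ (f : F) (a b : R), act (act f a) b = act f (a * b))
    (hact_mem : ∀ (i j : ℤ), ∀ f ∈ ℱ i, ∀ a ∈ ℛ j, act f a ∈ ℱ (i + j))
    (hact_leibniz : ∀ i : ℤ, ∀ f ∈ ℱ i, ∀ a : R,
      dF (act f a) = act (dF f) a + (Int.negOnePow i : ℤ) • act f (d a))
    (hdeg : ∀ x : B, 0 ≤ deg x) (hm_mem : ∀ x y : B, m x y ∈ ℛ (deg x - deg y - 1))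
    (hm_zero : ∀ x y : B, ¬ deg y < deg x → m x y = 0)
    (hD : ∀ i : ℤ, ∀ f ∈ ℱ i, ∀ x : B,
      D (Pi.single x f) = Pi.single x (dF f) +
        (Int.negOnePow i : ℤ) • (fun y : B => act f (m x y)))
    (hcls_mul : ∀ a ∈ ℛ 0, ∀ b ∈ ℛ 0, cls (a * b) = cls a * cls b)
    (hR : IsQuotientOn (ℛ 0) {a | ∃ u ∈ ℛ 1, a = d u} cls)
    (hC : IsQuotientOn (supportedInDegree deg H 0)
      {f | ∃ g ∈ supportedInDegree deg H 1, f = liftedD cls deg m g} clsC)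
    (hT : IsQuotientOn (gradedChains ℱ deg 0) {c | ∃ e ∈ gradedChains ℱ deg 1, c = D e} clsT)
    {f : F} (hf : f ∈ ℱ 0) {a : B → R} (ha : a ∈ gradedChains ℛ deg 0)
    (ha0 : clsC (fun y => cls (a y)) = 0) : clsT (fun y => act f (a y)) = 0 := by
  obtain ⟨u, hu, rfl⟩ := exists_twistedD₁_eq_of_clsC_eq_zero hRneg hd_mem hdeg hm_mem hm_zero
    hcls_mul hR hC ha ha0
  refine (hT.eq_zero_iff _ (by simpa using act_mem_gradedChains hact_mem hf ha)).2
    ⟨_, by simpa using act_mem_gradedChains hact_mem hf hu, ?_⟩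
  exact (D_act_eq_act_twistedD₁ hFneg hdF_mem hact_mul hact_mem hact_leibniz hdeg hm_zero hD
    hf hu).symm

theorem exists_tau [SetLike.GradedMonoid ℛ]
    (hRneg : ∀ i : ℤ, i < 0 → ℛ i = ⊥) (hd_mem : ∀ i : ℤ, ∀ a ∈ ℛ i, d a ∈ ℛ (i - 1))
    (hFneg : ∀ i : ℤ, i < 0 → ℱ i = ⊥) (hdF_mem : ∀ i : ℤ, ∀ f ∈ ℱ i, dF f ∈ ℱ (i - 1))
    (hact_mul : ∀ (f : F) (a b : R), act (act f a) b = act f (a * b))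
    (hact_mem : ∀ (i j : ℤ), ∀ f ∈ ℱ i, ∀ a ∈ ℛ j, act f a ∈ ℱ (i + j))
    (hact_leibniz : ∀ i : ℤ, ∀ f ∈ ℱ i, ∀ a : R,
      dF (act f a) = act (dF f) a + (Int.negOnePow i : ℤ) • act f (d a))
    (hdeg : ∀ x : B, 0 ≤ deg x) (hm_mem : ∀ x y : B, m x y ∈ ℛ (deg x - deg y - 1))
    (hm_zero : ∀ x y : B, ¬ deg y < deg x → m x y = 0)
    (hD : ∀ i : ℤ, ∀ f ∈ ℱ i, ∀ x : B,
      D (Pi.single x f) = Pi.single x (dF f) +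
        (Int.negOnePow i : ℤ) • (fun y : B => act f (m x y)))
    (hcls_mul : ∀ a ∈ ℛ 0, ∀ b ∈ ℛ 0, cls (a * b) = cls a * cls b)
    (hR : IsQuotientOn (ℛ 0) {a | ∃ u ∈ ℛ 1, a = d u} cls)
    (hF : IsQuotientOn (ℱ 0) {f | ∃ u ∈ ℱ 1, f = dF u} clsF)
    (hC : IsQuotientOn (supportedInDegree deg H 0)
      {f | ∃ g ∈ supportedInDegree deg H 1, f = liftedD cls deg m g} clsC)
    (hT : IsQuotientOn (gradedChains ℱ deg 0) {c | ∃ e ∈ gradedChains ℱ deg 1, c = D e} clsT) :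
    ∃ τ : HF →+ HC →+ T, ∀ f ∈ ℱ 0, ∀ a ∈ gradedChains ℛ deg 0,
      τ (clsF f) (clsC fun y => cls (a y)) = clsT fun y => act f (a y) := by
  have hact : ∀ {i k : ℤ} {f : F}, f ∈ ℱ i → ∀ {a : B → R}, a ∈ gradedChains ℛ deg k →
      (fun y => act f (a y)) ∈ gradedChains ℱ deg (i + k) :=
    act_mem_gradedChains hact_mem
  let q : gradedChains ℛ deg 0 →+ HC :=
    AddMonoidHom.mk' (fun a => clsC fun y => cls ((a : B → R) y)) fun a b => by
      rw [← hC.map_add _ (cls_comp_mem_supportedInDegree hRneg hdeg a.2) _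
        (cls_comp_mem_supportedInDegree hRneg hdeg b.2)]
      congr 1; ext y; simp
  let μ : ℱ 0 →+ gradedChains ℛ deg 0 →+ T :=
    AddMonoidHom.mk' (fun f => AddMonoidHom.mk' (fun a => clsT fun y => act f ((a : B → R) y))
      fun a b => by
        rw [← hT.map_add _ (hact f.2 a.2) _ (hact f.2 b.2)]
        congr 1; ext y; simp)
      fun f g => by
        ext a
        show clsT _ = clsT _ + clsT _
        rw [← hT.map_add _ (hact f.2 a.2) _ (hact g.2 a.2)]
        congr 1; ext y; simp
  have hq : Function.Surjective q := fun t => by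
    obtain ⟨a, ha, rfl⟩ := exists_mem_gradedChains_clsC_eq hR hC t
    exact ⟨⟨a, ha⟩, rfl⟩
  have hpμ : ∀ f, hF.toAddMonoidHom f = 0 → μ f = 0 := fun ⟨f, hf⟩ hf0 => by
    ext ⟨a, ha⟩
    exact clsT_act_eq_zero_of_clsF_eq_zero hRneg hd_mem hFneg hact_mem hact_leibniz hdeg hm_zero
      hD hF hT hf hf0 ha
  have hqμ : ∀ a, q a = 0 → ∀ f, μ f a = 0 := fun ⟨a, ha⟩ ha0 ⟨f, hf⟩ =>
    clsT_act_eq_zero_of_clsC_eq_zero hRneg hd_mem hFneg hdF_mem hact_mul hact_mem hact_leibniz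
      hdeg hm_mem hm_zero hD hcls_mul hR hC hT hf ha ha0
  obtain ⟨τ, hτ⟩ := hF.toAddMonoidHom.exists_comp₂_eq_of_surjective
    hF.toAddMonoidHom_surjective q hq μ hpμ hqμ
  exact ⟨τ, fun f hf a ha => hτ ⟨f, hf⟩ ⟨a, ha⟩⟩

variable {P : Type*} [AddCommGroup P] [Module Hᵐᵒᵖ HF] [Module H HC] {β : HF →+ HC →+ P}

theorem clsF_act_eq_smul (hRneg : ∀ i : ℤ, i < 0 → ℛ i = ⊥) (hFneg : ∀ i : ℤ, i < 0 → ℱ i = ⊥)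
    (hclsF_zero : clsF 0 = 0)
    (hclsF_act : ∀ f ∈ ℱ 0, ∀ a ∈ ℛ 0, clsF (act f a) = MulOpposite.op (cls a) • clsF f)
    {i j : ℤ} (hij : i + j ≤ 0) {f : F} (hf : f ∈ ℱ i) {r : R} (hr : r ∈ ℛ j) :
    clsF (act f r) = MulOpposite.op (cls r) • clsF f := by
  rcases lt_or_ge i 0 with hi | hi
  · simp [eq_zero_of_mem_of_neg hFneg hi hf, hclsF_zero]
  rcases lt_or_ge j 0 with hj | hj
  · simp [eq_zero_of_mem_of_neg hRneg hj hr, hclsF_zero]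
  obtain rfl : i = 0 := by omega
  obtain rfl : j = 0 := by omega
  exact hclsF_act f hf r hr

theorem sum_op_smul_clsC_single_eq {K : Set (B → H)}
    (hC : IsQuotientOn (supportedInDegree deg H 0) K clsC)
    (hclsC_smul : ∀ (a : H) (f : B → H), (∀ x : B, deg x ≠ 0 → f x = 0) →
      clsC (fun x => a * f x) = a • clsC f)
    (hβ : ∀ (s : HF) (h : H) (t : HC), β (MulOpposite.op h • s) t = β s (h • t))
    (s : HF) {g : B → H} (hg : g ∈ supportedInDegree deg H 0) :
    ∑ y, β (MulOpposite.op (g y) • s) (clsC (Pi.single y 1)) = β s (clsC g) := by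
  simp only [hβ, ← map_sum, clsC_eq_sum_smul hC hclsC_smul hg]

theorem chainPairing_act (hRneg : ∀ i : ℤ, i < 0 → ℛ i = ⊥) (hFneg : ∀ i : ℤ, i < 0 → ℱ i = ⊥)
    (hdeg : ∀ x : B, 0 ≤ deg x) (hclsF_zero : clsF 0 = 0)
    (hclsF_act : ∀ f ∈ ℱ 0, ∀ a ∈ ℛ 0, clsF (act f a) = MulOpposite.op (cls a) • clsF f)
    {K : Set (B → H)} (hC : IsQuotientOn (supportedInDegree deg H 0) K clsC)
    (hclsC_smul : ∀ (a : H) (f : B → H), (∀ x : B, deg x ≠ 0 → f x = 0) →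
      clsC (fun x => a * f x) = a • clsC f)
    (hβ : ∀ (s : HF) (h : H) (t : HC), β (MulOpposite.op h • s) t = β s (h • t))
    {f : F} (hf : f ∈ ℱ 0) {a : B → R} (ha : a ∈ gradedChains ℛ deg 0) :
    chainPairing β clsF clsC (fun y => act f (a y)) = β (clsF f) (clsC fun y => cls (a y)) := by
  rw [chainPairing, ← sum_op_smul_clsC_single_eq hC hclsC_smul hβ _
    (cls_comp_mem_supportedInDegree hRneg hdeg ha)]
  refine Finset.sum_congr rfl fun y _ => ?_
  rw [clsF_act_eq_smul hRneg hFneg hclsF_zero hclsF_act (by linarith [hdeg y]) hf (ha y)]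

theorem chainPairing_D_eq_zero (hRneg : ∀ i : ℤ, i < 0 → ℛ i = ⊥)
    (hFneg : ∀ i : ℤ, i < 0 → ℱ i = ⊥) (hdF_mem : ∀ i : ℤ, ∀ f ∈ ℱ i, dF f ∈ ℱ (i - 1))
    (hact_mem : ∀ (i j : ℤ), ∀ f ∈ ℱ i, ∀ a ∈ ℛ j, act f a ∈ ℱ (i + j))
    (hdeg : ∀ x : B, 0 ≤ deg x) (hm_mem : ∀ x y : B, m x y ∈ ℛ (deg x - deg y - 1))
    (hm_zero : ∀ x y : B, ¬ deg y < deg x → m x y = 0)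
    (hD : ∀ i : ℤ, ∀ f ∈ ℱ i, ∀ x : B,
      D (Pi.single x f) = Pi.single x (dF f) +
        (Int.negOnePow i : ℤ) • (fun y : B => act f (m x y)))
    (hF : IsQuotientOn (ℱ 0) {f | ∃ u ∈ ℱ 1, f = dF u} clsF)
    (hclsF_act : ∀ f ∈ ℱ 0, ∀ a ∈ ℛ 0, clsF (act f a) = MulOpposite.op (cls a) • clsF f)
    (hC : IsQuotientOn (supportedInDegree deg H 0)
      {f | ∃ g ∈ supportedInDegree deg H 1, f = liftedD cls deg m g} clsC)
    (hclsC_smul : ∀ (a : H) (f : B → H), (∀ x : B, deg x ≠ 0 → f x = 0) →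
      clsC (fun x => a * f x) = a • clsC f)
    (hβ : ∀ (s : HF) (h : H) (t : HC), β (MulOpposite.op h • s) t = β s (h • t))
    {e : B → F} (he : e ∈ gradedChains ℱ deg 1) : chainPairing β clsF clsC (D e) = 0 := by
  have hmem0 : ∀ {z : F} (y : B), z ∈ ℱ (0 - deg y) → z ∈ ℱ 0 := fun y =>
    mem_zero_of_mem_of_nonpos hFneg (by linarith [hdeg y])
  have hterm : ∀ x y, act (e x) (m x y) ∈ ℱ (0 - deg y) := fun x y => by
    convert hact_mem _ _ _ (he x) _ (hm_mem x y) using 2; ring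
  have hdFe : ∀ y, dF (e y) ∈ ℱ (0 - deg y) := fun y => by
    convert hdF_mem _ _ (he y) using 2; ring
  have hclsF_dF : ∀ y, clsF (dF (e y)) = 0 := fun y => by
    rcases (hdeg y).eq_or_lt with hy | hy
    · exact (hF.eq_zero_iff _ (hmem0 y (hdFe y))).2 ⟨e y, by simpa [← hy] using he y, rfl⟩
    · rw [eq_zero_of_mem_of_neg hFneg (by linarith) (hdFe y), hF.map_zero]
  have hclsF_De : ∀ y, clsF (D e y) = ∑ x, MulOpposite.op (cls (m x y)) • clsF (e x) := by
    intro y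
    rw [D_eq_of_mem_gradedChains hFneg hdeg hm_zero hD le_rfl he,
      hF.map_add _ (hmem0 y (hdFe y)) _ (Submodule.sum_mem _ fun x _ => hmem0 y (hterm x y)),
      hclsF_dF, zero_add, hF.map_sum _ fun x => hmem0 y (hterm x y)]
    exact Finset.sum_congr rfl fun x _ => clsF_act_eq_smul hRneg hFneg hF.map_zero hclsF_act
      (by linarith [hdeg y]) (he x) (hm_mem x y)
  -- the pairing of `D e` is `∑ₓ β [e x] [δ x]`, and `[δ x] = 0`
  simp only [chainPairing, hclsF_De, map_sum, AddMonoidHom.finsetSum_apply]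
  rw [Finset.sum_comm]
  refine Finset.sum_eq_zero fun x _ => ?_
  rcases lt_trichotomy (deg x) 1 with hx | hx | hx
  · have hm : ∀ y, m x y = 0 := fun y => hm_zero x y (by linarith [hdeg y])
    simp [hm]
  · have hmx : (fun y => m x y) ∈ gradedChains ℛ deg 0 := fun y => by
      simpa [hx] using hm_mem x y
    rw [sum_op_smul_clsC_single_eq hC hclsC_smul hβ _
      (cls_comp_mem_supportedInDegree hRneg hdeg hmx), clsC_cls_m_eq_zero hdeg hm_zero hC hx,
      map_zero]
  · simp [eq_zero_of_mem_gradedChains hFneg he hx, hF.map_zero]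

theorem exists_addMonoidHom_comp_tau_eq (hRneg : ∀ i : ℤ, i < 0 → ℛ i = ⊥)
    (hFneg : ∀ i : ℤ, i < 0 → ℱ i = ⊥) (hdF_mem : ∀ i : ℤ, ∀ f ∈ ℱ i, dF f ∈ ℱ (i - 1))
    (hact_mem : ∀ (i j : ℤ), ∀ f ∈ ℱ i, ∀ a ∈ ℛ j, act f a ∈ ℱ (i + j))
    (hdeg : ∀ x : B, 0 ≤ deg x) (hm_mem : ∀ x y : B, m x y ∈ ℛ (deg x - deg y - 1))
    (hm_zero : ∀ x y : B, ¬ deg y < deg x → m x y = 0)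
    (hD : ∀ i : ℤ, ∀ f ∈ ℱ i, ∀ x : B,
      D (Pi.single x f) = Pi.single x (dF f) +
        (Int.negOnePow i : ℤ) • (fun y : B => act f (m x y)))
    {KR : Set R} (hR : IsQuotientOn (ℛ 0) KR cls)
    (hF : IsQuotientOn (ℱ 0) {f | ∃ u ∈ ℱ 1, f = dF u} clsF)
    (hclsF_act : ∀ f ∈ ℱ 0, ∀ a ∈ ℛ 0, clsF (act f a) = MulOpposite.op (cls a) • clsF f)
    (hC : IsQuotientOn (supportedInDegree deg H 0)
      {f | ∃ g ∈ supportedInDegree deg H 1, f = liftedD cls deg m g} clsC)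
    (hclsC_smul : ∀ (a : H) (f : B → H), (∀ x : B, deg x ≠ 0 → f x = 0) →
      clsC (fun x => a * f x) = a • clsC f)
    (hT : IsQuotientOn (gradedChains ℱ deg 0) {c | ∃ e ∈ gradedChains ℱ deg 1, c = D e} clsT)
    (hτ : ∀ f ∈ ℱ 0, ∀ a ∈ gradedChains ℛ deg 0,
      τ (clsF f) (clsC fun y => cls (a y)) = clsT fun y => act f (a y))
    (hβ : ∀ (s : HF) (h : H) (t : HC), β (MulOpposite.op h • s) t = β s (h • t)) :
    ∃ φ : T →+ P, ∀ s t, φ (τ s t) = β s t := by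
  let Φ : gradedChains ℱ deg 0 →+ P :=
    AddMonoidHom.mk' (fun c => chainPairing β clsF clsC c) fun c c' => by
      simp only [chainPairing, ← Finset.sum_add_distrib, ← AddMonoidHom.add_apply, ← map_add]
      refine Finset.sum_congr rfl fun y _ => ?_
      rw [Submodule.coe_add, Pi.add_apply,
        hF.map_add _ (mem_zero_of_mem_gradedChains hFneg hdeg c.2 y) _
          (mem_zero_of_mem_gradedChains hFneg hdeg c'.2 y)]
  obtain ⟨φ, hφ⟩ := hT.toAddMonoidHom.exists_comp_eq_of_surjective
    hT.toAddMonoidHom_surjective Φ fun c hc => by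
      obtain ⟨e, he, hce⟩ := (hT.eq_zero_iff _ c.2).1 hc
      show chainPairing β clsF clsC c = 0
      rw [hce]
      exact chainPairing_D_eq_zero hRneg hFneg hdF_mem hact_mem hdeg hm_mem hm_zero hD
        hF hclsF_act hC hclsC_smul hβ he
  refine ⟨φ, fun s t => ?_⟩
  obtain ⟨f, hf, rfl⟩ := hF.exists_eq s
  obtain ⟨a, ha, rfl⟩ := exists_mem_gradedChains_clsC_eq hR hC t
  have hfa : (fun y => act f (a y)) ∈ gradedChains ℱ deg 0 := by
    simpa using act_mem_gradedChains hact_mem hf ha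
  rw [hτ f hf a ha]
  exact (hφ ⟨_, hfa⟩).trans (chainPairing_act hRneg hFneg hdeg hF.map_zero hclsF_act hC
    hclsC_smul hβ hf ha)

end Homology

theorem statement11_general
    {A : Type*} [CommRing A] {R : Type*} [Ring R] [Algebra A R]
    (ℛ : ℤ → Submodule A R) [GradedRing ℛ]
    (hRneg : ∀ i : ℤ, i < 0 → ℛ i = ⊥)
    (d : R →ₗ[A] R)
    (hd_mem : ∀ i : ℤ, ∀ a ∈ ℛ i, d a ∈ ℛ (i - 1))
    {F : Type*} [AddCommGroup F] [Module A F]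
    (ℱ : ℤ → Submodule A F)
    (hFneg : ∀ i : ℤ, i < 0 → ℱ i = ⊥)
    (dF : F →ₗ[A] F)
    (hdF_mem : ∀ i : ℤ, ∀ f ∈ ℱ i, dF f ∈ ℱ (i - 1))
    (act : F →ₗ[A] R →ₗ[A] F)
    (hact_one : ∀ f : F, act f 1 = f)
    (hact_mul : ∀ (f : F) (a b : R), act (act f a) b = act f (a * b))
    (hact_mem : ∀ (i j : ℤ), ∀ f ∈ ℱ i, ∀ a ∈ ℛ j, act f a ∈ ℱ (i + j))
    (hact_leibniz : ∀ i : ℤ, ∀ f ∈ ℱ i, ∀ a : R,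
      dF (act f a) = act (dF f) a + (Int.negOnePow i : ℤ) • act f (d a))
    {B : Type*} [Fintype B] [DecidableEq B]
    (deg : B → ℤ) (hdeg : ∀ x : B, 0 ≤ deg x)
    (m : B → B → R)
    (hm_mem : ∀ x y : B, m x y ∈ ℛ (deg x - deg y - 1))
    (hm_zero : ∀ x y : B, ¬ deg y < deg x → m x y = 0)
    (D : (B → F) →ₗ[A] (B → F))
    (hD : ∀ i : ℤ, ∀ f ∈ ℱ i, ∀ x : B,
      D (Pi.single x f) = Pi.single x (dF f) +
        (Int.negOnePow i : ℤ) • (fun y : B => act f (m x y)))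
    {H : Type*} [Ring H] (cls : R →+ H)
    (hcls_one : cls 1 = 1)
    (hcls_mul : ∀ a ∈ ℛ 0, ∀ b ∈ ℛ 0, cls (a * b) = cls a * cls b)
    (hcls_surj : ∀ s : H, ∃ a ∈ ℛ 0, cls a = s)
    (hcls_ker : ∀ a ∈ ℛ 0, (cls a = 0 ↔ ∃ u ∈ ℛ 1, a = d u))
    {HF : Type*} [AddCommGroup HF] [Module Hᵐᵒᵖ HF]
    (clsF : F → HF)
    (hclsF_add : ∀ f g : F, f ∈ ℱ 0 → g ∈ ℱ 0 → clsF (f + g) = clsF f + clsF g)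
    (hclsF_surj : ∀ s : HF, ∃ f ∈ ℱ 0, clsF f = s)
    (hclsF_ker : ∀ f ∈ ℱ 0, (clsF f = 0 ↔ ∃ u ∈ ℱ 1, f = dF u))
    (hclsF_act : ∀ f ∈ ℱ 0, ∀ a ∈ ℛ 0,
      clsF (act f a) = MulOpposite.op (cls a) • clsF f)
    {HC : Type*} [AddCommGroup HC] [Module H HC]
    (clsC : (B → H) → HC)
    (hclsC_add : ∀ f g : B → H, (∀ x : B, deg x ≠ 0 → f x = 0) →
      (∀ x : B, deg x ≠ 0 → g x = 0) → clsC (f + g) = clsC f + clsC g)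
    (hclsC_smul : ∀ (a : H) (f : B → H), (∀ x : B, deg x ≠ 0 → f x = 0) →
      clsC (fun x => a * f x) = a • clsC f)
    (hclsC_surj : ∀ s : HC, ∃ f : B → H, (∀ x : B, deg x ≠ 0 → f x = 0) ∧ clsC f = s)
    (hclsC_ker : ∀ f : B → H, (∀ x : B, deg x ≠ 0 → f x = 0) →
      (clsC f = 0 ↔ ∃ g : B → H, (∀ x : B, deg x ≠ 1 → g x = 0) ∧
        f = fun y => ∑ x : B, g x * (if deg x = deg y + 1 then cls (m x y) else 0)))
    {T : Type*} [AddCommGroup T]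
    (clsT : (B → F) → T)
    (hclsT_add : ∀ c c' : B → F,
      ((∀ x : B, c x ∈ ℱ (0 - deg x)) ∧ D c = 0) →
      ((∀ x : B, c' x ∈ ℱ (0 - deg x)) ∧ D c' = 0) →
      clsT (c + c') = clsT c + clsT c')
    (hclsT_surj : ∀ s : T, ∃ c : B → F,
      ((∀ x : B, c x ∈ ℱ (0 - deg x)) ∧ D c = 0) ∧ clsT c = s)
    (hclsT_ker : ∀ c : B → F, ((∀ x : B, c x ∈ ℱ (0 - deg x)) ∧ D c = 0) →
      (clsT c = 0 ↔ ∃ e : B → F, (∀ x : B, e x ∈ ℱ (1 - deg x)) ∧ c = D e)) :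
    ∃ τ : HF → HC → T,
      (∀ f ∈ ℱ 0, ∀ x : B, deg x = 0 →
        τ (clsF f) (clsC (Pi.single x (1 : H))) = clsT (Pi.single x f)) ∧
      IsBalancedTensorProduct H HF HC T τ := by
  have hcyc : ∀ c ∈ gradedChains ℱ deg 0, (∀ x, c x ∈ ℱ (0 - deg x)) ∧ D c = 0 := fun c hc =>
    ⟨hc, D_eq_zero_of_mem_gradedChains hFneg hdF_mem hdeg hm_zero hD hc⟩
  have hR : IsQuotientOn (ℛ 0) {a | ∃ u ∈ ℛ 1, a = d u} cls :=
    ⟨fun a _ b _ => map_add cls a b, hcls_surj, hcls_ker⟩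
  have hF : IsQuotientOn (ℱ 0) {f | ∃ u ∈ ℱ 1, f = dF u} clsF :=
    ⟨fun f hf g hg => hclsF_add f g hf hg, hclsF_surj, hclsF_ker⟩
  have hC : IsQuotientOn (supportedInDegree deg H 0)
      {f | ∃ g ∈ supportedInDegree deg H 1, f = liftedD cls deg m g} clsC :=
    ⟨fun f hf g hg => hclsC_add f g hf hg, hclsC_surj, hclsC_ker⟩
  have hT : IsQuotientOn (gradedChains ℱ deg 0) {c | ∃ e ∈ gradedChains ℱ deg 1, c = D e}
      clsT := by
    refine ⟨fun c hc c' hc' => hclsT_add c c' (hcyc c hc) (hcyc c' hc'), fun s => ?_,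
      fun c hc => hclsT_ker c (hcyc c hc)⟩
    obtain ⟨c, ⟨hc, -⟩, rfl⟩ := hclsT_surj s
    exact ⟨c, hc, rfl⟩
  obtain ⟨τ, hτ⟩ := exists_tau hRneg hd_mem hFneg hdF_mem hact_mul hact_mem hact_leibniz hdeg
    hm_mem hm_zero hD hcls_mul hR hF hC hT
  refine ⟨fun s t => τ s t, fun f hf x hx => tau_apply_single hact_one hcls_one hτ hf hx,
    IsBalancedTensorProduct.of_exists_lift τ
      (tau_balanced hRneg hact_mul hact_mem hdeg hcls_mul hR hF hclsF_act hC hclsC_smul hτ)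
      (closure_range_tau_eq_top hFneg hact_one hcls_one hdeg hT hτ)
      fun P _ β hβ => exists_addMonoidHom_comp_tau_eq hRneg hFneg hdF_mem hact_mem hdeg hm_mem
        hm_zero hD hR hF hclsF_act hC hclsC_smul hT hτ hβ⟩

/-- For a nonnegatively graded DGA `R` with `H = H₀(R)` (realized by `cls`),
a nonnegatively graded DG right `R`-module `F` with `H₀(F)` realized by `clsF` (a right
`H`-module), a twisting cocycle `m` with lifted complex over `H` whose `H₀` is realized by
`clsC`, and the degree-zero homology `T` of the twisted complex realized by `clsT`, the
assignment `α ⊗ x ↦ [α] ⊗ [x]` induces an isomorphism of abelian groups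
`H₀(C_*(C, F)) ≅ H₀(F) ⊗_{H₀(R)} H₀(C̃)`; equivalently, there is a map
`τ : H₀(F) → H₀(C̃) → T` with `τ [α] [x] = [α ⊗ x]` exhibiting `T` as the balanced tensor
product. -/
theorem statement11
    {A : Type*} [CommRing A] {R : Type*} [Ring R] [Algebra A R]
    (ℛ : ℤ → Submodule A R) [GradedRing ℛ]
    (hRneg : ∀ i : ℤ, i < 0 → ℛ i = ⊥)
    (d : R →ₗ[A] R)
    (hd_mem : ∀ i : ℤ, ∀ a ∈ ℛ i, d a ∈ ℛ (i - 1))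
    (hd_sq : ∀ a : R, d (d a) = 0)
    (hd_leibniz : ∀ i : ℤ, ∀ a ∈ ℛ i, ∀ b : R,
      d (a * b) = d a * b + (Int.negOnePow i : ℤ) • (a * d b))
    {F : Type*} [AddCommGroup F] [Module A F]
    (ℱ : ℤ → Submodule A F) [DirectSum.Decomposition ℱ]
    (hFneg : ∀ i : ℤ, i < 0 → ℱ i = ⊥)
    (dF : F →ₗ[A] F)
    (hdF_mem : ∀ i : ℤ, ∀ f ∈ ℱ i, dF f ∈ ℱ (i - 1))
    (hdF_sq : ∀ f : F, dF (dF f) = 0)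
    (act : F →ₗ[A] R →ₗ[A] F)
    (hact_one : ∀ f : F, act f 1 = f)
    (hact_mul : ∀ (f : F) (a b : R), act (act f a) b = act f (a * b))
    (hact_mem : ∀ (i j : ℤ), ∀ f ∈ ℱ i, ∀ a ∈ ℛ j, act f a ∈ ℱ (i + j))
    (hact_leibniz : ∀ i : ℤ, ∀ f ∈ ℱ i, ∀ a : R,
      dF (act f a) = act (dF f) a + (Int.negOnePow i : ℤ) • act f (d a))
    {B : Type*} [Fintype B] [DecidableEq B]
    (deg : B → ℤ) (hdeg : ∀ x : B, 0 ≤ deg x)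
    (m : B → B → R)
    (hm_mem : ∀ x y : B, m x y ∈ ℛ (deg x - deg y - 1))
    (hm_zero : ∀ x y : B, ¬ deg y < deg x → m x y = 0)
    (hm_mc : ∀ x y : B, d (m x y) =
      ∑ z : B, (Int.negOnePow (deg x - deg z) : ℤ) • (m x z * m z y))
    (D : (B → F) →ₗ[A] (B → F))
    (hD : ∀ i : ℤ, ∀ f ∈ ℱ i, ∀ x : B,
      D (Pi.single x f) = Pi.single x (dF f) +
        (Int.negOnePow i : ℤ) • (fun y : B => act f (m x y)))
    {H : Type*} [Ring H] (cls : R →+ H)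
    (hcls_gr : ∀ i : ℤ, i ≠ 0 → ∀ a ∈ ℛ i, cls a = 0)
    (hcls_one : cls 1 = 1)
    (hcls_mul : ∀ a ∈ ℛ 0, ∀ b ∈ ℛ 0, cls (a * b) = cls a * cls b)
    (hcls_surj : ∀ s : H, ∃ a ∈ ℛ 0, cls a = s)
    (hcls_ker : ∀ a ∈ ℛ 0, (cls a = 0 ↔ ∃ u ∈ ℛ 1, a = d u))
    {HF : Type*} [AddCommGroup HF] [Module Hᵐᵒᵖ HF]
    (clsF : F → HF)
    (hclsF_add : ∀ f g : F, f ∈ ℱ 0 → g ∈ ℱ 0 → clsF (f + g) = clsF f + clsF g)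
    (hclsF_surj : ∀ s : HF, ∃ f ∈ ℱ 0, clsF f = s)
    (hclsF_ker : ∀ f ∈ ℱ 0, (clsF f = 0 ↔ ∃ u ∈ ℱ 1, f = dF u))
    (hclsF_act : ∀ f ∈ ℱ 0, ∀ a ∈ ℛ 0,
      clsF (act f a) = MulOpposite.op (cls a) • clsF f)
    {HC : Type*} [AddCommGroup HC] [Module H HC]
    (clsC : (B → H) → HC)
    (hclsC_add : ∀ f g : B → H, (∀ x : B, deg x ≠ 0 → f x = 0) →
      (∀ x : B, deg x ≠ 0 → g x = 0) → clsC (f + g) = clsC f + clsC g)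
    (hclsC_smul : ∀ (a : H) (f : B → H), (∀ x : B, deg x ≠ 0 → f x = 0) →
      clsC (fun x => a * f x) = a • clsC f)
    (hclsC_surj : ∀ s : HC, ∃ f : B → H, (∀ x : B, deg x ≠ 0 → f x = 0) ∧ clsC f = s)
    (hclsC_ker : ∀ f : B → H, (∀ x : B, deg x ≠ 0 → f x = 0) →
      (clsC f = 0 ↔ ∃ g : B → H, (∀ x : B, deg x ≠ 1 → g x = 0) ∧
        f = fun y => ∑ x : B, g x * (if deg x = deg y + 1 then cls (m x y) else 0)))
    {T : Type*} [AddCommGroup T]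
    (clsT : (B → F) → T)
    (hclsT_add : ∀ c c' : B → F,
      ((∀ x : B, c x ∈ ℱ (0 - deg x)) ∧ D c = 0) →
      ((∀ x : B, c' x ∈ ℱ (0 - deg x)) ∧ D c' = 0) →
      clsT (c + c') = clsT c + clsT c')
    (hclsT_surj : ∀ s : T, ∃ c : B → F,
      ((∀ x : B, c x ∈ ℱ (0 - deg x)) ∧ D c = 0) ∧ clsT c = s)
    (hclsT_ker : ∀ c : B → F, ((∀ x : B, c x ∈ ℱ (0 - deg x)) ∧ D c = 0) →
      (clsT c = 0 ↔ ∃ e : B → F, (∀ x : B, e x ∈ ℱ (1 - deg x)) ∧ c = D e)) :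
    ∃ τ : HF → HC → T,
      (∀ f ∈ ℱ 0, ∀ x : B, deg x = 0 →
        τ (clsF f) (clsC (Pi.single x (1 : H))) = clsT (Pi.single x f)) ∧
      IsBalancedTensorProduct H HF HC T τ :=
  statement11_general ℛ hRneg d hd_mem ℱ hFneg dF hdF_mem act hact_one hact_mul hact_mem
    hact_leibniz deg hdeg m hm_mem hm_zero D hD cls hcls_one hcls_mul hcls_surj hcls_ker clsF
    hclsF_add hclsF_surj hclsF_ker hclsF_act clsC hclsC_add hclsC_smul hclsC_surj hclsC_ker clsT
    hclsT_add hclsT_surj hclsT_ker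
end

section
/- Let R be a DGA over A with R_i = 0 for i < 0, F a DG right R-module with F_i = 0 for i < 0, C_• a free graded A-module with finite basis B (degrees ≥ 0), and (m_{x,y}) a twisting cocycle for (R, C_•). Assume H_k(F) = 0 for all k ≠ 0, where H_k(F) denotes the homology of (F, ∂). Set H_0(F) := F_0/∂(F_1), a right H_0(R)-module, and let C̃_• be the lifted complex over H_0(R) := R_0/∂(R_1). Then the chain map α ⊗ x ↦ [α] ⊗ x from the twisted complex C_*(C_•, F) to the complex H_0(F) ⊗_{H_0(R)} C̃_• (with differential Id ⊗ δ) is a quasi-isomorphism; in particular H_n(C_*(C_•, F)) ≅ H_n(H_0(F) ⊗_{H_0(R)} C̃_•) for every n. -/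
/-- For a nonnegatively graded DGA `R` with `H₀(R)` realized as the ring `H`
(via `cls`), a nonnegatively graded DG right `R`-module `F` with `H₀(F)` realized as `HF`
(via `clsF`), if `H_k(F) = 0` for all `k ≠ 0`, then the chain map `α ⊗ x ↦ [α] ⊗ x` from
the twisted complex `(B → F, D)` to the complex `H₀(F) ⊗_{H₀(R)} C̃` (modelled as `B → HF`
with differential `Id ⊗ δ`) is a quasi-isomorphism. -/
theorem statement12
    {A : Type*} [CommRing A] {R : Type*} [Ring R] [Algebra A R]
    (ℛ : ℤ → Submodule A R) [GradedRing ℛ]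
    (hRneg : ∀ i : ℤ, i < 0 → ℛ i = ⊥)
    (d : R →ₗ[A] R)
    (hd_mem : ∀ i : ℤ, ∀ a ∈ ℛ i, d a ∈ ℛ (i - 1))
    (hd_sq : ∀ a : R, d (d a) = 0)
    (hd_leibniz : ∀ i : ℤ, ∀ a ∈ ℛ i, ∀ b : R,
      d (a * b) = d a * b + (Int.negOnePow i : ℤ) • (a * d b))
    {F : Type*} [AddCommGroup F] [Module A F]
    (ℱ : ℤ → Submodule A F) [DirectSum.Decomposition ℱ]
    (hFneg : ∀ i : ℤ, i < 0 → ℱ i = ⊥)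
    (dF : F →ₗ[A] F)
    (hdF_mem : ∀ i : ℤ, ∀ f ∈ ℱ i, dF f ∈ ℱ (i - 1))
    (hdF_sq : ∀ f : F, dF (dF f) = 0)
    (act : F →ₗ[A] R →ₗ[A] F)
    (hact_one : ∀ f : F, act f 1 = f)
    (hact_mul : ∀ (f : F) (a b : R), act (act f a) b = act f (a * b))
    (hact_mem : ∀ (i j : ℤ), ∀ f ∈ ℱ i, ∀ a ∈ ℛ j, act f a ∈ ℱ (i + j))
    (hact_leibniz : ∀ i : ℤ, ∀ f ∈ ℱ i, ∀ a : R,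
      dF (act f a) = act (dF f) a + (Int.negOnePow i : ℤ) • act f (d a))
    (hacyclic : ∀ k : ℤ, k ≠ 0 → ∀ f ∈ ℱ k, dF f = 0 → ∃ g ∈ ℱ (k + 1), f = dF g)
    {B : Type*} [Fintype B] [DecidableEq B]
    (deg : B → ℤ) (hdeg : ∀ x : B, 0 ≤ deg x)
    (m : B → B → R)
    (hm_mem : ∀ x y : B, m x y ∈ ℛ (deg x - deg y - 1))
    (hm_zero : ∀ x y : B, ¬ deg y < deg x → m x y = 0)
    (hm_mc : ∀ x y : B, d (m x y) =
      ∑ z : B, (Int.negOnePow (deg x - deg z) : ℤ) • (m x z * m z y))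
    (D : (B → F) →ₗ[A] (B → F))
    (hD : ∀ i : ℤ, ∀ f ∈ ℱ i, ∀ x : B,
      D (Pi.single x f) = Pi.single x (dF f) +
        (Int.negOnePow i : ℤ) • (fun y : B => act f (m x y)))
    {H : Type*} [Ring H] (cls : R →+ H)
    (hcls_gr : ∀ i : ℤ, i ≠ 0 → ∀ a ∈ ℛ i, cls a = 0)
    (hcls_one : cls 1 = 1)
    (hcls_mul : ∀ a ∈ ℛ 0, ∀ b ∈ ℛ 0, cls (a * b) = cls a * cls b)
    (hcls_surj : ∀ s : H, ∃ a ∈ ℛ 0, cls a = s)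
    (hcls_ker : ∀ a ∈ ℛ 0, (cls a = 0 ↔ ∃ u ∈ ℛ 1, a = d u))
    {HF : Type*} [AddCommGroup HF] [Module Hᵐᵒᵖ HF]
    (clsF : F →+ HF)
    (hclsF_gr : ∀ i : ℤ, i ≠ 0 → ∀ f ∈ ℱ i, clsF f = 0)
    (hclsF_surj : ∀ s : HF, ∃ f ∈ ℱ 0, clsF f = s)
    (hclsF_ker : ∀ f ∈ ℱ 0, (clsF f = 0 ↔ ∃ u ∈ ℱ 1, f = dF u))
    (hclsF_act : ∀ f ∈ ℱ 0, ∀ a ∈ ℛ 0,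
      clsF (act f a) = MulOpposite.op (cls a) • clsF f) :
    (∀ c : B → F,
      (fun y : B => clsF (D c y)) =
        fun y : B => ∑ x : B,
          MulOpposite.op (if deg x = deg y + 1 then cls (m x y) else 0) • clsF (c x)) ∧
    GradedQuasiIso (fun n => {c : B → F | ∀ x : B, c x ∈ ℱ (n - deg x)})
      (fun n => {s : B → HF | ∀ x : B, deg x ≠ n → s x = 0})
      (⇑D)
      (fun s y => ∑ x : B,
        MulOpposite.op (if deg x = deg y + 1 then cls (m x y) else 0) • s x)
      (fun c x => clsF (c x)) := by
  classical
  -- sign helpers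
  have e_mul : ∀ a b : ℤ, ((a.negOnePow : ℤ) * (b.negOnePow : ℤ)) = ((a + b).negOnePow : ℤ) := by
    intro a b; rw [Int.negOnePow_add, Units.val_mul]
  have e_eq : ∀ a b : ℤ, Even (a - b) → (a.negOnePow : ℤ) = (b.negOnePow : ℤ) := by
    intro a b h; rw [(Int.negOnePow_eq_iff a b).mpr h]
  have e_sq : ∀ a : ℤ, (a.negOnePow : ℤ) * (a.negOnePow : ℤ) = 1 := by
    intro a; rw [e_mul, Int.negOnePow_even _ ⟨a, rfl⟩, Units.val_one]
  have e_pred : ∀ a : ℤ, ((a - 1).negOnePow : ℤ) = -((a).negOnePow : ℤ) := by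
    intro a
    rw [show -((a).negOnePow : ℤ) = (((a) + 1).negOnePow : ℤ) by
      rw [Int.negOnePow_succ, Units.val_neg]]
    exact e_eq _ _ ⟨-1, by ring⟩
  have e_sgn : ∀ nn p q : ℤ, ((nn - 1 - q).negOnePow : ℤ) * ((nn - p).negOnePow : ℤ)
      = -((p - q).negOnePow : ℤ) := by
    intro nn p q
    rw [e_mul]
    rw [show -(((p - q)).negOnePow : ℤ) = (((p - q) + 1).negOnePow : ℤ) by
      rw [Int.negOnePow_succ, Units.val_neg]]
    exact e_eq _ _ ⟨nn - 1 - p, by ring⟩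
  -- basic facts
  have mem0 : ∀ i : ℤ, i < 0 → ∀ f : F, f ∈ ℱ i → f = 0 := by
    intro i hi f hf
    rw [hFneg i hi] at hf
    simpa using hf
  have clsF_dF : ∀ i : ℤ, ∀ f ∈ ℱ i, clsF (dF f) = 0 := by
    intro i f hf
    by_cases h1 : i = 1
    · subst h1
      exact (hclsF_ker (dF f) (by simpa using hdF_mem 1 f hf)).mpr ⟨f, hf, rfl⟩
    · exact hclsF_gr (i - 1) (by omega) _ (hdF_mem i f hf)
  -- flipped action helpers
  have act_add : ∀ (u v : F) (w : R), act (u + v) w = act u w + act v w := by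
    intro u v w
    simpa using map_add (act.flip w) u v
  have act_zsmul : ∀ (a : ℤ) (u : F) (w : R), act (a • u) w = a • act u w := by
    intro a u w
    simpa using map_zsmul (act.flip w) a u
  have act_sum : ∀ (g : B → F) (w : R), act (∑ x : B, g x) w = ∑ x : B, act (g x) w := by
    intro g w
    simpa using map_sum (act.flip w) g Finset.univ
  have act_zero : ∀ w : R, act (0 : F) w = 0 := by
    intro w
    simpa using map_zero (act.flip w)
  -- key formula for D on graded elements
  have keyD : ∀ (n : ℤ) (c : B → F), (∀ x, c x ∈ ℱ (n - deg x)) → ∀ y : B,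
      D c y = dF (c y) + ∑ x : B, ((n - deg x).negOnePow : ℤ) • act (c x) (m x y) := by
    intro n c hc y
    conv_lhs => rw [← Finset.univ_sum_single c, map_sum, Finset.sum_apply]
    have h1 : ∀ x : B, D (Pi.single x (c x)) y
        = (Pi.single x (dF (c x)) : B → F) y + ((n - deg x).negOnePow : ℤ) • act (c x) (m x y) := by
      intro x
      rw [hD (n - deg x) (c x) (hc x) x]
      simp
    rw [Finset.sum_congr rfl fun x _ => h1 x, Finset.sum_add_distrib]
    congr 1
    have h2 := congrFun (Finset.univ_sum_single (fun x => dF (c x))) y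
    simpa using h2
  have memD : ∀ (n : ℤ) (c : B → F), (∀ x, c x ∈ ℱ (n - deg x)) → ∀ y : B,
      D c y ∈ ℱ (n - 1 - deg y) := by
    intro n c hc y
    rw [keyD n c hc y]
    apply add_mem
    · have h := hdF_mem (n - deg y) (c y) (hc y)
      rwa [show n - deg y - 1 = n - 1 - deg y by ring] at h
    · apply Submodule.sum_mem
      intro x _
      have h := hact_mem (n - deg x) (deg x - deg y - 1) (c x) (hc x) (m x y) (hm_mem x y)
      rw [show n - deg x + (deg x - deg y - 1) = n - 1 - deg y by ring] at h
      exact zsmul_mem h _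
  -- "D squared" formula
  have dsq : ∀ (n : ℤ) (c : B → F), (∀ x, c x ∈ ℱ (n - deg x)) → ∀ y : B,
      dF (D c y) = - ∑ z : B, ((n - 1 - deg z).negOnePow : ℤ) • act (D c z) (m z y) := by
    intro n c hc y
    have term : ∀ x : B, dF (((n - deg x).negOnePow : ℤ) • act (c x) (m x y))
        = ((n - deg x).negOnePow : ℤ) • act (dF (c x)) (m x y)
          + ∑ z : B, ((deg x - deg z).negOnePow : ℤ) • act (act (c x) (m x z)) (m z y) := by
      intro x
      rw [map_zsmul, hact_leibniz (n - deg x) (c x) (hc x) (m x y), smul_add,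
        smul_smul, e_sq, one_smul, hm_mc x y, map_sum]
      congr 1
      refine Finset.sum_congr rfl fun z _ => ?_
      rw [map_zsmul, ← hact_mul]
    have lhs : dF (D c y) = (∑ x : B, ((n - deg x).negOnePow : ℤ) • act (dF (c x)) (m x y))
        + ∑ x : B, ∑ z : B, ((deg x - deg z).negOnePow : ℤ) • act (act (c x) (m x z)) (m z y) := by
      rw [keyD n c hc y, map_add, hdF_sq, zero_add, map_sum,
        Finset.sum_congr rfl fun x _ => term x, Finset.sum_add_distrib]
    have rterm : ∀ z : B, act (D c z) (m z y)
        = act (dF (c z)) (m z y)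
          + ∑ x : B, ((n - deg x).negOnePow : ℤ) • act (act (c x) (m x z)) (m z y) := by
      intro z
      rw [keyD n c hc z, act_add, act_sum]
      congr 1
      exact Finset.sum_congr rfl fun x _ => act_zsmul _ _ _
    have rhs : ∀ z : B, -(((n - 1 - deg z).negOnePow : ℤ) • act (D c z) (m z y))
        = ((n - deg z).negOnePow : ℤ) • act (dF (c z)) (m z y)
          + ∑ x : B, ((deg x - deg z).negOnePow : ℤ) • act (act (c x) (m x z)) (m z y) := by
      intro z
      rw [rterm z, smul_add, neg_add]
      congr 1
      · rw [← neg_smul, show -(((n - 1 - deg z)).negOnePow : ℤ) = ((n - deg z).negOnePow : ℤ) by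
          rw [show n - 1 - deg z = (n - deg z) - 1 by ring, e_pred, neg_neg]]
      · rw [Finset.smul_sum, ← Finset.sum_neg_distrib]
        refine Finset.sum_congr rfl fun x _ => ?_
        rw [smul_smul, ← neg_smul, e_sgn n (deg x) (deg z), neg_neg]
    rw [lhs]
    conv_rhs => rw [← Finset.sum_neg_distrib]
    rw [Finset.sum_congr rfl fun z _ => rhs z, Finset.sum_add_distrib]
    congr 1
    exact Finset.sum_comm
  -- chain map commutes with differentials, on homogeneous singles
  have clsD_single : ∀ (x : B) (i : ℤ) (f : F), f ∈ ℱ i → ∀ y : B,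
      clsF (D (Pi.single x f) y)
        = ∑ x' : B, MulOpposite.op (if deg x' = deg y + 1 then cls (m x' y) else 0) •
            clsF ((Pi.single x f : B → F) x') := by
    intro x i f hf y
    rw [hD i f hf x, Pi.add_apply, Pi.smul_apply, map_add, map_zsmul]
    have h0 : clsF ((Pi.single x (dF f) : B → F) y) = 0 := by
      by_cases hxy : y = x
      · subst hxy; rw [Pi.single_eq_same]; exact clsF_dF i f hf
      · rw [Pi.single_eq_of_ne hxy]; exact map_zero clsF
    rw [h0, zero_add]
    rw [Finset.sum_eq_single x
      (fun x' _ hx' => by rw [Pi.single_eq_of_ne hx', map_zero, smul_zero])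
      (fun h => absurd (Finset.mem_univ x) h), Pi.single_eq_same]
    by_cases hi : i = 0
    · subst hi
      simp only [Int.negOnePow_zero, Units.val_one, one_smul]
      by_cases hxy : deg x = deg y + 1
      · rw [if_pos hxy]
        have hm0 : m x y ∈ ℛ 0 := by
          have h := hm_mem x y; rwa [show deg x - deg y - 1 = 0 by omega] at h
        exact hclsF_act f hf (m x y) hm0
      · rw [if_neg hxy]
        have h1 : clsF (act f (m x y)) = 0 :=
          hclsF_gr (0 + (deg x - deg y - 1)) (by omega) _
            (hact_mem 0 _ f hf (m x y) (hm_mem x y))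
        rw [h1, MulOpposite.op_zero, zero_smul]
    · have hf0 : clsF f = 0 := hclsF_gr i hi f hf
      rw [hf0, smul_zero]
      by_cases hneg : i < 0
      · rw [mem0 i hneg f hf]
        simp [act_zero]
      · by_cases hcase : i + (deg x - deg y - 1) = 0
        · have hmz : m x y = 0 := hm_zero x y (by omega)
          rw [hmz]
          simp
        · have h1 : clsF (act f (m x y)) = 0 :=
            hclsF_gr _ hcase _ (hact_mem i _ f hf _ (hm_mem x y))
          rw [h1, smul_zero]
  -- chain map commutes with differentials, in general
  have hcomm : ∀ (c : B → F) (y : B), clsF (D c y)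
      = ∑ x : B, MulOpposite.op (if deg x = deg y + 1 then cls (m x y) else 0) • clsF (c x) := by
    intro c y
    have key : ∀ (x : B) (f : F), clsF (D (Pi.single x f) y)
        = ∑ x' : B, MulOpposite.op (if deg x' = deg y + 1 then cls (m x' y) else 0) •
            clsF ((Pi.single x f : B → F) x') := by
      intro x f
      conv_lhs => rw [← DirectSum.sum_support_decompose ℱ f]
      conv_rhs => rw [← DirectSum.sum_support_decompose ℱ f]
      rw [show (Pi.single x (∑ i ∈ DFinsupp.support (DirectSum.decompose ℱ f),
            ((DirectSum.decompose ℱ f) i : F)) : B → F)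
          = ∑ i ∈ DFinsupp.support (DirectSum.decompose ℱ f),
              (Pi.single x ((DirectSum.decompose ℱ f) i : F) : B → F) from
        map_sum (LinearMap.single A (fun _ : B => F) x) _ _]
      rw [map_sum, Finset.sum_apply, map_sum]
      rw [Finset.sum_congr rfl fun i _ => clsD_single x i _ (SetLike.coe_mem _) y]
      rw [Finset.sum_comm]
      refine Finset.sum_congr rfl fun x' _ => ?_
      rw [← Finset.smul_sum, ← map_sum clsF, ← Finset.sum_apply]
    conv_lhs => rw [← Finset.univ_sum_single c, map_sum, Finset.sum_apply, map_sum]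
    rw [Finset.sum_congr rfl fun x _ => key x (c x)]
    rw [Finset.sum_comm]
    refine Finset.sum_congr rfl fun x' _ => ?_
    rw [← Finset.smul_sum, ← map_sum clsF, ← Finset.sum_apply, Finset.univ_sum_single]
  choose L hL1 hL2 using hclsF_surj
  refine ⟨fun c => funext fun y => hcomm c y, fun n => ⟨?_, ?_⟩⟩
  · -- surjectivity on homology
    intro s hs hds
    have hds' : ∀ y : B,
        ∑ x : B, MulOpposite.op (if deg x = deg y + 1 then cls (m x y) else 0) • s x = 0 := by
      intro y
      have := congrFun hds y
      simpa using this
    have main : ∀ t : ℕ, ∃ c : B → F, (∀ x, c x ∈ ℱ (n - deg x)) ∧ (∀ x, clsF (c x) = s x)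
        ∧ ∀ y : B, n - 1 - (t : ℤ) < deg y → D c y = 0 := by
      intro t
      induction t with
      | zero =>
        have hmem : ∀ x : B, (if h : deg x = n then L (s x) else 0 : F) ∈ ℱ (n - deg x) := by
          intro x
          by_cases h : deg x = n
          · rw [dif_pos h]
            have := hL1 (s x)
            rwa [show (0 : ℤ) = n - deg x by omega] at this
          · rw [dif_neg h]; exact zero_mem _
        refine ⟨fun x => if h : deg x = n then L (s x) else 0, hmem, ?_, ?_⟩
        · intro x
          beta_reduce
          by_cases h : deg x = n
          · rw [dif_pos h]; exact hL2 (s x)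
          · rw [dif_neg h, map_zero]; exact (hs x h).symm
        · intro y hy
          exact mem0 _ (by omega) _ (memD n _ hmem y)
      | succ t ih =>
        obtain ⟨c, hmem, hcls, hvan⟩ := ih
        have hex : ∀ y : B, deg y = n - 1 - (t : ℤ) → ∃ g ∈ ℱ ((t : ℤ) + 1), D c y = dF g := by
          intro y hy
          have hDmem : D c y ∈ ℱ (t : ℤ) := by
            have := memD n c hmem y
            rwa [hy, show n - 1 - (n - 1 - (t : ℤ)) = (t : ℤ) by ring] at this
          by_cases ht : (t : ℤ) = 0
          · have h1 : clsF (D c y) = 0 := by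
              rw [hcomm c y, Finset.sum_congr rfl fun x _ => by rw [hcls x]]
              exact hds' y
            obtain ⟨u, hu, hequ⟩ := (hclsF_ker (D c y) (by rwa [ht] at hDmem)).mp h1
            exact ⟨u, by rw [ht, zero_add]; exact hu, hequ⟩
          · have hcyc : dF (D c y) = 0 := by
              rw [dsq n c hmem y, Finset.sum_eq_zero, neg_zero]
              intro z _
              by_cases hzy : deg y < deg z
              · rw [hvan z (by omega), act_zero, smul_zero]
              · rw [hm_zero z y hzy, map_zero, smul_zero]
            obtain ⟨g, hg, hgeq⟩ := hacyclic (t : ℤ) ht (D c y) hDmem hcyc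
            exact ⟨g, hg, hgeq⟩
        choose G hG1 hG2 using hex
        have hgmem : ∀ x : B,
            (if h : deg x = n - 1 - (t : ℤ) then G x h else 0 : F) ∈ ℱ (n - deg x) := by
          intro x
          by_cases h : deg x = n - 1 - (t : ℤ)
          · rw [dif_pos h]
            have := hG1 x h
            rwa [show (t : ℤ) + 1 = n - deg x by omega] at this
          · rw [dif_neg h]; exact zero_mem _
        set g : B → F := fun x => if h : deg x = n - 1 - (t : ℤ) then G x h else 0 with hgdef
        have hDg : ∀ y : B, n - 1 - (t : ℤ) ≤ deg y → D g y = dF (g y) := by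
          intro y hy
          rw [keyD n g hgmem y, Finset.sum_eq_zero, add_zero]
          intro z _
          by_cases hz : deg z = n - 1 - (t : ℤ)
          · rw [hm_zero z y (by omega), map_zero, smul_zero]
          · rw [show g z = 0 from dif_neg hz, act_zero, smul_zero]
        refine ⟨c - g, fun x => sub_mem (hmem x) (hgmem x), ?_, ?_⟩
        · intro x
          rw [Pi.sub_apply, map_sub]
          have hg0 : clsF (g x) = 0 := by
            by_cases h : deg x = n - 1 - (t : ℤ)
            · exact hclsF_gr ((t : ℤ) + 1) (by omega) _
                (by rw [show g x = G x h from dif_pos h]; exact hG1 x h)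
            · rw [show g x = 0 from dif_neg h, map_zero]
          rw [hg0, sub_zero, hcls x]
        · intro y hy
          have hsub : D (c - g) y = D c y - D g y := by rw [map_sub, Pi.sub_apply]
          rw [hsub, hDg y (by push_cast at hy; omega)]
          by_cases hcase : deg y = n - 1 - (t : ℤ)
          · rw [show g y = G y hcase from dif_pos hcase, ← hG2 y hcase, sub_self]
          · have hy' : n - 1 - (t : ℤ) < deg y := by push_cast at hy; omega
            rw [hvan y hy', show g y = 0 from dif_neg hcase, map_zero, sub_zero]
    obtain ⟨c, hmemc, hclsc, hvanc⟩ := main (n.toNat + 1)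
    refine ⟨c, hmemc, ?_, 0, fun x _ => rfl, ?_⟩
    · funext y
      exact hvanc y (by have := hdeg y; omega)
    · funext y
      simp [hclsc]
  · -- injectivity on homology
    intro c hmemc hDc hw
    obtain ⟨w, hw1, hw2⟩ := hw
    have hw2' : ∀ y : B, clsF (c y)
        = ∑ x : B, MulOpposite.op (if deg x = deg y + 1 then cls (m x y) else 0) • w x :=
      fun y => congrFun hw2 y
    have hDc' : ∀ y : B, D c y = 0 := fun y => by simpa using congrFun hDc y
    have main : ∀ t : ℕ, ∃ v : B → F, (∀ x, v x ∈ ℱ (n + 1 - deg x)) ∧ (∀ x, clsF (v x) = w x)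
        ∧ ∀ y : B, n - (t : ℤ) < deg y → c y - D v y = 0 := by
      intro t
      induction t with
      | zero =>
        have hmem : ∀ x : B,
            (if h : deg x = n + 1 then L (w x) else 0 : F) ∈ ℱ (n + 1 - deg x) := by
          intro x
          by_cases h : deg x = n + 1
          · rw [dif_pos h]
            have := hL1 (w x)
            rwa [show (0 : ℤ) = n + 1 - deg x by omega] at this
          · rw [dif_neg h]; exact zero_mem _
        refine ⟨fun x => if h : deg x = n + 1 then L (w x) else 0, hmem, ?_, ?_⟩
        · intro x
          beta_reduce
          by_cases h : deg x = n + 1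
          · rw [dif_pos h]; exact hL2 (w x)
          · rw [dif_neg h, map_zero]; exact (hw1 x h).symm
        · intro y hy
          rw [mem0 (n - deg y) (by omega) _ (hmemc y),
            mem0 (n + 1 - 1 - deg y) (by omega) _ (memD (n + 1) _ hmem y), sub_zero]
      | succ t ih =>
        obtain ⟨v, hmem, hcls, hvan⟩ := ih
        have hDvmem : ∀ x : B, D v x ∈ ℱ (n - deg x) := by
          intro x
          have := memD (n + 1) v hmem x
          rwa [show n + 1 - 1 - deg x = n - deg x by ring] at this
        have hDDv : ∀ y : B, D (D v) y = 0 := by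
          intro y
          rw [keyD n (D v) hDvmem y, dsq (n + 1) v hmem y]
          simp only [show (n : ℤ) + 1 - 1 = n from by ring]
          exact neg_add_cancel _
        have hc'mem : ∀ x : B, c x - D v x ∈ ℱ (n - deg x) :=
          fun x => sub_mem (hmemc x) (hDvmem x)
        have hex : ∀ y : B, deg y = n - (t : ℤ) →
            ∃ u ∈ ℱ ((t : ℤ) + 1), c y - D v y = dF u := by
          intro y hy
          have hmemy : c y - D v y ∈ ℱ (t : ℤ) := by
            have := hc'mem y
            rwa [hy, show n - (n - (t : ℤ)) = (t : ℤ) by ring] at this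
          by_cases ht : (t : ℤ) = 0
          · have h1 : clsF (c y - D v y) = 0 := by
              rw [map_sub, hw2' y, hcomm v y,
                show (∑ x : B, MulOpposite.op
                      (if deg x = deg y + 1 then cls (m x y) else 0) • clsF (v x))
                    = ∑ x : B, MulOpposite.op
                      (if deg x = deg y + 1 then cls (m x y) else 0) • w x from
                  Finset.sum_congr rfl fun x _ => by rw [hcls x], sub_self]
            obtain ⟨u, hu, hueq⟩ := (hclsF_ker _ (by rwa [ht] at hmemy)).mp h1
            exact ⟨u, by rw [ht, zero_add]; exact hu, hueq⟩
          · have hcyc : dF (c y - D v y) = 0 := by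
              have hmemsub : ∀ x : B, (c - D v) x ∈ ℱ (n - deg x) := fun x => hc'mem x
              have h2 := keyD n (c - D v) hmemsub y
              have h3 : D (c - D v) y = 0 := by
                rw [map_sub, Pi.sub_apply, hDc' y, hDDv y, sub_zero]
              rw [h3] at h2
              have h4 : ∑ z : B, ((n - deg z).negOnePow : ℤ) • act ((c - D v) z) (m z y) = 0 := by
                apply Finset.sum_eq_zero
                intro z _
                by_cases hzy : deg y < deg z
                · have hz0 : (c - D v) z = 0 := by
                    have := hvan z (by omega)
                    simpa using this
                  rw [hz0, act_zero, smul_zero]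
                · rw [hm_zero z y hzy, map_zero, smul_zero]
              rw [h4, add_zero] at h2
              simpa using h2.symm
            obtain ⟨u, hu, hueq⟩ := hacyclic (t : ℤ) ht _ hmemy hcyc
            exact ⟨u, hu, hueq⟩
        choose U hU1 hU2 using hex
        have hgmem : ∀ x : B,
            (if h : deg x = n - (t : ℤ) then U x h else 0 : F) ∈ ℱ (n + 1 - deg x) := by
          intro x
          by_cases h : deg x = n - (t : ℤ)
          · rw [dif_pos h]
            have := hU1 x h
            rwa [show (t : ℤ) + 1 = n + 1 - deg x by omega] at this
          · rw [dif_neg h]; exact zero_mem _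
        set g : B → F := fun x => if h : deg x = n - (t : ℤ) then U x h else 0 with hgdef
        have hDg : ∀ y : B, n - (t : ℤ) ≤ deg y → D g y = dF (g y) := by
          intro y hy
          rw [keyD (n + 1) g hgmem y, Finset.sum_eq_zero, add_zero]
          intro z _
          by_cases hz : deg z = n - (t : ℤ)
          · rw [hm_zero z y (by omega), map_zero, smul_zero]
          · rw [show g z = 0 from dif_neg hz, act_zero, smul_zero]
        refine ⟨v + g, fun x => add_mem (hmem x) (hgmem x), ?_, ?_⟩
        · intro x
          rw [Pi.add_apply, map_add]
          have hg0 : clsF (g x) = 0 := by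
            by_cases h : deg x = n - (t : ℤ)
            · exact hclsF_gr ((t : ℤ) + 1) (by omega) _
                (by rw [show g x = U x h from dif_pos h]; exact hU1 x h)
            · rw [show g x = 0 from dif_neg h, map_zero]
          rw [hg0, add_zero, hcls x]
        · intro y hy
          have hsub : D (v + g) y = D v y + D g y := by rw [map_add, Pi.add_apply]
          rw [hsub, hDg y (by push_cast at hy; omega)]
          by_cases hcase : deg y = n - (t : ℤ)
          · rw [show g y = U y hcase from dif_pos hcase, ← hU2 y hcase]
            abel
          · have hy' : n - (t : ℤ) < deg y := by push_cast at hy; omega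
            rw [show g y = 0 from dif_neg hcase, map_zero, add_zero]
            exact hvan y hy'
    obtain ⟨v, hmemv, _, hvanv⟩ := main (n.toNat + 1)
    refine ⟨v, hmemv, ?_⟩
    funext y
    exact sub_eq_zero.mp (hvanv y (by have := hdeg y; omega))
end
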